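/- arXiv:math/0503436 — 11 statements merged into one kernel-verified Lean document; each statement's English description precedes it below -/
import Mathlib

section
/- For every positive integer n and every divisor d of n, the number of rectangles (π, τ) on an n-element set whose height is d equals n! / (d! · (n/d)!). -/
/-- A rectangle on the finite set `Fin n`: a pair of set partitions such that
every block of the first meets every block of the second in exactly one element. -/
def IsRectangle {n : ℕ} (π τ : Finpartition (Finset.univ : Finset (Fin n))) : Prop :=
  ∀ B ∈ π.parts, ∀ C ∈ τ.parts, (B ∩ C).card = 1

/-!
For a rectangle `(π, τ)` the map `x ↦ (π.part x, τ.part x)` is a bijection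
`U ≃ π.parts × τ.parts`, so a rectangle of height `d` on `n` points has `n / d` columns.
Conversely, a bijection `f : U ≃ Fin d × Fin e` with `d * e = n` yields the rectangle formed by
the fibres of its two coordinates, and two bijections yield the same rectangle exactly when they
differ by a permutation of `Fin d` and one of `Fin e`. Hence the `n!` bijections fall into
classes of size `d! * e!`, one class per rectangle.
-/

open Finset
open scoped Nat

namespace Finpartition

variable {α ι : Type*} [DecidableEq α]

theorem parts_eq_image_part {s : Finset α} (P : Finpartition s) : P.parts = s.image P.part := by
  ext t
  simp only [mem_image]
  constructor
  · intro ht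
    obtain ⟨a, ha, rfl⟩ := P.part_surjOn ht
    exact ⟨a, ha, rfl⟩
  · rintro ⟨a, ha, rfl⟩
    exact P.part_mem.2 ha

theorem part_injective {s : Finset α} :
    Function.Injective (part : Finpartition s → α → Finset α) := fun P Q h =>
  Finpartition.ext (by rw [parts_eq_image_part, h, ← parts_eq_image_part])

variable [Fintype α] [DecidableEq ι]

def fibers (p : α → ι) : Finpartition (univ : Finset α) := ofSetoid (Setoid.ker p)

theorem mem_part_fibers {p : α → ι} {x y : α} : y ∈ (fibers p).part x ↔ p x = p y :=
  mem_part_ofSetoid_iff_rel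

theorem part_fibers_eq_part_iff {p : α → ι} {x y : α} :
    (fibers p).part x = (fibers p).part y ↔ p x = p y := by
  rw [← (fibers p).mem_part_iff_part_eq_part (mem_univ x) (mem_univ y), mem_part_fibers, eq_comm]

theorem fibers_eq_fibers_iff {κ : Type*} [DecidableEq κ] {p : α → ι} {q : α → κ} :
    fibers p = fibers q ↔ ∀ x y, p x = p y ↔ q x = q y := by
  refine ⟨fun h x y => ?_, fun h => part_injective (funext fun x => ?_)⟩
  · rw [← part_fibers_eq_part_iff, h, part_fibers_eq_part_iff]
  · ext y
    rw [mem_part_fibers, mem_part_fibers, h]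

theorem fibers_part (P : Finpartition (univ : Finset α)) : fibers P.part = P :=
  part_injective <| funext fun x => by
    ext y
    rw [mem_part_fibers, P.mem_part_iff_part_eq_part (mem_univ y) (mem_univ x), eq_comm]

theorem card_parts_fibers [Fintype ι] {p : α → ι} (hp : Function.Surjective p) :
    #(fibers p).parts = Fintype.card ι := by
  rw [parts_eq_image_part]
  have hpart : (fibers p).part = (fun i => (fibers p).part (Function.surjInv hp i)) ∘ p :=
    funext fun x => part_fibers_eq_part_iff.2 (Function.surjInv_eq hp (p x)).symm
  rw [hpart, ← image_image, image_univ_of_surjective hp, card_image_of_injective, card_univ]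
  intro i j hij
  simpa only [Function.surjInv_eq hp] using part_fibers_eq_part_iff.1 hij

end Finpartition

theorem Function.Surjective.exists_perm_eq_comp {α ι : Type*} [Finite ι] {p q : α → ι}
    (hp : Function.Surjective p) (h : ∀ x y, p x = p y ↔ q x = q y) :
    ∃ σ : Equiv.Perm ι, q = σ ∘ p := by
  have hinj : Function.Injective (q ∘ Function.surjInv hp) := fun i j hij => by
    simpa only [Function.surjInv_eq hp] using (h _ _).2 hij
  refine ⟨Equiv.ofBijective _ hinj.bijective_of_finite, funext fun x => ?_⟩
  exact (h _ _).1 (Function.surjInv_eq hp (p x)).symm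

theorem Nat.card_eq_mul_of_card_fiber {α β : Type*} [Finite α] [Finite β] (f : α → β) {k : ℕ}
    (h : ∀ b, Nat.card {a // f a = b} = k) : Nat.card α = Nat.card β * k := by
  have := Fintype.ofFinite β
  rw [Nat.card_congr (Equiv.sigmaFiberEquiv f).symm, Nat.card_sigma,
    Finset.sum_congr rfl fun b _ => h b, sum_const, Finset.card_univ, smul_eq_mul,
    Nat.card_eq_fintype_card]

open Finpartition

namespace IsRectangle

variable {n : ℕ} {π τ : Finpartition (univ : Finset (Fin n))}

theorem bijective_part (h : IsRectangle π τ) :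
    Function.Bijective fun x : Fin n =>
      ((⟨π.part x, π.part_mem.2 (mem_univ x)⟩ : π.parts),
        (⟨τ.part x, τ.part_mem.2 (mem_univ x)⟩ : τ.parts)) := by
  constructor
  · intro x y hxy
    simp only [Prod.mk.injEq, Subtype.mk.injEq] at hxy
    have hx : x ∈ π.part x ∩ τ.part x :=
      mem_inter.2 ⟨π.mem_part (mem_univ x), τ.mem_part (mem_univ x)⟩
    have hy : y ∈ π.part x ∩ τ.part x := by
      rw [hxy.1, hxy.2]
      exact mem_inter.2 ⟨π.mem_part (mem_univ y), τ.mem_part (mem_univ y)⟩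
    have hcard := h _ (π.part_mem.2 (mem_univ x)) _ (τ.part_mem.2 (mem_univ x))
    exact card_le_one.1 hcard.le _ hx _ hy
  · rintro ⟨⟨B, hB⟩, ⟨C, hC⟩⟩
    obtain ⟨z, hz⟩ := card_pos.1 (h B hB C hC ▸ Nat.one_pos)
    rw [mem_inter] at hz
    exact ⟨z, by simp only [π.part_eq_of_mem hB hz.1, τ.part_eq_of_mem hC hz.2]⟩

end IsRectangle

abbrev RectOfHeight (n d : ℕ) : Type :=
  {p : Finpartition (univ : Finset (Fin n)) × Finpartition (univ : Finset (Fin n)) //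
    IsRectangle p.1 p.2 ∧ #p.1.parts = d}

section RectOfEquiv

variable {n : ℕ} {ι κ : Type*} [DecidableEq ι] [DecidableEq κ]

theorem isRectangle_fibers (f : Fin n ≃ ι × κ) :
    IsRectangle (fibers (Prod.fst ∘ f)) (fibers (Prod.snd ∘ f)) := by
  intro B hB C hC
  obtain ⟨x, -, rfl⟩ := (fibers _).part_surjOn hB
  obtain ⟨y, -, rfl⟩ := (fibers _).part_surjOn hC
  suffices (fibers (Prod.fst ∘ f)).part x ∩ (fibers (Prod.snd ∘ f)).part y =
      {f.symm ((f x).1, (f y).2)} by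
    rw [this, card_singleton]
  ext z
  simp only [mem_inter, mem_part_fibers, Function.comp_apply, mem_singleton,
    Equiv.eq_symm_apply, Prod.ext_iff, eq_comm]

variable [Fintype ι] [Nonempty κ]

def rectOfEquiv (f : Fin n ≃ ι × κ) : RectOfHeight n (Fintype.card ι) :=
  ⟨(fibers (Prod.fst ∘ f), fibers (Prod.snd ∘ f)), isRectangle_fibers f,
    card_parts_fibers (Prod.fst_surjective.comp f.surjective)⟩

variable [Fintype κ] [Nonempty ι]

theorem rectOfEquiv_eq_iff {f g : Fin n ≃ ι × κ} :
    rectOfEquiv f = rectOfEquiv g ↔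
      ∃ (σ : Equiv.Perm ι) (ρ : Equiv.Perm κ), g = f.trans (σ.prodCongr ρ) := by
  simp only [rectOfEquiv, Subtype.mk.injEq, Prod.mk.injEq, fibers_eq_fibers_iff,
    Function.comp_apply]
  constructor
  · rintro ⟨hfst, hsnd⟩
    obtain ⟨σ, hσ⟩ := (Prod.fst_surjective.comp f.surjective).exists_perm_eq_comp hfst
    obtain ⟨ρ, hρ⟩ := (Prod.snd_surjective.comp f.surjective).exists_perm_eq_comp hsnd
    exact ⟨σ, ρ, Equiv.ext fun x => Prod.ext (congrFun hσ x) (congrFun hρ x)⟩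
  · rintro ⟨σ, ρ, rfl⟩
    simp

theorem card_fiber_rectOfEquiv {R : RectOfHeight n (Fintype.card ι)} {f₀ : Fin n ≃ ι × κ}
    (hf₀ : rectOfEquiv f₀ = R) :
    Nat.card {f : Fin n ≃ ι × κ // rectOfEquiv f = R} =
      (Fintype.card ι)! * (Fintype.card κ)! := by
  let shift : Equiv.Perm ι × Equiv.Perm κ → {f : Fin n ≃ ι × κ // rectOfEquiv f = R} :=
    fun g => ⟨f₀.trans (g.1.prodCongr g.2), (rectOfEquiv_eq_iff.2 ⟨_, _, rfl⟩).symm.trans hf₀⟩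
  have hshift : Function.Bijective shift := by
    constructor
    · rintro ⟨σ, ρ⟩ ⟨σ', ρ'⟩ h
      have h' : ∀ a : ι × κ, σ a.1 = σ' a.1 ∧ ρ a.2 = ρ' a.2 := fun a => by
        simpa [shift, Prod.ext_iff] using
          congrArg (fun g : Fin n ≃ ι × κ => g (f₀.symm a)) (congrArg Subtype.val h)
      have k₀ := Classical.arbitrary κ
      have i₀ := Classical.arbitrary ι
      exact Prod.ext (Equiv.ext fun i => (h' (i, k₀)).1) (Equiv.ext fun k => (h' (i₀, k)).2)
    · rintro ⟨g, hg⟩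
      obtain ⟨σ, ρ, rfl⟩ := rectOfEquiv_eq_iff.1 (hf₀.trans hg.symm)
      exact ⟨(σ, ρ), rfl⟩
  rw [← Nat.card_congr (Equiv.ofBijective shift hshift), Nat.card_prod, Nat.card_perm,
    Nat.card_perm, Nat.card_eq_fintype_card, Nat.card_eq_fintype_card]

theorem rectOfEquiv_surjective (hn : Fintype.card ι * Fintype.card κ = n) :
    Function.Surjective (rectOfEquiv : (Fin n ≃ ι × κ) → RectOfHeight n (Fintype.card ι)) := by
  rintro ⟨⟨π, τ⟩, hR, hπ⟩
  let e := Equiv.ofBijective _ hR.bijective_part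
  have hτ : #τ.parts = Fintype.card κ := by
    have hcard := Fintype.card_congr e
    rw [Fintype.card_fin, Fintype.card_prod, Fintype.card_coe, Fintype.card_coe, hπ] at hcard
    exact Nat.eq_of_mul_eq_mul_left Fintype.card_pos (hcard.symm.trans hn.symm)
  let eπ : π.parts ≃ ι := Fintype.equivOfCardEq (by rw [Fintype.card_coe, hπ])
  let eτ : τ.parts ≃ κ := Fintype.equivOfCardEq (by rw [Fintype.card_coe, hτ])
  refine ⟨e.trans (eπ.prodCongr eτ), Subtype.ext (Prod.ext ?_ ?_)⟩
  · refine (fibers_eq_fibers_iff.2 fun x y => ?_).trans (fibers_part π)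
    simp [e]
  · refine (fibers_eq_fibers_iff.2 fun x y => ?_).trans (fibers_part τ)
    simp [e]

theorem card_rectOfHeight_mul (hn : Fintype.card ι * Fintype.card κ = n) :
    Nat.card (RectOfHeight n (Fintype.card ι)) * ((Fintype.card ι)! * (Fintype.card κ)!) =
      n ! := by
  have hcard := Nat.card_eq_mul_of_card_fiber (rectOfEquiv (ι := ι) (κ := κ)) fun R =>
    card_fiber_rectOfEquiv (rectOfEquiv_surjective hn R).choose_spec
  rw [← hcard, Nat.card_eq_fintype_card,
    Fintype.card_equiv (Fintype.equivOfCardEq (by simp [hn])), Fintype.card_fin]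

end RectOfEquiv

/-- The number of rectangles `(π, τ)` on an `n`-element set whose height (number of
blocks of `π`) is `d`, for `d ∣ n`, equals `n! / (d! · (n/d)!)`. -/
theorem rectangles_of_height_card (n d : ℕ) (hn : 0 < n) (hd : d ∣ n) :
    Nat.card {p : Finpartition (Finset.univ : Finset (Fin n)) ×
        Finpartition (Finset.univ : Finset (Fin n)) //
        IsRectangle p.1 p.2 ∧ p.1.parts.card = d} =
      n.factorial / (d.factorial * (n / d).factorial) := by
  obtain ⟨e, rfl⟩ := hd
  have hd₀ : 0 < d := Nat.pos_of_mul_pos_right hn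
  have he₀ : 0 < e := Nat.pos_of_mul_pos_left hn
  have : NeZero d := ⟨hd₀.ne'⟩
  have : NeZero e := ⟨he₀.ne'⟩
  have key := card_rectOfHeight_mul (n := d * e) (ι := Fin d) (κ := Fin e) (by simp)
  rw [Fintype.card_fin, Fintype.card_fin] at key
  rw [Nat.mul_div_cancel_left e hd₀]
  exact (Nat.div_eq_of_eq_mul_left (by positivity) key.symm).symm
end

section
/- For every positive integer n, the total number of rectangles on an n-element set equals the sum over all divisors d of n of n! / (d! · (n/d)!). -/
open Finset


namespace CardRect
variable {α : Type*} [Fintype α] [DecidableEq α]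

lemma finpartition_eq_of_rel {P Q : Finpartition (univ : Finset α)}
    (h : ∀ x y, P.part x = P.part y ↔ Q.part x = Q.part y) : P = Q := by
  have hp : ∀ x, P.part x = Q.part x := by
    intro x
    ext y
    rw [P.mem_part_iff_part_eq_part (mem_univ y) (mem_univ x),
        Q.mem_part_iff_part_eq_part (mem_univ y) (mem_univ x), h]
  ext B
  constructor
  · intro hB
    obtain ⟨x, hx⟩ := P.nonempty_of_mem_parts hB
    rw [← P.part_eq_of_mem hB hx, hp]
    exact Q.part_mem.mpr (mem_univ x)
  · intro hB
    obtain ⟨x, hx⟩ := Q.nonempty_of_mem_parts hB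
    rw [← Q.part_eq_of_mem hB hx, ← hp]
    exact P.part_mem.mpr (mem_univ x)

variable {β : Type*} [DecidableEq β] [Fintype β]

instance kerDec (g : α → β) : DecidableRel (Setoid.ker g).r :=
  fun a b => decidable_of_iff (g a = g b) Iff.rfl

def fiberPartition (g : α → β) : Finpartition (univ : Finset α) :=
  Finpartition.ofSetoid (Setoid.ker g)

set_option linter.unusedSectionVars false in
lemma mem_fiberPart_iff (g : α → β) {x y : α} :
    y ∈ (fiberPartition g).part x ↔ g x = g y :=
  Finpartition.mem_part_ofSetoid_iff_rel

lemma fiberPart_eq_iff (g : α → β) {x y : α} :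
    (fiberPartition g).part x = (fiberPartition g).part y ↔ g x = g y := by
  rw [← (fiberPartition g).mem_part_iff_part_eq_part (mem_univ x) (mem_univ y),
    mem_fiberPart_iff]
  exact ⟨Eq.symm, Eq.symm⟩

lemma card_parts_fiberPartition (g : α → β) (hg : Function.Surjective g) :
    (fiberPartition g).parts.card = Fintype.card β := by
  classical
  have hval : ∀ b, g (hg b).choose = b := fun b => (hg b).choose_spec
  have hbij : Function.Bijective (fun b : β =>
      (⟨(fiberPartition g).part (hg b).choose,
        (fiberPartition g).part_mem.mpr (mem_univ _)⟩ : {B // B ∈ (fiberPartition g).parts})) := by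
    constructor
    · intro b b' hbb'
      have h2 : (fiberPartition g).part (hg b).choose
          = (fiberPartition g).part (hg b').choose := congrArg Subtype.val hbb'
      have := (fiberPart_eq_iff g).mp h2
      rwa [hval, hval] at this
    · rintro ⟨B, hB⟩
      obtain ⟨x, hx⟩ := (fiberPartition g).nonempty_of_mem_parts hB
      refine ⟨g x, Subtype.ext ?_⟩
      dsimp only
      rw [← (fiberPartition g).part_eq_of_mem hB hx]
      exact (fiberPart_eq_iff g).mpr (hval (g x))
  calc (fiberPartition g).parts.card
      = Fintype.card {B // B ∈ (fiberPartition g).parts} := (Fintype.card_coe _).symm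
    _ = Fintype.card β := (Fintype.card_of_bijective hbij).symm

variable {γ : Type*} [DecidableEq γ] [Fintype γ]

def pi1 (f : α ≃ β × γ) : Finpartition (univ : Finset α) :=
  fiberPartition (fun x => (f x).1)

def pi2 (f : α ≃ β × γ) : Finpartition (univ : Finset α) :=
  fiberPartition (fun x => (f x).2)

lemma pi1_part_eq_iff (f : α ≃ β × γ) {x y : α} :
    (pi1 f).part x = (pi1 f).part y ↔ (f x).1 = (f y).1 :=
  fiberPart_eq_iff _

lemma pi2_part_eq_iff (f : α ≃ β × γ) {x y : α} :
    (pi2 f).part x = (pi2 f).part y ↔ (f x).2 = (f y).2 :=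
  fiberPart_eq_iff _

lemma rect_pi (f : α ≃ β × γ) :
    ∀ B ∈ (pi1 f).parts, ∀ C ∈ (pi2 f).parts, (B ∩ C).card = 1 := by
  intro B hB C hC
  obtain ⟨x, hx⟩ := (pi1 f).nonempty_of_mem_parts hB
  obtain ⟨y, hy⟩ := (pi2 f).nonempty_of_mem_parts hC
  rw [← (pi1 f).part_eq_of_mem hB hx, ← (pi2 f).part_eq_of_mem hC hy]
  rw [Finset.card_eq_one]
  refine ⟨f.symm ((f x).1, (f y).2), ?_⟩
  ext z
  simp only [mem_inter, mem_singleton]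
  rw [show (pi1 f).part x = (fiberPartition fun a => (f a).1).part x from rfl,
    show (pi2 f).part y = (fiberPartition fun a => (f a).2).part y from rfl,
    mem_fiberPart_iff, mem_fiberPart_iff]
  constructor
  · rintro ⟨h1, h2⟩
    apply f.injective
    rw [f.apply_symm_apply]
    exact Prod.ext h1.symm h2.symm
  · rintro rfl
    simp

lemma card_parts_pi1 (f : α ≃ β × γ) [Nonempty γ] :
    (pi1 f).parts.card = Fintype.card β := by
  apply card_parts_fiberPartition
  intro i
  exact ⟨f.symm (i, Classical.arbitrary γ), by simp⟩

lemma card_parts_pi2 (f : α ≃ β × γ) [Nonempty β] :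
    (pi2 f).parts.card = Fintype.card γ := by
  apply card_parts_fiberPartition
  intro j
  exact ⟨f.symm (Classical.arbitrary β, j), by simp⟩

lemma pi1_trans (f : α ≃ β × γ) (σ : Equiv.Perm β) (ρ : Equiv.Perm γ) :
    pi1 (f.trans (σ.prodCongr ρ)) = pi1 f := by
  apply finpartition_eq_of_rel
  intro x y
  rw [pi1_part_eq_iff, pi1_part_eq_iff]
  simp only [Equiv.trans_apply, Equiv.prodCongr_apply, Prod.map_fst]
  exact σ.injective.eq_iff

lemma pi2_trans (f : α ≃ β × γ) (σ : Equiv.Perm β) (ρ : Equiv.Perm γ) :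
    pi2 (f.trans (σ.prodCongr ρ)) = pi2 f := by
  apply finpartition_eq_of_rel
  intro x y
  rw [pi2_part_eq_iff, pi2_part_eq_iff]
  simp only [Equiv.trans_apply, Equiv.prodCongr_apply, Prod.map_snd]
  exact ρ.injective.eq_iff

lemma exists_trans_eq [Nonempty β] [Nonempty γ] {f f' : α ≃ β × γ}
    (h1 : pi1 f = pi1 f') (h2 : pi2 f = pi2 f') :
    ∃ (σ : Equiv.Perm β) (ρ : Equiv.Perm γ), f = f'.trans (σ.prodCongr ρ) := by
  have rel1 : ∀ x y : α, (f x).1 = (f y).1 ↔ (f' x).1 = (f' y).1 := by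
    intro x y
    rw [← pi1_part_eq_iff f, ← pi1_part_eq_iff f', h1]
  have rel2 : ∀ x y : α, (f x).2 = (f y).2 ↔ (f' x).2 = (f' y).2 := by
    intro x y
    rw [← pi2_part_eq_iff f, ← pi2_part_eq_iff f', h2]
  set j0 := Classical.arbitrary γ
  set i0 := Classical.arbitrary β
  set σ0 : β → β := fun i => (f (f'.symm (i, j0))).1 with hσ0
  set ρ0 : γ → γ := fun j => (f (f'.symm (i0, j))).2 with hρ0
  have hσinj : Function.Injective σ0 := by
    intro i i' h
    have := (rel1 _ _).mp h
    simpa using this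
  have hρinj : Function.Injective ρ0 := by
    intro j j' h
    have := (rel2 _ _).mp h
    simpa using this
  have hσ : ∀ x, (f x).1 = σ0 ((f' x).1) := by
    intro x
    apply (rel1 x (f'.symm ((f' x).1, j0))).mpr
    simp
  have hρ : ∀ x, (f x).2 = ρ0 ((f' x).2) := by
    intro x
    apply (rel2 x (f'.symm (i0, (f' x).2))).mpr
    simp
  refine ⟨Equiv.ofBijective σ0 (Finite.injective_iff_bijective.mp hσinj),
    Equiv.ofBijective ρ0 (Finite.injective_iff_bijective.mp hρinj), Equiv.ext fun x => ?_⟩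
  simp only [Equiv.trans_apply, Equiv.prodCongr_apply, Prod.map, Equiv.ofBijective_apply]
  exact Prod.ext (hσ x) (hρ x)

lemma exists_pi_eq {n d b : ℕ} (hdb : d * b = n)
    {π τ : Finpartition (univ : Finset (Fin n))}
    (hrect : ∀ B ∈ π.parts, ∀ C ∈ τ.parts, (B ∩ C).card = 1)
    (hd : π.parts.card = d) (hb : τ.parts.card = b) :
    ∃ f : Fin n ≃ Fin d × Fin b, pi1 f = π ∧ pi2 f = τ := by
  set eπ : {B // B ∈ π.parts} ≃ Fin d := π.parts.equivFin.trans (finCongr hd) with heπ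
  set eτ : {C // C ∈ τ.parts} ≃ Fin b := τ.parts.equivFin.trans (finCongr hb) with heτ
  set g : Fin n → Fin d × Fin b := fun x =>
    (eπ ⟨π.part x, π.part_mem.mpr (mem_univ x)⟩, eτ ⟨τ.part x, τ.part_mem.mpr (mem_univ x)⟩) with hg
  have hgπ : ∀ x y, (g x).1 = (g y).1 ↔ π.part x = π.part y := by
    intro x y
    exact ⟨fun h => congrArg Subtype.val (eπ.injective h),
      fun h => congrArg eπ (Subtype.ext h)⟩
  have hgτ : ∀ x y, (g x).2 = (g y).2 ↔ τ.part x = τ.part y := by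
    intro x y
    exact ⟨fun h => congrArg Subtype.val (eτ.injective h),
      fun h => congrArg eτ (Subtype.ext h)⟩
  have hinj : Function.Injective g := by
    intro x y hxy
    have h1 : π.part x = π.part y := (hgπ x y).mp (congrArg Prod.fst hxy)
    have h2 : τ.part x = τ.part y := (hgτ x y).mp (congrArg Prod.snd hxy)
    have hc := hrect _ (π.part_mem.mpr (mem_univ x)) _ (τ.part_mem.mpr (mem_univ x))
    obtain ⟨a, ha⟩ := Finset.card_eq_one.mp hc
    have hxa : x ∈ π.part x ∩ τ.part x :=
      mem_inter.mpr ⟨π.mem_part (mem_univ x), τ.mem_part (mem_univ x)⟩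
    have hya : y ∈ π.part x ∩ τ.part x := by
      rw [h1, h2]
      exact mem_inter.mpr ⟨π.mem_part (mem_univ y), τ.mem_part (mem_univ y)⟩
    rw [ha, mem_singleton] at hxa hya
    rw [hxa, hya]
  have hbij : Function.Bijective g := by
    rw [Fintype.bijective_iff_injective_and_card]
    exact ⟨hinj, by simp [hdb]⟩
  refine ⟨Equiv.ofBijective g hbij, ?_, ?_⟩
  · apply finpartition_eq_of_rel
    intro x y
    rw [pi1_part_eq_iff]
    exact hgπ x y
  · apply finpartition_eq_of_rel
    intro x y
    rw [pi2_part_eq_iff]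
    exact hgτ x y

lemma card_part_of_rect {π τ : Finpartition (univ : Finset α)}
    (h : ∀ B ∈ π.parts, ∀ C ∈ τ.parts, (B ∩ C).card = 1)
    {B : Finset α} (hB : B ∈ π.parts) :
    B.card = τ.parts.card := by
  have hbu : B = τ.parts.biUnion (fun C => B ∩ C) := by
    ext x
    simp only [mem_biUnion, mem_inter]
    constructor
    · intro hx
      exact ⟨τ.part x, τ.part_mem.mpr (mem_univ x), hx, τ.mem_part (mem_univ x)⟩
    · rintro ⟨C, _, hx, _⟩
      exact hx
  have hdisj : ∀ C ∈ τ.parts, ∀ C' ∈ τ.parts, C ≠ C' → Disjoint (B ∩ C) (B ∩ C') := by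
    intro C hC C' hC' hne
    exact (τ.disjoint (mem_coe.mpr hC) (mem_coe.mpr hC') hne).mono
      inter_subset_right inter_subset_right
  calc B.card = (τ.parts.biUnion (fun C => B ∩ C)).card := by rw [← hbu]
    _ = ∑ C ∈ τ.parts, (B ∩ C).card := Finset.card_biUnion hdisj
    _ = ∑ _C ∈ τ.parts, 1 := Finset.sum_congr rfl (fun C hC => h B hB C hC)
    _ = τ.parts.card := by simp

lemma mul_card_parts_of_rect {π τ : Finpartition (univ : Finset α)}
    (h : ∀ B ∈ π.parts, ∀ C ∈ τ.parts, (B ∩ C).card = 1) :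
    π.parts.card * τ.parts.card = Fintype.card α := by
  have := π.sum_card_parts
  rw [Finset.card_univ] at this
  calc π.parts.card * τ.parts.card = ∑ _B ∈ π.parts, τ.parts.card := by
        rw [Finset.sum_const, smul_eq_mul]
    _ = ∑ B ∈ π.parts, B.card := Finset.sum_congr rfl
        (fun B hB => (card_part_of_rect h hB).symm)
    _ = Fintype.card α := this

end CardRect

namespace CardRect

lemma card_Td {n d b : ℕ} (hd : 0 < d) (hb : 0 < b) (hdb : d * b = n) :
    Nat.card {p : Finpartition (univ : Finset (Fin n)) ×
        Finpartition (univ : Finset (Fin n)) //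
        IsRectangle p.1 p.2 ∧ p.1.parts.card = d} * (d.factorial * b.factorial) =
      n.factorial := by
  classical
  haveI : Nonempty (Fin d) := ⟨⟨0, hd⟩⟩
  haveI : Nonempty (Fin b) := ⟨⟨0, hb⟩⟩
  set T := {p : Finpartition (univ : Finset (Fin n)) ×
      Finpartition (univ : Finset (Fin n)) //
      IsRectangle p.1 p.2 ∧ p.1.parts.card = d} with hT
  have hsurj : ∀ r : T, ∃ f : Fin n ≃ Fin d × Fin b,
      pi1 f = r.val.1 ∧ pi2 f = r.val.2 := by
    rintro ⟨⟨π, τ⟩, hrect, hdc⟩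
    have hmul := mul_card_parts_of_rect hrect
    rw [Fintype.card_fin] at hmul
    have hbc : τ.parts.card = b := by
      apply Nat.eq_of_mul_eq_mul_left hd
      rw [hdb, ← hdc, hmul]
    exact exists_pi_eq hdb hrect hdc hbc
  choose sec hsec1 hsec2 using hsurj
  set F : T × (Equiv.Perm (Fin d) × Equiv.Perm (Fin b)) → (Fin n ≃ Fin d × Fin b) :=
    fun rg => (sec rg.1).trans (rg.2.1.prodCongr rg.2.2) with hF
  have hΦ1 : ∀ rg, pi1 (F rg) = rg.1.val.1 := by
    rintro ⟨r, σ, ρ⟩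
    rw [hF]
    dsimp only
    rw [pi1_trans]
    exact hsec1 r
  have hΦ2 : ∀ rg, pi2 (F rg) = rg.1.val.2 := by
    rintro ⟨r, σ, ρ⟩
    rw [hF]
    dsimp only
    rw [pi2_trans]
    exact hsec2 r
  have hFbij : Function.Bijective F := by
    constructor
    · rintro ⟨r, σ, ρ⟩ ⟨r', σ', ρ'⟩ h
      have hr : r = r' := by
        apply Subtype.ext
        apply Prod.ext
        · rw [← hΦ1 (r, σ, ρ), ← hΦ1 (r', σ', ρ'), h]
        · rw [← hΦ2 (r, σ, ρ), ← hΦ2 (r', σ', ρ'), h]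
      subst hr
      have he : (σ.prodCongr ρ) = (σ'.prodCongr ρ') := by
        apply Equiv.ext
        intro p
        have := congrArg (fun q : Fin n ≃ Fin d × Fin b => q ((sec r).symm p)) h
        simpa [hF] using this
      have hσ : σ = σ' := by
        apply Equiv.ext
        intro i
        have := congrArg (fun e : Fin d × Fin b ≃ Fin d × Fin b =>
          (e (i, ⟨0, hb⟩)).1) he
        simpa using this
      have hρ : ρ = ρ' := by
        apply Equiv.ext
        intro j
        have := congrArg (fun e : Fin d × Fin b ≃ Fin d × Fin b =>
          (e (⟨0, hd⟩, j)).2) he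
        simpa using this
      rw [hσ, hρ]
    · intro f
      have hrd : (pi1 f).parts.card = d := by
        rw [card_parts_pi1 f, Fintype.card_fin]
      set r : T := ⟨(pi1 f, pi2 f), rect_pi f, hrd⟩ with hr
      obtain ⟨σ, ρ, hfe⟩ := exists_trans_eq (f := f) (f' := sec r)
        (by rw [hsec1 r]) (by rw [hsec2 r])
      exact ⟨(r, σ, ρ), hfe.symm⟩
  have hcard := Nat.card_eq_of_bijective F hFbij
  rw [Nat.card_prod, Nat.card_prod] at hcard
  have h1 : Nat.card (Equiv.Perm (Fin d)) = d.factorial := by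
    rw [Nat.card_eq_fintype_card, Fintype.card_perm, Fintype.card_fin]
  have h2 : Nat.card (Equiv.Perm (Fin b)) = b.factorial := by
    rw [Nat.card_eq_fintype_card, Fintype.card_perm, Fintype.card_fin]
  have h3 : Nat.card (Fin n ≃ Fin d × Fin b) = n.factorial := by
    rw [Nat.card_eq_fintype_card,
      Fintype.card_equiv (Fintype.equivOfCardEq (by simp [hdb])), Fintype.card_fin]
  rw [h1, h2, h3] at hcard
  exact hcard

end CardRect

/-- The total number of rectangles on an `n`-element set equals
`∑_{d ∣ n} n! / (d! · (n/d)!)`. -/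
theorem card_rectangles (n : ℕ) (hn : 0 < n) :
    Nat.card {p : Finpartition (Finset.univ : Finset (Fin n)) ×
        Finpartition (Finset.univ : Finset (Fin n)) //
        IsRectangle p.1 p.2} =
      ∑ d ∈ n.divisors, n.factorial / (d.factorial * (n / d).factorial) := by
  classical
  set S := {p : Finpartition (Finset.univ : Finset (Fin n)) ×
      Finpartition (Finset.univ : Finset (Fin n)) // IsRectangle p.1 p.2} with hS
  have hmem : ∀ p : S, p.val.1.parts.card ∈ n.divisors := by
    rintro ⟨⟨π, τ⟩, hrect⟩
    have hmul := CardRect.mul_card_parts_of_rect hrect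
    rw [Fintype.card_fin] at hmul
    exact Nat.mem_divisors.mpr ⟨Dvd.intro _ hmul, hn.ne'⟩
  rw [Nat.card_eq_fintype_card, ← Finset.card_univ,
    Finset.card_eq_sum_card_fiberwise (fun p _ => hmem p)]
  apply Finset.sum_congr rfl
  intro d hd
  rw [Nat.mem_divisors] at hd
  have hdpos : 0 < d := Nat.pos_of_dvd_of_pos hd.1 hn
  have hbpos : 0 < n / d := Nat.div_pos (Nat.le_of_dvd hn hd.1) hdpos
  have hdb : d * (n / d) = n := Nat.mul_div_cancel' hd.1
  have hkey := CardRect.card_Td (n := n) hdpos hbpos hdb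
  have hfc : (Finset.univ.filter fun p : S => p.val.1.parts.card = d).card
      = Nat.card {p : Finpartition (Finset.univ : Finset (Fin n)) ×
          Finpartition (Finset.univ : Finset (Fin n)) //
          IsRectangle p.1 p.2 ∧ p.1.parts.card = d} := by
    rw [← Fintype.card_subtype, Nat.card_eq_fintype_card.symm]
    exact Nat.card_congr (Equiv.subtypeSubtypeEquivSubtypeInter
      (fun p : Finpartition (Finset.univ : Finset (Fin n)) ×
          Finpartition (Finset.univ : Finset (Fin n)) => IsRectangle p.1 p.2)
      (fun p => p.1.parts.card = d))
  rw [hfc]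
  exact (Nat.div_eq_of_eq_mul_left
    (Nat.mul_pos d.factorial_pos (n / d).factorial_pos) hkey.symm).symm
end

section
/- For all positive integers n and k, the number of k-rectangles on an n-element set equals the sum, over all k-tuples (d₁, …, d_k) of positive integers with d₁·d₂⋯d_k = n, of the multinomial-type coefficient n! / (d₁!·d₂!⋯d_k!). -/
/-- A `k`-rectangle on the finite set `Fin n`: a `k`-tuple of set partitions such that
every choice of one block from each partition intersects in exactly one element. -/
def IsKRectangle {n k : ℕ} (π : Fin k → Finpartition (Finset.univ : Finset (Fin n))) : Prop :=
  ∀ B : Fin k → Finset (Fin n), (∀ i, B i ∈ (π i).parts) →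
    (Finset.univ.inf B).card = 1

namespace KRect

variable {n k : ℕ}

noncomputable def rectEquiv {π : Fin k → Finpartition (Finset.univ : Finset (Fin n))}
    (hπ : IsKRectangle π) : Fin n ≃ ∀ i, {B // B ∈ (π i).parts} :=
  Equiv.ofBijective (fun x i => ⟨(π i).part x, (π i).part_mem.mpr (Finset.mem_univ x)⟩) (by
    constructor
    · intro x y hxy
      obtain ⟨a, ha⟩ := Finset.card_eq_one.mp
        (hπ (fun i => (π i).part x) (fun i => (π i).part_mem.mpr (Finset.mem_univ x)))
      have hx : x ∈ Finset.univ.inf fun i => (π i).part x := by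
        simp only [Finset.mem_inf]
        exact fun i _ => (π i).mem_part (Finset.mem_univ x)
      have hy : y ∈ Finset.univ.inf fun i => (π i).part x := by
        simp only [Finset.mem_inf]
        intro i _
        have h2 : (π i).part y = (π i).part x := by
          simpa [Subtype.ext_iff] using (congrFun hxy i).symm
        rw [← h2]; exact (π i).mem_part (Finset.mem_univ y)
      rw [ha, Finset.mem_singleton] at hx hy
      rw [hx, hy]
    · intro b
      obtain ⟨a, ha⟩ := Finset.card_eq_one.mp (hπ (fun i => (b i).1) (fun i => (b i).2))
      refine ⟨a, funext fun i => Subtype.ext ?_⟩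
      have hai : a ∈ (b i).1 := by
        have h3 : a ∈ Finset.univ.inf fun i => (b i).1 := ha ▸ Finset.mem_singleton_self a
        simp only [Finset.mem_inf] at h3
        exact h3 i (Finset.mem_univ i)
      exact (π i).part_eq_of_mem (b i).2 hai)

lemma prod_card_parts {π : Fin k → Finpartition (Finset.univ : Finset (Fin n))}
    (hπ : IsKRectangle π) : ∏ i, ((π i).parts).card = n := by
  have h := Fintype.card_congr (rectEquiv hπ)
  simpa [Fintype.card_pi, Fintype.card_coe] using h.symm


section Construct

variable {d : Fin k → ℕ}

def coordSetoid (g : Fin n ≃ ∀ i, Fin (d i)) (i : Fin k) : Setoid (Fin n) :=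
  ⟨fun a b => g a i = g b i, ⟨fun _ => rfl, Eq.symm, Eq.trans⟩⟩

instance (g : Fin n ≃ ∀ i, Fin (d i)) (i : Fin k) : DecidableRel (coordSetoid g i).r :=
  fun a b => inferInstanceAs (Decidable (g a i = g b i))

def πOf (g : Fin n ≃ ∀ i, Fin (d i)) (i : Fin k) : Finpartition (Finset.univ : Finset (Fin n)) :=
  Finpartition.ofSetoid (coordSetoid g i)

lemma mem_part_πOf (g : Fin n ≃ ∀ i, Fin (d i)) (i : Fin k) {a b : Fin n} :
    b ∈ (πOf g i).part a ↔ g a i = g b i :=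
  Finpartition.mem_part_ofSetoid_iff_rel

lemma isKRectangle_πOf (g : Fin n ≃ ∀ i, Fin (d i)) : IsKRectangle (πOf g) := by
  intro B hB
  have hne : ∀ i, ∃ y, y ∈ B i := fun i =>
    Finpartition.nonempty_of_mem_parts _ (hB i)
  choose y hy using hne
  have hBi : ∀ i, B i = (πOf g i).part (y i) := fun i =>
    ((πOf g i).part_eq_of_mem (hB i) (hy i)).symm
  have key : Finset.univ.inf B = {g.symm fun i => g (y i) i} := by
    ext x
    simp only [Finset.mem_inf, Finset.mem_singleton]
    constructor
    · intro hx
      rw [Equiv.eq_symm_apply]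
      funext i
      have := hx i (Finset.mem_univ i)
      rw [hBi i, mem_part_πOf] at this
      exact this.symm
    · rintro rfl i _
      rw [hBi i, mem_part_πOf]
      rw [Equiv.apply_symm_apply]
  rw [key]
  exact Finset.card_singleton _

noncomputable def eOf (g : Fin n ≃ ∀ i, Fin (d i)) (hd : ∀ i, 0 < d i) (i : Fin k) :
    {B // B ∈ (πOf g i).parts} ≃ Fin (d i) := by
  refine Equiv.ofBijective
    (fun B => g (Finpartition.nonempty_of_mem_parts _ B.2).choose i) ⟨?_, ?_⟩
  · rintro ⟨B, hB⟩ ⟨B', hB'⟩ hval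
    set y := (Finpartition.nonempty_of_mem_parts _ hB).choose with hy
    set y' := (Finpartition.nonempty_of_mem_parts _ hB').choose with hy'
    have hyB : y ∈ B := (Finpartition.nonempty_of_mem_parts _ hB).choose_spec
    have hy'B' : y' ∈ B' := (Finpartition.nonempty_of_mem_parts _ hB').choose_spec
    have hgy : g y i = g y' i := hval
    have h1 : y ∈ (πOf g i).part y' := (mem_part_πOf g i).mpr hgy.symm
    have hBeq : B = B' := by
      rw [← (πOf g i).part_eq_of_mem hB hyB, ← (πOf g i).part_eq_of_mem hB' hy'B']
      exact (πOf g i).eq_of_mem_parts ((πOf g i).part_mem.mpr (Finset.mem_univ y))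
        ((πOf g i).part_mem.mpr (Finset.mem_univ y')) ((πOf g i).mem_part (Finset.mem_univ y)) h1
    exact Subtype.ext hBeq
  · intro v
    set w : ∀ j, Fin (d j) := Function.update (fun j => ⟨0, hd j⟩) i v with hw
    refine ⟨⟨(πOf g i).part (g.symm w), (πOf g i).part_mem.mpr (Finset.mem_univ _)⟩, ?_⟩
    set z := (Finpartition.nonempty_of_mem_parts _
      ((πOf g i).part_mem.mpr (Finset.mem_univ (g.symm w)))).choose with hz
    have hzmem : z ∈ (πOf g i).part (g.symm w) :=
      (Finpartition.nonempty_of_mem_parts _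
        ((πOf g i).part_mem.mpr (Finset.mem_univ (g.symm w)))).choose_spec
    have : g (g.symm w) i = g z i := (mem_part_πOf g i).mp hzmem
    show g z i = v
    rw [← this, Equiv.apply_symm_apply, hw, Function.update_self]

lemma eOf_part (g : Fin n ≃ ∀ i, Fin (d i)) (hd : ∀ i, 0 < d i) (i : Fin k) (x : Fin n)
    (h : (πOf g i).part x ∈ (πOf g i).parts) :
    eOf g hd i ⟨(πOf g i).part x, h⟩ = g x i := by
  show g (Finpartition.nonempty_of_mem_parts _ h).choose i = g x i
  have hmem : (Finpartition.nonempty_of_mem_parts _ h).choose ∈ (πOf g i).part x :=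
    (Finpartition.nonempty_of_mem_parts _ h).choose_spec
  exact ((mem_part_πOf g i).mp hmem).symm

lemma card_parts_πOf (g : Fin n ≃ ∀ i, Fin (d i)) (hd : ∀ i, 0 < d i) (i : Fin k) :
    ((πOf g i).parts).card = d i := by
  have h := Fintype.card_congr (eOf g hd i)
  simpa [Fintype.card_coe] using h

end Construct


section Count

variable (d : Fin k → ℕ)

abbrev RectD : Type :=
  {π : Fin k → Finpartition (Finset.univ : Finset (Fin n)) //
    IsKRectangle π ∧ ∀ i, ((π i).parts).card = d i}

noncomputable def F
    (p : Σ π : RectD (n := n) d, ∀ i, {B // B ∈ (π.1 i).parts} ≃ Fin (d i)) :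
    Fin n ≃ ∀ i, Fin (d i) :=
  (rectEquiv p.1.2.1).trans (Equiv.piCongrRight p.2)

lemma F_bijective (hn : 0 < n) (hd : ∏ i, d i = n) :
    Function.Bijective (F (n := n) d) := by
  have hd0 : ∀ i, 0 < d i := by
    intro i
    rcases Nat.eq_zero_or_pos (d i) with h | h
    · rw [Finset.prod_eq_zero (Finset.mem_univ i) h] at hd; omega
    · exact h
  constructor
  · rintro ⟨⟨π, hπ, hπc⟩, e⟩ ⟨⟨π', hπ', hπc'⟩, e'⟩ hF
    have h : ∀ (x : Fin n) (i : Fin k),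
        e i ⟨(π i).part x, (π i).part_mem.mpr (Finset.mem_univ x)⟩
          = e' i ⟨(π' i).part x, (π' i).part_mem.mpr (Finset.mem_univ x)⟩ :=
      fun x i => congrFun (Equiv.ext_iff.mp hF x) i
    have hpart : ∀ (i : Fin k) (x : Fin n), (π i).part x = (π' i).part x := by
      intro i x
      ext y
      rw [(π i).mem_part_iff_part_eq_part (Finset.mem_univ y) (Finset.mem_univ x),
        (π' i).mem_part_iff_part_eq_part (Finset.mem_univ y) (Finset.mem_univ x)]
      constructor
      · intro hxy
        have h1 : e i ⟨(π i).part y, (π i).part_mem.mpr (Finset.mem_univ y)⟩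
            = e i ⟨(π i).part x, (π i).part_mem.mpr (Finset.mem_univ x)⟩ :=
          congrArg (e i) (Subtype.ext hxy)
        rw [h y i, h x i] at h1
        exact Subtype.ext_iff.mp ((e' i).injective h1)
      · intro hxy
        have h1 : e' i ⟨(π' i).part y, (π' i).part_mem.mpr (Finset.mem_univ y)⟩
            = e' i ⟨(π' i).part x, (π' i).part_mem.mpr (Finset.mem_univ x)⟩ :=
          congrArg (e' i) (Subtype.ext hxy)
        rw [← h y i, ← h x i] at h1
        exact Subtype.ext_iff.mp ((e i).injective h1)
    have hππ : π = π' := by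
      funext i
      apply Finpartition.ext
      ext B
      constructor <;> intro hB
      · obtain ⟨y, hy⟩ := Finpartition.nonempty_of_mem_parts _ hB
        rw [← (π i).part_eq_of_mem hB hy, hpart i y]
        exact (π' i).part_mem.mpr (Finset.mem_univ y)
      · obtain ⟨y, hy⟩ := Finpartition.nonempty_of_mem_parts _ hB
        rw [← (π' i).part_eq_of_mem hB hy, ← hpart i y]
        exact (π i).part_mem.mpr (Finset.mem_univ y)
    subst hππ
    have he : e = e' := by
      funext i
      refine Equiv.ext fun B => ?_
      obtain ⟨y, hy⟩ := Finpartition.nonempty_of_mem_parts _ B.2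
      have hBy : B = ⟨(π i).part y, (π i).part_mem.mpr (Finset.mem_univ y)⟩ :=
        Subtype.ext ((π i).part_eq_of_mem B.2 hy).symm
      rw [hBy]
      exact h y i
    cases he
    rfl
  · intro g
    refine ⟨⟨⟨πOf g, isKRectangle_πOf g, fun i => card_parts_πOf g hd0 i⟩, eOf g hd0⟩, ?_⟩
    refine Equiv.ext fun x => ?_
    funext i
    exact eOf_part g hd0 i x _

lemma card_rectD (hn : 0 < n) (hd : ∏ i, d i = n) :
    Nat.card (RectD (n := n) d) * ∏ i, (d i).factorial = n.factorial := by
  classical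
  have h1 : Nat.card (Σ π : RectD (n := n) d, ∀ i, {B // B ∈ (π.1 i).parts} ≃ Fin (d i))
      = Nat.card (Fin n ≃ ∀ i, Fin (d i)) :=
    Nat.card_congr (Equiv.ofBijective _ (F_bijective d hn hd))
  have h2 : Nat.card (Fin n ≃ ∀ i, Fin (d i)) = n.factorial := by
    rw [Nat.card_eq_fintype_card,
      Fintype.card_equiv (Fintype.equivOfCardEq (by simp [hd]))]
    simp
  have h3 : Nat.card (Σ π : RectD (n := n) d, ∀ i, {B // B ∈ (π.1 i).parts} ≃ Fin (d i))
      = Nat.card (RectD (n := n) d) * ∏ i, (d i).factorial := by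
    have E1 : ∀ π : RectD (n := n) d,
        (∀ i, {B // B ∈ (π.1 i).parts} ≃ Fin (d i)) ≃ (∀ i, Fin (d i) ≃ Fin (d i)) := fun π =>
      Equiv.piCongrRight fun i =>
        Equiv.equivCongr (Fintype.equivOfCardEq (by simp [Fintype.card_coe, π.2.2 i]))
          (Equiv.refl _)
    have E : (Σ π : RectD (n := n) d, ∀ i, {B // B ∈ (π.1 i).parts} ≃ Fin (d i))
        ≃ (RectD (n := n) d) × (∀ i, Fin (d i) ≃ Fin (d i)) :=
      (Equiv.sigmaCongrRight (β₂ := fun _ => ∀ i, Fin (d i) ≃ Fin (d i)) E1).trans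
        (Equiv.sigmaEquivProd _ _)
    rw [Nat.card_congr E, Nat.card_prod, Nat.card_pi]
    congr 1
    refine Finset.prod_congr rfl fun i _ => ?_
    rw [Nat.card_eq_fintype_card, Fintype.card_equiv (Equiv.refl _)]
    simp
  rw [← h3, h1, h2]

end Count

lemma nat_card_sigma {ι : Type*} [Fintype ι] (f : ι → Type*) [∀ i, Finite (f i)] :
    Nat.card (Σ i, f i) = ∑ i, Nat.card (f i) := by
  letI := fun i => Fintype.ofFinite (f i)
  simp [Nat.card_eq_fintype_card]

end KRect

open KRect



/-- The number of `k`-rectangles on an `n`-element set equals the sum, over all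
`k`-tuples `(d₁, …, d_k)` of positive integers with `d₁⋯d_k = n`, of `n!/(d₁!⋯d_k!)`. -/
theorem card_kRectangles (n k : ℕ) (hn : 0 < n) (hk : 0 < k) :
    Nat.card {π : Fin k → Finpartition (Finset.univ : Finset (Fin n)) // IsKRectangle π} =
      ∑ d ∈ (Fintype.piFinset fun _ : Fin k => Finset.range (n + 1)).filter
          (fun d => ∏ i, d i = n),
        n.factorial / ∏ i, (d i).factorial := by
  classical
  set S := (Fintype.piFinset fun _ : Fin k => Finset.range (n + 1)).filter
      (fun d => ∏ i, d i = n) with hS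
  have hmem : ∀ π : {π : Fin k → Finpartition (Finset.univ : Finset (Fin n)) //
      IsKRectangle π}, (fun i => ((π.1 i).parts).card) ∈ S := by
    intro π
    refine Finset.mem_filter.mpr ⟨Fintype.mem_piFinset.mpr fun i => Finset.mem_range.mpr ?_,
      prod_card_parts π.2⟩
    exact Nat.lt_succ_of_le (le_trans (π.1 i).card_parts_le_card (by simp))
  let E : {π : Fin k → Finpartition (Finset.univ : Finset (Fin n)) // IsKRectangle π} ≃
      Σ dd : {x // x ∈ S}, RectD (n := n) dd.1 :=
    { toFun := fun π => ⟨⟨fun i => ((π.1 i).parts).card, hmem π⟩, ⟨π.1, π.2, fun i => rfl⟩⟩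
      invFun := fun p => ⟨p.2.1, p.2.2.1⟩
      left_inv := fun π => rfl
      right_inv := by
        rintro ⟨⟨dd, hdd⟩, ⟨π, hπ, hc⟩⟩
        have hddc : dd = fun i => ((π i).parts).card := funext fun i => (hc i).symm
        subst hddc
        rfl }
  rw [Nat.card_congr E, nat_card_sigma, Finset.sum_coe_sort S
    (fun dd => Nat.card (RectD (n := n) dd))]
  refine Finset.sum_congr rfl fun dd hdd => ?_
  have hprod : ∏ i, dd i = n := (Finset.mem_filter.mp hdd).2
  have hpos : 0 < ∏ i, (dd i).factorial :=
    Finset.prod_pos fun i _ => Nat.factorial_pos _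
  rw [← card_rectD dd hn hprod, Nat.mul_div_cancel _ hpos]
end

section
/- For every positive integer n, the number of triples ((π, τ), c, ℓ), where (π, τ) is a rectangle on an n-element set, c is a permutation of the set of blocks of π whose generated cyclic group acts transitively on the blocks of π (a single cycle through all blocks), and ℓ is a linear order on the set of blocks of τ, equals σ(n) · (n−1)!, where σ(n) is the sum of the positive divisors of n. -/
/-- A permutation is a full cycle when the cyclic group it generates acts
transitively, i.e. it is a single cycle through all the elements. -/
def IsFullCycle {β : Type*} (c : Equiv.Perm β) : Prop :=
  ∀ x y : β, ∃ m : ℕ, (c ^ m) x = y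

namespace RegOct

open Finset Equiv

/-! ### Full cycle structure -/

lemma fullCycle_struct {β : Type*} [Fintype β] [DecidableEq β] {c : Equiv.Perm β}
    (hc : IsFullCycle c) (x₀ : β) :
    (∀ m : ℕ, (c ^ m) x₀ = (c ^ (m % Fintype.card β)) x₀) ∧
      Function.Bijective (fun k : Fin (Fintype.card β) => (c ^ (k : ℕ)) x₀) := by
  have hex : ∃ m : ℕ, 0 < m ∧ (c ^ m) x₀ = x₀ := by
    refine ⟨orderOf c, orderOf_pos c, by rw [pow_orderOf_eq_one]; rfl⟩
  set j := Nat.find hex with hj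
  obtain ⟨hj0, hjfix⟩ := Nat.find_spec hex
  rw [← hj] at hj0 hjfix
  have hqfix : ∀ q : ℕ, ((c ^ j) ^ q) x₀ = x₀ := by
    intro q
    induction q with
    | zero => rfl
    | succ q ih =>
      rw [pow_succ, Equiv.Perm.mul_apply]
      rw [hjfix, ih]
  have hperiod : ∀ m : ℕ, (c ^ m) x₀ = (c ^ (m % j)) x₀ := by
    intro m
    conv_lhs => rw [← Nat.div_add_mod m j]
    rw [add_comm, pow_add, pow_mul, Equiv.Perm.mul_apply, hqfix]
  have hinj : ∀ i i' : ℕ, i < j → i' < j → (c ^ i) x₀ = (c ^ i') x₀ → i = i' := by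
    intro i i' hi hi' heq
    by_contra hne
    wlog hlt : i < i' generalizing i i'
    · exact this i' i hi' hi heq.symm (Ne.symm hne) (by omega)
    have hfix : (c ^ (i' - i)) x₀ = x₀ := by
      have h1 : (c ^ i) ((c ^ (i' - i)) x₀) = (c ^ i) x₀ := by
        rw [← Equiv.Perm.mul_apply, ← pow_add, Nat.add_sub_cancel' hlt.le, heq]
      exact (Equiv.injective _) h1
    have := Nat.find_min hex (m := i' - i) (by omega)
    exact this ⟨by omega, hfix⟩
  have hsurj : ∀ y : β, ∃ i : ℕ, i < j ∧ (c ^ i) x₀ = y := by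
    intro y
    obtain ⟨m, hm⟩ := hc x₀ y
    exact ⟨m % j, Nat.mod_lt _ hj0, by rw [← hperiod, hm]⟩
  have hcard : j = Fintype.card β := by
    have hle : Fintype.card β ≤ j := by
      have : Function.Surjective (fun i : Fin j => (c ^ (i : ℕ)) x₀) := by
        intro y; obtain ⟨i, hi, h⟩ := hsurj y; exact ⟨⟨i, hi⟩, h⟩
      simpa using Fintype.card_le_of_surjective _ this
    have hge : j ≤ Fintype.card β := by
      have : Function.Injective (fun i : Fin j => (c ^ (i : ℕ)) x₀) := by
        intro i i' h; exact Fin.ext (hinj _ _ i.2 i'.2 h)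
      simpa using Fintype.card_le_of_injective _ this
    omega
  rw [← hcard]
  refine ⟨hperiod, ?_, fun y => ?_⟩
  · intro i i' h
    exact Fin.ext (hinj _ _ i.2 i'.2 h)
  · obtain ⟨i, hi, h⟩ := hsurj y
    exact ⟨⟨i, hi⟩, h⟩

/-! ### kernel setoid partitions -/

def kerSetoid {α γ : Type*} (g : α → γ) : Setoid α :=
  ⟨fun a b => g a = g b, ⟨fun _ => rfl, Eq.symm, Eq.trans⟩⟩

instance kerSetoid.decRel {α γ : Type*} (g : α → γ) [DecidableEq γ] :
    DecidableRel (kerSetoid g).r :=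
  fun _ _ => inferInstanceAs (Decidable (_ = _))

variable {α γ : Type*} [Fintype α] [DecidableEq α] [DecidableEq γ]

/-- The partition of `univ` into fibers of `g`. -/
def kerPart (g : α → γ) : Finpartition (univ : Finset α) :=
  Finpartition.ofSetoid (kerSetoid g)

lemma mem_kerPart (g : α → γ) {x y : α} : y ∈ (kerPart g).part x ↔ g x = g y :=
  Finpartition.mem_part_ofSetoid_iff_rel

lemma kerPart_part_eq_iff (g : α → γ) (x y : α) :
    (kerPart g).part x = (kerPart g).part y ↔ g x = g y := by
  constructor
  · intro h
    have : y ∈ (kerPart g).part x := h ▸ (kerPart g).mem_part (mem_univ y)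
    exact (mem_kerPart g).1 this
  · intro h
    have hy : y ∈ (kerPart g).part x := (mem_kerPart g).2 h
    exact ((kerPart g).mem_part_iff_part_eq_part (mem_univ y) (mem_univ x)).1 hy |>.symm

/-- Two finpartitions of `univ` with the same part function agree. -/
lemma part_ext {P Q : Finpartition (univ : Finset α)}
    (h : ∀ x, P.part x = Q.part x) : P = Q := by
  ext B
  constructor
  · intro hB
    obtain ⟨x, hx⟩ := P.nonempty_of_mem_parts hB
    rw [← P.part_eq_of_mem hB hx, h]
    exact Q.part_mem.2 (mem_univ x)
  · intro hB
    obtain ⟨x, hx⟩ := Q.nonempty_of_mem_parts hB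
    rw [← Q.part_eq_of_mem hB hx, ← h]
    exact P.part_mem.2 (mem_univ x)

/-- Equivalence between blocks of a fiber partition and the codomain, given a section. -/
noncomputable def blockE (g : α → γ) (s : γ → α) (hs : ∀ k, g (s k) = k) :
    {B // B ∈ (kerPart g).parts} ≃ γ := by
  refine (Equiv.ofBijective
    (fun k : γ => (⟨(kerPart g).part (s k), (kerPart g).part_mem.2 (mem_univ _)⟩ :
      {B // B ∈ (kerPart g).parts})) ⟨?_, ?_⟩).symm
  · intro k k' h
    have := (kerPart_part_eq_iff g (s k) (s k')).1 (congrArg Subtype.val h)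
    rwa [hs, hs] at this
  · rintro ⟨B, hB⟩
    obtain ⟨x, hx⟩ := (kerPart g).nonempty_of_mem_parts hB
    refine ⟨g x, Subtype.ext ?_⟩
    have h1 : (kerPart g).part (s (g x)) = (kerPart g).part x :=
      (kerPart_part_eq_iff g _ _).2 (hs _)
    dsimp only
    rw [h1]
    exact (kerPart g).part_eq_of_mem hB hx

lemma blockE_apply (g : α → γ) (s : γ → α) (hs : ∀ k, g (s k) = k)
    {B : {B // B ∈ (kerPart g).parts}} {x : α} (hx : x ∈ B.1) :
    blockE g s hs B = g x := by
  rw [blockE, Equiv.symm_apply_eq]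
  refine Subtype.ext ?_
  have h1 : (kerPart g).part (s (g x)) = (kerPart g).part x :=
    (kerPart_part_eq_iff g _ _).2 (hs _)
  show B.val = (kerPart g).part (s (g x))
  rw [h1]
  exact ((kerPart g).part_eq_of_mem B.2 hx).symm

/-! ### Rectangle dimension facts -/

variable {n : ℕ}

lemma rect_part_card {π τ : Finpartition (univ : Finset (Fin n))}
    (hrect : IsRectangle π τ) {C : Finset (Fin n)} (hC : C ∈ τ.parts) :
    C.card = π.parts.card := by
  classical
  rw [Finset.card_eq_sum_card_fiberwise (f := fun x => π.part x) (t := π.parts)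
    (fun x _ => π.part_mem.2 (mem_univ x))]
  rw [Finset.sum_congr rfl (g := fun _ => 1) ?_, Finset.sum_const, smul_eq_mul, mul_one]
  intro B hB
  have hfil : C.filter (fun x => π.part x = B) = B ∩ C := by
    ext z
    simp only [Finset.mem_filter, Finset.mem_inter]
    constructor
    · rintro ⟨hz, hz'⟩
      exact ⟨hz' ▸ π.mem_part (mem_univ z), hz⟩
    · rintro ⟨hz, hz'⟩
      exact ⟨hz', π.part_eq_of_mem hB hz⟩
  rw [hfil]
  exact hrect B hB C hC

lemma rect_card_mul {π τ : Finpartition (univ : Finset (Fin n))}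
    (hrect : IsRectangle π τ) : τ.parts.card * π.parts.card = n := by
  classical
  have h1 := τ.sum_card_parts
  rw [Finset.sum_congr rfl (fun C hC => rect_part_card hrect hC)] at h1
  rw [Finset.sum_const, smul_eq_mul, Finset.card_univ, Fintype.card_fin] at h1
  exact h1


/-! ### Per-divisor constructions -/

section Divisor

/-- Normalized bijections. -/
def NType (n d : ℕ) (hn : 0 < n) : Type :=
  {f : Fin n ≃ ZMod d × Fin (n / d) // (f ⟨0, hn⟩).1 = 0}

def blockOf {n : ℕ} (P : Finpartition (univ : Finset (Fin n))) (x : Fin n) :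
    {B // B ∈ P.parts} :=
  ⟨P.part x, P.part_mem.2 (mem_univ x)⟩

variable {n d : ℕ}

lemma b_pos (hn : 0 < n) (hd : d ∣ n) (hd0 : 0 < d) : 0 < n / d :=
  Nat.div_pos (Nat.le_of_dvd hn hd) hd0

variable (f : Fin n ≃ ZMod d × Fin (n / d))

def pi1 : Finpartition (univ : Finset (Fin n)) := kerPart (fun x => (f x).1)

def pi2 : Finpartition (univ : Finset (Fin n)) := kerPart (fun x => (f x).2)

variable (hn : 0 < n) (hd : d ∣ n) (hd0 : 0 < d)

noncomputable def E1 : {B // B ∈ (pi1 f).parts} ≃ ZMod d :=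
  blockE (fun x => (f x).1) (fun k => f.symm (k, ⟨0, b_pos hn hd hd0⟩)) (fun k => by simp)

noncomputable def L2 : {B // B ∈ (pi2 f).parts} ≃ Fin (n / d) :=
  blockE (fun x => (f x).2) (fun j => f.symm (0, j)) (fun j => by simp)

lemma E1_apply {B : {B // B ∈ (pi1 f).parts}} {x : Fin n} (hx : x ∈ B.1) :
    E1 f hn hd hd0 B = (f x).1 :=
  blockE_apply _ _ _ hx

lemma L2_apply {B : {B // B ∈ (pi2 f).parts}} {x : Fin n} (hx : x ∈ B.1) :
    L2 f B = (f x).2 :=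
  blockE_apply _ _ _ hx

lemma pi1_card [NeZero d] (hn : 0 < n) (hd : d ∣ n) (hd0 : 0 < d) :
    (pi1 f).parts.card = d := by
  have := Fintype.card_congr (E1 f hn hd hd0)
  rwa [Fintype.card_coe, ZMod.card] at this

lemma pi2_card : (pi2 f).parts.card = n / d := by
  have := Fintype.card_congr (L2 f)
  rwa [Fintype.card_coe, Fintype.card_fin] at this

def rotE (d : ℕ) : Equiv.Perm (ZMod d) := Equiv.addRight 1

lemma rotE_pow (m : ℕ) (x : ZMod d) : ((rotE d) ^ m) x = x + m := by
  induction m with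
  | zero => simp
  | succ m ih =>
    rw [pow_succ', Equiv.Perm.mul_apply, ih]
    show x + (m : ZMod d) + 1 = x + ((m + 1 : ℕ) : ZMod d)
    push_cast
    ring

noncomputable def cF : Equiv.Perm {B // B ∈ (pi1 f).parts} :=
  (E1 f hn hd hd0).symm.permCongr (rotE d)

lemma cF_pow (m : ℕ) (B : {B // B ∈ (pi1 f).parts}) :
    ((cF f hn hd hd0) ^ m) B = (E1 f hn hd hd0).symm (E1 f hn hd hd0 B + m) := by
  induction m with
  | zero => simp
  | succ m ih =>
    rw [pow_succ', Equiv.Perm.mul_apply, ih, cF, Equiv.permCongr_apply]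
    simp only [Equiv.symm_symm, Equiv.apply_symm_apply]
    have hrot : rotE d (E1 f hn hd hd0 B + (m : ZMod d)) =
        E1 f hn hd hd0 B + (m : ZMod d) + 1 := rfl
    rw [hrot]
    congr 1
    push_cast
    ring

lemma cF_full [NeZero d] : IsFullCycle (cF f hn hd hd0) := by
  intro B B'
  refine ⟨(E1 f hn hd hd0 B' - E1 f hn hd hd0 B).val, ?_⟩
  rw [cF_pow, ZMod.natCast_rightInverse _, add_comm, sub_add_cancel,
    Equiv.symm_apply_apply]

lemma rect12 : IsRectangle (pi1 f) (pi2 f) := by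
  intro B hB C hC
  obtain ⟨x, hx⟩ := (pi1 f).nonempty_of_mem_parts hB
  obtain ⟨y, hy⟩ := (pi2 f).nonempty_of_mem_parts hC
  rw [Finset.card_eq_one]
  refine ⟨f.symm ((f x).1, (f y).2), ?_⟩
  ext z
  simp only [Finset.mem_inter, Finset.mem_singleton]
  rw [← (pi1 f).part_eq_of_mem hB hx, ← (pi2 f).part_eq_of_mem hC hy]
  rw [show ((pi1 f).part x : Finset (Fin n)) = (kerPart (fun x => (f x).1)).part x from rfl]
  rw [show ((pi2 f).part y : Finset (Fin n)) = (kerPart (fun x => (f x).2)).part y from rfl]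
  rw [mem_kerPart, mem_kerPart]
  constructor
  · rintro ⟨h1, h2⟩
    rw [Equiv.eq_symm_apply]
    exact Prod.ext h1.symm h2.symm
  · intro h
    rw [Equiv.eq_symm_apply] at h
    exact ⟨(congrArg Prod.fst h).symm, (congrArg Prod.snd h).symm⟩

noncomputable def lF : {B // B ∈ (pi2 f).parts} ≃ Fin ((pi2 f).parts.card) :=
  (L2 f).trans (finCongr (pi2_card f).symm)


/-! ### From a full cycle to coordinates -/

section Back

variable {n d : ℕ} {π : Finpartition (univ : Finset (Fin n))}
variable (c : Equiv.Perm {B // B ∈ π.parts})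

noncomputable def gC (d : ℕ) (x₀ : {B // B ∈ π.parts}) : ZMod d → {B // B ∈ π.parts} :=
  fun k => (c ^ k.val) x₀

lemma gC_natCast [NeZero d] (hc : IsFullCycle c) (hcard : π.parts.card = d)
    (x₀ : {B // B ∈ π.parts}) (m : ℕ) :
    gC c d x₀ ((m : ZMod d)) = (c ^ m) x₀ := by
  classical
  have hcb : Fintype.card {B // B ∈ π.parts} = d := by rw [Fintype.card_coe, hcard]
  have hper := (fullCycle_struct hc x₀).1
  show (c ^ ((m : ZMod d)).val) x₀ = (c ^ m) x₀
  rw [ZMod.val_natCast, ← hcb, ← hper]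

lemma gC_succ [NeZero d] (hc : IsFullCycle c) (hcard : π.parts.card = d)
    (x₀ : {B // B ∈ π.parts}) (k : ZMod d) :
    gC c d x₀ (k + 1) = c (gC c d x₀ k) := by
  classical
  have h1 : k + 1 = ((k.val + 1 : ℕ) : ZMod d) := by
    push_cast
    rw [ZMod.natCast_rightInverse k]
  have h2 : k = ((k.val : ℕ) : ZMod d) := (ZMod.natCast_rightInverse k).symm
  rw [h1, gC_natCast c hc hcard, pow_succ', Equiv.Perm.mul_apply]
  congr 1

lemma gC_bijective [NeZero d] (hc : IsFullCycle c) (hcard : π.parts.card = d)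
    (x₀ : {B // B ∈ π.parts}) : Function.Bijective (gC c d x₀) := by
  classical
  have hcb : Fintype.card {B // B ∈ π.parts} = d := by rw [Fintype.card_coe, hcard]
  obtain ⟨hper, hbij⟩ := fullCycle_struct hc x₀
  refine ⟨?_, ?_⟩
  · intro k k' h
    have hk : k.val < Fintype.card {B // B ∈ π.parts} := by rw [hcb]; exact ZMod.val_lt k
    have hk' : k'.val < Fintype.card {B // B ∈ π.parts} := by rw [hcb]; exact ZMod.val_lt k'
    have h2 := hbij.1 (a₁ := ⟨k.val, hk⟩) (a₂ := ⟨k'.val, hk'⟩) h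
    have h3 : k.val = k'.val := by simpa using congrArg Fin.val h2
    exact ZMod.val_injective d h3
  · intro B
    obtain ⟨i, hi⟩ := hbij.2 B
    refine ⟨((i : ℕ) : ZMod d), ?_⟩
    rw [gC_natCast c hc hcard]
    exact hi

/-- The normalized coordinate equivalence induced by a full cycle. -/
noncomputable def eC (hn : 0 < n) [NeZero d] (hc : IsFullCycle c)
    (hcard : π.parts.card = d) : {B // B ∈ π.parts} ≃ ZMod d :=
  (Equiv.ofBijective (gC c d (blockOf π ⟨0, hn⟩)) (gC_bijective c hc hcard _)).symm

lemma eC_symm_apply (hn : 0 < n) [NeZero d] (hc : IsFullCycle c)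
    (hcard : π.parts.card = d) (k : ZMod d) :
    (eC c hn hc hcard).symm k = gC c d (blockOf π ⟨0, hn⟩) k := by
  simp only [eC, Equiv.symm_symm]
  rfl

lemma eC_eq_iff (hn : 0 < n) [NeZero d] (hc : IsFullCycle c)
    (hcard : π.parts.card = d) (B : {B // B ∈ π.parts}) (k : ZMod d) :
    eC c hn hc hcard B = k ↔ gC c d (blockOf π ⟨0, hn⟩) k = B := by
  rw [← eC_symm_apply c hn hc hcard, Equiv.symm_apply_eq]
  exact eq_comm

lemma eC_zero (hn : 0 < n) [NeZero d] (hc : IsFullCycle c)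
    (hcard : π.parts.card = d) :
    eC c hn hc hcard (blockOf π ⟨0, hn⟩) = 0 := by
  rw [eC_eq_iff]
  show (c ^ (0 : ZMod d).val) _ = _
  rw [ZMod.val_zero, pow_zero]
  rfl

lemma c_eq_gC (hn : 0 < n) [NeZero d] (hc : IsFullCycle c)
    (hcard : π.parts.card = d) (B : {B // B ∈ π.parts}) :
    c B = gC c d (blockOf π ⟨0, hn⟩) (eC c hn hc hcard B + 1) := by
  rw [gC_succ c hc hcard, ← eC_symm_apply c hn hc hcard, Equiv.symm_apply_apply]

end Back

end Divisor

/-! ### The octopus type and the bijection -/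

section Main

def OctType (n : ℕ) : Type :=
  {x : Σ p : Finpartition (Finset.univ : Finset (Fin n)) ×
        Finpartition (Finset.univ : Finset (Fin n)),
      Equiv.Perm {B // B ∈ p.1.parts} × ({C // C ∈ p.2.parts} ≃ Fin p.2.parts.card) //
      IsRectangle x.1.1 x.1.2 ∧ IsFullCycle x.2.1}

def FiberT (n d : ℕ) : Type := {t : OctType n // t.1.1.1.parts.card = d}

variable {n d : ℕ}

lemma pi_card_dvd (t : OctType n) : t.1.1.1.parts.card ∣ n :=
  Dvd.intro_left _ (rect_card_mul t.2.1)

lemma pi_card_pos (t : OctType n) (hn : 0 < n) : 0 < t.1.1.1.parts.card := by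
  rcases Nat.eq_zero_or_pos t.1.1.1.parts.card with h | h
  · exfalso
    have := rect_card_mul t.2.1
    rw [h, mul_zero] at this
    omega
  · exact h

lemma tau_card_eq (t : OctType n) (hn : 0 < n) :
    t.1.1.2.parts.card = n / t.1.1.1.parts.card :=
  (Nat.div_eq_of_eq_mul_left (pi_card_pos t hn) (rect_card_mul t.2.1).symm).symm

noncomputable def Tmap (hn : 0 < n) (hd : d ∣ n) (hd0 : 0 < d) :
    NType n d hn → FiberT n d := fun F =>
  haveI : NeZero d := ⟨hd0.ne'⟩
  ⟨⟨⟨(pi1 F.1, pi2 F.1), (cF F.1 hn hd hd0, lF F.1)⟩,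
    ⟨rect12 F.1, cF_full F.1 hn hd hd0⟩⟩, pi1_card F.1 hn hd hd0⟩

section GmapDef

variable (hn : 0 < n) [NeZero d]
variable {π τ : Finpartition (univ : Finset (Fin n))}
variable (c : Equiv.Perm {B // B ∈ π.parts}) (ℓ : {C // C ∈ τ.parts} ≃ Fin τ.parts.card)
variable (hc : IsFullCycle c) (hcard : π.parts.card = d) (hτ : τ.parts.card = n / d)

noncomputable def Gfun : Fin n → ZMod d × Fin (n / d) :=
  fun x => (eC c hn hc hcard (blockOf π x), finCongr hτ (ℓ (blockOf τ x)))

lemma Gfun_bijective (hrect : IsRectangle π τ) (hd : d ∣ n) :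
    Function.Bijective (Gfun hn c ℓ hc hcard hτ) := by
  classical
  rw [Fintype.bijective_iff_injective_and_card]
  refine ⟨?_, ?_⟩
  · intro x y h
    rw [Prod.ext_iff] at h
    obtain ⟨h1, h2⟩ := h
    have hπ : π.part x = π.part y := by
      have := (eC c hn hc hcard).injective h1
      exact congrArg Subtype.val this
    have hτ' : τ.part x = τ.part y := by
      have := ((finCongr hτ).injective h2)
      have := ℓ.injective this
      exact congrArg Subtype.val this
    have hone := hrect (π.part x) (π.part_mem.2 (mem_univ x)) (τ.part x) (τ.part_mem.2 (mem_univ x))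
    rw [Finset.card_eq_one] at hone
    obtain ⟨a, ha⟩ := hone
    have hx : x ∈ π.part x ∩ τ.part x :=
      Finset.mem_inter.2 ⟨π.mem_part (mem_univ x), τ.mem_part (mem_univ x)⟩
    have hy : y ∈ π.part x ∩ τ.part x := by
      rw [hπ, hτ']
      exact Finset.mem_inter.2 ⟨π.mem_part (mem_univ y), τ.mem_part (mem_univ y)⟩
    rw [ha, Finset.mem_singleton] at hx hy
    rw [hx, hy]
  · rw [Fintype.card_fin, Fintype.card_prod, ZMod.card, Fintype.card_fin]
    exact (Nat.mul_div_cancel' hd).symm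

end GmapDef

noncomputable def Gmap (hn : 0 < n) (hd0 : 0 < d) : FiberT n d → NType n d hn := fun t =>
  haveI : NeZero d := ⟨hd0.ne'⟩
  ⟨Equiv.ofBijective
      (Gfun hn t.1.1.2.1 t.1.1.2.2 t.1.2.2 t.2 (by rw [tau_card_eq t.1 hn, t.2]))
      (Gfun_bijective hn _ _ _ _ _ t.1.2.1 (by rw [← t.2]; exact pi_card_dvd t.1)),
    eC_zero _ hn _ _⟩

lemma Gmap_Tmap (hn : 0 < n) (hd : d ∣ n) (hd0 : 0 < d) (F : NType n d hn) :
    Gmap hn hd0 (Tmap hn hd hd0 F) = F := by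
  haveI : NeZero d := ⟨hd0.ne'⟩
  obtain ⟨f, hf⟩ := F
  apply Subtype.ext
  apply Equiv.ext
  intro x
  show Gfun hn (cF f hn hd hd0) (lF f) _ _ _ x = f x
  refine Prod.ext ?_ ?_
  · show eC (cF f hn hd hd0) hn _ _ (blockOf (pi1 f) x) = (f x).1
    apply (eC_eq_iff _ _ _ _ _ _).2
    have h0 : E1 f hn hd hd0 (blockOf (pi1 f) ⟨0, hn⟩) = 0 := by
      rw [E1_apply f hn hd hd0 (B := blockOf (pi1 f) ⟨0, hn⟩)
        ((pi1 f).mem_part (mem_univ _)), hf]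
    show ((cF f hn hd hd0) ^ ((f x).1).val) (blockOf (pi1 f) ⟨0, hn⟩) = blockOf (pi1 f) x
    rw [cF_pow, h0, zero_add, ZMod.natCast_rightInverse _, Equiv.symm_apply_eq]
    exact (E1_apply f hn hd hd0 ((pi1 f).mem_part (mem_univ x))).symm
  · show finCongr _ (lF f (blockOf (pi2 f) x)) = (f x).2
    apply Fin.ext
    simp only [lF, Equiv.trans_apply, finCongr_apply, Fin.coe_cast]
    rw [L2_apply f ((pi2 f).mem_part (mem_univ x))]
    rfl

lemma mem_part_iff_map {P : Finpartition (univ : Finset (Fin n))} {γ : Type*}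
    (E : {B // B ∈ P.parts} ≃ γ) (x y : Fin n) :
    y ∈ P.part x ↔ E (blockOf P x) = E (blockOf P y) := by
  rw [P.mem_part_iff_part_eq_part (mem_univ y) (mem_univ x), EmbeddingLike.apply_eq_iff_eq,
    Subtype.ext_iff]
  exact eq_comm

lemma Gmap_injective (hn : 0 < n) (hd0 : 0 < d) :
    Function.Injective (Gmap (n := n) (d := d) hn hd0) := by
  haveI : NeZero d := ⟨hd0.ne'⟩
  rintro ⟨⟨⟨⟨π, τ⟩, c, ℓ⟩, hrect, hc⟩, hcard⟩ ⟨⟨⟨⟨π', τ'⟩, c', ℓ'⟩, hrect', hc'⟩, hcard'⟩ h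
  have hfun := congrArg (fun F : NType n d hn => (F.1 : Fin n → ZMod d × Fin (n / d))) h
  have hτ1 : τ.parts.card = n / d := by
    rw [tau_card_eq (⟨⟨(π, τ), (c, ℓ)⟩, hrect, hc⟩ : OctType n) hn]
    show n / π.parts.card = n / d
    rw [hcard]
  have hτ2 : τ'.parts.card = n / d := by
    rw [tau_card_eq (⟨⟨(π', τ'), (c', ℓ')⟩, hrect', hc'⟩ : OctType n) hn]
    show n / π'.parts.card = n / d
    rw [hcard']
  have key1 : ∀ x, eC c hn hc hcard (blockOf π x) = eC c' hn hc' hcard' (blockOf π' x) :=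
    fun x => congrArg Prod.fst (congrFun hfun x)
  have key2 : ∀ x, finCongr hτ1 (ℓ (blockOf τ x)) = finCongr hτ2 (ℓ' (blockOf τ' x)) :=
    fun x => congrArg Prod.snd (congrFun hfun x)
  have hπeq : π = π' := by
    apply part_ext
    intro x
    ext y
    rw [mem_part_iff_map (eC c hn hc hcard), mem_part_iff_map (eC c' hn hc' hcard'),
      key1, key1]
  have hτeq : τ = τ' := by
    apply part_ext
    intro x
    ext y
    rw [mem_part_iff_map (ℓ.trans (finCongr hτ1)), mem_part_iff_map (ℓ'.trans (finCongr hτ2))]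
    show finCongr hτ1 (ℓ (blockOf τ x)) = finCongr hτ1 (ℓ (blockOf τ y)) ↔ _
    rw [key2, key2]
    rfl
  subst hπeq
  subst hτeq
  have hEeq : eC c hn hc hcard = eC c' hn hc' hcard' := by
    apply Equiv.ext
    intro B
    obtain ⟨x, hx⟩ := π.nonempty_of_mem_parts B.2
    have hBx : B = blockOf π x := Subtype.ext (π.part_eq_of_mem B.2 hx).symm
    rw [hBx]
    exact key1 x
  have hgeq : ∀ k, gC c d (blockOf π ⟨0, hn⟩) k = gC c' d (blockOf π ⟨0, hn⟩) k := fun k => by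
    rw [← eC_symm_apply c hn hc hcard, ← eC_symm_apply c' hn hc' hcard', hEeq]
  have hcc : c = c' := by
    apply Equiv.ext
    intro B
    rw [c_eq_gC c hn hc hcard, c_eq_gC c' hn hc' hcard', hEeq, hgeq]
  have hll : ℓ = ℓ' := by
    apply Equiv.ext
    intro C
    obtain ⟨x, hx⟩ := τ.nonempty_of_mem_parts C.2
    have hCx : C = blockOf τ x := Subtype.ext (τ.part_eq_of_mem C.2 hx).symm
    rw [hCx]
    have := key2 x
    apply Fin.ext
    have hv := congrArg Fin.val this
    simpa using hv
  subst hcc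
  subst hll
  rfl

end Main

/-! ### Counting -/

section Count

variable {n d : ℕ}

noncomputable def normEquiv (hn : 0 < n) [NeZero d] :
    (Fin n ≃ ZMod d × Fin (n / d)) ≃ NType n d hn × ZMod d where
  toFun f := (⟨f.trans (Equiv.prodCongr (Equiv.addRight (-(f ⟨0, hn⟩).1)) (Equiv.refl _)),
      by simp⟩, (f ⟨0, hn⟩).1)
  invFun p := p.1.1.trans (Equiv.prodCongr (Equiv.addRight p.2) (Equiv.refl _))
  left_inv f := by
    ext x
    · simp
    · simp
  right_inv p := by
    obtain ⟨⟨g, hg⟩, r⟩ := p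
    have h0 : ((g.trans (Equiv.prodCongr (Equiv.addRight r) (Equiv.refl _))) ⟨0, hn⟩).1 = r := by
      simp [hg]
    refine Prod.ext ?_ ?_
    · apply Subtype.ext
      apply Equiv.ext
      intro x
      refine Prod.ext ?_ ?_
      · show (g x).1 + r +
            -((g.trans (Equiv.prodCongr (Equiv.addRight r) (Equiv.refl (Fin (n / d))))) ⟨0, hn⟩).1
            = (g x).1
        rw [h0]
        ring
      · rfl
    · exact h0

lemma card_NType (hn : 0 < n) (hd : d ∣ n) (hd0 : 0 < d) :
    Nat.card (NType n d hn) * d = n.factorial := by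
  haveI : NeZero d := ⟨hd0.ne'⟩
  have h1 : Nat.card (Fin n ≃ ZMod d × Fin (n / d)) = Nat.card (NType n d hn) * d := by
    rw [Nat.card_congr (normEquiv hn), Nat.card_prod, Nat.card_zmod]
  rw [← h1, Nat.card_eq_fintype_card, Fintype.card_equiv (Fintype.equivOfCardEq ?_),
    Fintype.card_fin]
  rw [Fintype.card_fin, Fintype.card_prod, ZMod.card, Fintype.card_fin]
  exact (Nat.mul_div_cancel' hd).symm

lemma card_FiberT (hn : 0 < n) (hd : d ∣ n) (hd0 : 0 < d) :
    Nat.card (FiberT n d) = (n / d) * (n - 1).factorial := by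
  have hb : Nat.card (FiberT n d) = Nat.card (NType n d hn) :=
    Nat.card_eq_of_bijective (Gmap hn hd0)
      ⟨Gmap_injective hn hd0, fun F => ⟨Tmap hn hd hd0 F, Gmap_Tmap hn hd hd0 F⟩⟩
  have h2 := card_NType hn hd hd0
  have h3 : ((n / d) * (n - 1).factorial) * d = n.factorial := by
    have h4 : n / d * (n - 1).factorial * d = (n / d * d) * (n - 1).factorial := by ring
    rw [h4, Nat.div_mul_cancel hd, Nat.mul_factorial_pred hn.ne']
  rw [hb]
  exact Nat.eq_of_mul_eq_mul_right hd0 (h2.trans h3.symm)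

end Count

instance {n : ℕ} : Finite (OctType n) :=
  Subtype.finite

instance {n d : ℕ} : Finite (FiberT n d) :=
  Subtype.finite

lemma nat_card_sigma {ι : Type*} [Fintype ι] (f : ι → Type*) [∀ i, Finite (f i)] :
    Nat.card (Σ i, f i) = ∑ i, Nat.card (f i) := by
  letI : ∀ i, Fintype (f i) := fun i => Fintype.ofFinite _
  rw [Nat.card_eq_fintype_card, Fintype.card_sigma]
  exact Finset.sum_congr rfl fun i _ => (Nat.card_eq_fintype_card).symm

end RegOct

open RegOct in
/-- The number of triples `((π, τ), c, ℓ)` with `(π, τ)` a rectangle on an `n`-set,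
`c` a full cyclic permutation of the blocks of `π` and `ℓ` a linear order (an
enumeration) of the blocks of `τ`, equals `σ(n)·(n−1)!`. -/
theorem card_regular_octopuses (n : ℕ) (hn : 0 < n) :
    Nat.card {x : Σ p : Finpartition (Finset.univ : Finset (Fin n)) ×
          Finpartition (Finset.univ : Finset (Fin n)),
        Equiv.Perm {B // B ∈ p.1.parts} × ({C // C ∈ p.2.parts} ≃ Fin p.2.parts.card) //
        IsRectangle x.1.1 x.1.2 ∧ IsFullCycle x.2.1} =
      (∑ d ∈ n.divisors, d) * (n - 1).factorial := by
  classical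
  show Nat.card (OctType n) = _
  have e1 : OctType n ≃ Σ dd : {d // d ∈ n.divisors},
      {t : OctType n //
        (⟨t.1.1.1.parts.card, Nat.mem_divisors.2 ⟨pi_card_dvd t, hn.ne'⟩⟩ :
          {d // d ∈ n.divisors}) = dd} :=
    (Equiv.sigmaFiberEquiv _).symm
  have e2 : ∀ dd : {d // d ∈ n.divisors},
      {t : OctType n //
        (⟨t.1.1.1.parts.card, Nat.mem_divisors.2 ⟨pi_card_dvd t, hn.ne'⟩⟩ :
          {d // d ∈ n.divisors}) = dd} ≃ FiberT n dd.val :=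
    fun dd => Equiv.subtypeEquivRight (fun t => by
      rw [Subtype.ext_iff])
  rw [Nat.card_congr e1, nat_card_sigma]
  calc ∑ dd : {d // d ∈ n.divisors}, Nat.card
        {t : OctType n //
          (⟨t.1.1.1.parts.card, Nat.mem_divisors.2 ⟨pi_card_dvd t, hn.ne'⟩⟩ :
            {d // d ∈ n.divisors}) = dd}
      = ∑ dd : {d // d ∈ n.divisors}, (n / dd.val) * (n - 1).factorial := by
        refine Finset.sum_congr rfl fun dd _ => ?_
        rw [Nat.card_congr (e2 dd),
          card_FiberT hn (Nat.mem_divisors.1 dd.2).1 (Nat.pos_of_mem_divisors dd.2)]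
    _ = ∑ d ∈ n.divisors, (n / d) * (n - 1).factorial :=
        Finset.sum_coe_sort n.divisors (fun d => (n / d) * (n - 1).factorial)
    _ = (∑ d ∈ n.divisors, n / d) * (n - 1).factorial := (Finset.sum_mul _ _ _).symm
    _ = (∑ d ∈ n.divisors, d) * (n - 1).factorial := by
        congr 1
        exact Nat.sum_div_divisors n id
end

section
/- For every positive integer n, the number of quadruples ((π, τ), ℓ₁, ℓ₂), where (π, τ) is a rectangle on an n-element set, ℓ₁ is a linear order on the set of blocks of π, and ℓ₂ is a linear order on the set of blocks of τ, equals d(n) · n!, where d(n) is the number of positive divisors of n. -/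
open Finset

namespace CardOrderedRect

variable {n k m : ℕ}

/-- The `i`-th "row" of the bijection `f`. -/
def rowFinset (f : Fin k × Fin m ≃ Fin n) (i : Fin k) : Finset (Fin n) :=
  univ.filter fun x => (f.symm x).1 = i

lemma mem_rowFinset {f : Fin k × Fin m ≃ Fin n} {i : Fin k} {x : Fin n} :
    x ∈ rowFinset f i ↔ (f.symm x).1 = i := by simp [rowFinset]

lemma rowFinset_injective (f : Fin k × Fin m ≃ Fin n) (hm : 0 < m) :
    Function.Injective (rowFinset f) := by
  intro i i' h
  have hx : f (i, ⟨0, hm⟩) ∈ rowFinset f i := by simp [mem_rowFinset]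
  rw [h] at hx
  simpa [mem_rowFinset] using hx

/-- The partition of `Fin n` into the rows of `f`. -/
def rowPartition (f : Fin k × Fin m ≃ Fin n) (hm : 0 < m) :
    Finpartition (univ : Finset (Fin n)) where
  parts := univ.image (rowFinset f)
  supIndep := by
    rw [Finset.supIndep_iff_pairwiseDisjoint]
    intro s hs t ht hst
    simp only [coe_image, Set.mem_image] at hs ht
    obtain ⟨i, -, rfl⟩ := hs
    obtain ⟨i', -, rfl⟩ := ht
    show Disjoint (rowFinset f i) (rowFinset f i')
    rw [Finset.disjoint_left]
    intro x hx hx'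
    rw [mem_rowFinset] at hx hx'
    exact hst (by rw [← hx, ← hx'])
  sup_parts := by
    apply le_antisymm
    · exact Finset.sup_le fun s _ => le_top
    · intro x _
      rw [Finset.mem_sup]
      exact ⟨rowFinset f (f.symm x).1, mem_image_of_mem _ (mem_univ _),
        mem_rowFinset.2 rfl⟩
  bot_notMem := by
    simp only [bot_eq_empty, mem_image]
    rintro ⟨i, -, h⟩
    have : f (i, ⟨0, hm⟩) ∈ rowFinset f i := mem_rowFinset.2 (by simp)
    rw [h] at this
    exact absurd this (notMem_empty _)

lemma mem_rowPartition {f : Fin k × Fin m ≃ Fin n} {hm : 0 < m} {s : Finset (Fin n)} :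
    s ∈ (rowPartition f hm).parts ↔ ∃ i, rowFinset f i = s := by
  simp [rowPartition]

lemma card_rowPartition (f : Fin k × Fin m ≃ Fin n) (hm : 0 < m) :
    (rowPartition f hm).parts.card = k := by
  show (univ.image (rowFinset f)).card = k
  rw [Finset.card_image_of_injective _ (rowFinset_injective f hm), card_univ,
    Fintype.card_fin]

lemma part_rowPartition (f : Fin k × Fin m ≃ Fin n) (hm : 0 < m) (x : Fin n) :
    (rowPartition f hm).part x = rowFinset f (f.symm x).1 :=
  Finpartition.part_eq_of_mem _ (mem_rowPartition.2 ⟨_, rfl⟩) (mem_rowFinset.2 rfl)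

/-- The canonical enumeration of the rows. -/
noncomputable def rowEquiv (f : Fin k × Fin m ≃ Fin n) (hm : 0 < m) :
    {B // B ∈ (rowPartition f hm).parts} ≃ Fin (rowPartition f hm).parts.card :=
  ((Equiv.ofBijective
      (fun i : Fin k => (⟨rowFinset f i, mem_rowPartition.2 ⟨i, rfl⟩⟩ :
        {B // B ∈ (rowPartition f hm).parts}))
      (by
        constructor
        · intro i i' h
          exact rowFinset_injective f hm (congrArg Subtype.val h)
        · rintro ⟨s, hs⟩
          obtain ⟨i, hi⟩ := mem_rowPartition.1 hs
          exact ⟨i, Subtype.ext hi⟩)).symm).trans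
    (finCongr (card_rowPartition f hm).symm)

lemma rowEquiv_apply_val (f : Fin k × Fin m ≃ Fin n) (hm : 0 < m) (i : Fin k)
    (h : rowFinset f i ∈ (rowPartition f hm).parts) :
    ((rowEquiv f hm ⟨rowFinset f i, h⟩ : Fin _) : ℕ) = (i : ℕ) := by
  have : (⟨rowFinset f i, h⟩ : {B // B ∈ (rowPartition f hm).parts}) =
      (fun i : Fin k => (⟨rowFinset f i, mem_rowPartition.2 ⟨i, rfl⟩⟩ :
        {B // B ∈ (rowPartition f hm).parts})) i := rfl
  rw [rowEquiv, Equiv.trans_apply, this, finCongr_apply, Fin.val_cast]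
  exact congrArg Fin.val ((Equiv.ofBijective _ _).symm_apply_apply i)

lemma rowEquiv_part_val (f : Fin k × Fin m ≃ Fin n) (hm : 0 < m) (x : Fin n)
    (hx : (rowPartition f hm).part x ∈ (rowPartition f hm).parts) :
    ((rowEquiv f hm ⟨(rowPartition f hm).part x, hx⟩ : Fin _) : ℕ) = ((f.symm x).1 : ℕ) := by
  have h := part_rowPartition f hm x
  have : (⟨(rowPartition f hm).part x, hx⟩ :
      {B // B ∈ (rowPartition f hm).parts}) =
      ⟨rowFinset f (f.symm x).1, h ▸ hx⟩ :=
    Subtype.ext h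
  rw [this, rowEquiv_apply_val]

/-- Swap the two coordinates. -/
def fswap (f : Fin k × Fin m ≃ Fin n) : Fin m × Fin k ≃ Fin n :=
  (Equiv.prodComm _ _).trans f

lemma fswap_symm_fst (f : Fin k × Fin m ≃ Fin n) (x : Fin n) :
    ((fswap f).symm x).1 = (f.symm x).2 := rfl

/-- The index type: a divisor together with a bijection. -/
abbrev D (n : ℕ) := Σ d : {d // d ∈ n.divisors}, (Fin d × Fin (n / d) ≃ Fin n)

abbrev T (n : ℕ) := {x : Σ p : Finpartition (Finset.univ : Finset (Fin n)) ×
          Finpartition (Finset.univ : Finset (Fin n)),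
        ({B // B ∈ p.1.parts} ≃ Fin p.1.parts.card) ×
          ({C // C ∈ p.2.parts} ≃ Fin p.2.parts.card) //
        IsRectangle x.1.1 x.1.2}

lemma D_dpos (hn : 0 < n) (a : D n) : 0 < (a.1 : ℕ) :=
  Nat.pos_of_mem_divisors a.1.2

lemma D_mpos (hn : 0 < n) (a : D n) : 0 < n / (a.1 : ℕ) :=
  Nat.div_pos (Nat.le_of_dvd hn (Nat.dvd_of_mem_divisors a.1.2)) (D_dpos hn a)

lemma inter_rowFinset (f : Fin k × Fin m ≃ Fin n) (i : Fin k) (j : Fin m) :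
    rowFinset f i ∩ rowFinset (fswap f) j = {f (i, j)} := by
  ext x
  simp only [mem_inter, mem_rowFinset, fswap_symm_fst, mem_singleton]
  constructor
  · rintro ⟨h1, h2⟩
    have : f.symm x = (i, j) := Prod.ext h1 h2
    have := congrArg f this
    simpa using this
  · rintro rfl
    simp

noncomputable def Psi (hn : 0 < n) (a : D n) : T n :=
  ⟨⟨⟨rowPartition a.2 (D_mpos hn a), rowPartition (fswap a.2) (D_dpos hn a)⟩,
    rowEquiv a.2 (D_mpos hn a), rowEquiv (fswap a.2) (D_dpos hn a)⟩, by
    intro B hB C hC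
    obtain ⟨i, rfl⟩ := (mem_rowPartition (hm := D_mpos hn a)).1 hB
    obtain ⟨j, rfl⟩ := (mem_rowPartition (hm := D_dpos hn a)).1 hC
    rw [inter_rowFinset]
    simp⟩

lemma T_eq {p q : Finpartition (Finset.univ : Finset (Fin n)) ×
      Finpartition (Finset.univ : Finset (Fin n))}
    {s : ({B // B ∈ p.1.parts} ≃ Fin p.1.parts.card) ×
      ({C // C ∈ p.2.parts} ≃ Fin p.2.parts.card)}
    {t : ({B // B ∈ q.1.parts} ≃ Fin q.1.parts.card) ×
      ({C // C ∈ q.2.parts} ≃ Fin q.2.parts.card)}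
    {hs : IsRectangle p.1 p.2} {ht : IsRectangle q.1 q.2} (hpq : p = q)
    (h1 : ∀ B (hB : B ∈ p.1.parts) (hB' : B ∈ q.1.parts),
      ((s.1 ⟨B, hB⟩ : Fin _) : ℕ) = ((t.1 ⟨B, hB'⟩ : Fin _) : ℕ))
    (h2 : ∀ C (hC : C ∈ p.2.parts) (hC' : C ∈ q.2.parts),
      ((s.2 ⟨C, hC⟩ : Fin _) : ℕ) = ((t.2 ⟨C, hC'⟩ : Fin _) : ℕ)) :
    (⟨⟨p, s⟩, hs⟩ : T n) = ⟨⟨q, t⟩, ht⟩ := by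
  subst hpq
  have hst : s = t := by
    refine Prod.ext ?_ ?_
    · exact Equiv.ext fun B => Fin.ext (by simpa using h1 B.1 B.2 B.2)
    · exact Equiv.ext fun C => Fin.ext (by simpa using h2 C.1 C.2 C.2)
  subst hst
  rfl

lemma Psi_injective (hn : 0 < n) : Function.Injective (Psi (n := n) hn) := by
  intro a b h
  have hd : (a.1 : ℕ) = (b.1 : ℕ) := by
    have := congrArg (fun y : T n => y.1.1.1.parts.card) h
    simpa only [Psi, card_rowPartition] using this
  have hrow : ∀ x : Fin n, ((a.2.symm x).1 : ℕ) = ((b.2.symm x).1 : ℕ) := by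
    intro x
    have := congrArg (fun y : T n =>
      ((y.1.2.1 ⟨y.1.1.1.part x, y.1.1.1.part_mem.2 (mem_univ x)⟩ : Fin _) : ℕ)) h
    rw [← rowEquiv_part_val a.2 (D_mpos hn a) x ((rowPartition a.2 (D_mpos hn a)).part_mem.2 (mem_univ x)),
      ← rowEquiv_part_val b.2 (D_mpos hn b) x ((rowPartition b.2 (D_mpos hn b)).part_mem.2 (mem_univ x))]
    exact this
  have hcol : ∀ x : Fin n, ((a.2.symm x).2 : ℕ) = ((b.2.symm x).2 : ℕ) := by
    intro x
    have := congrArg (fun y : T n =>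
      ((y.1.2.2 ⟨y.1.1.2.part x, y.1.1.2.part_mem.2 (mem_univ x)⟩ : Fin _) : ℕ)) h
    rw [← fswap_symm_fst, ← fswap_symm_fst,
      ← rowEquiv_part_val (fswap a.2) (D_dpos hn a) x ((rowPartition (fswap a.2) (D_dpos hn a)).part_mem.2 (mem_univ x)),
      ← rowEquiv_part_val (fswap b.2) (D_dpos hn b) x ((rowPartition (fswap b.2) (D_dpos hn b)).part_mem.2 (mem_univ x))]
    exact this
  obtain ⟨⟨d, hd1⟩, f⟩ := a
  obtain ⟨⟨d', hd2⟩, f'⟩ := b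
  simp only at hd hrow hcol
  have hdd : d = d' := hd
  subst hdd
  have hff : f = f' := by
    have hsymm : f.symm = f'.symm :=
      Equiv.ext fun x => Prod.ext (Fin.ext (hrow x)) (Fin.ext (hcol x))
    have := congrArg Equiv.symm hsymm
    simpa using this
  subst hff
  rfl

lemma Psi_surjective (hn : 0 < n) : Function.Surjective (Psi (n := n) hn) := by
  rintro ⟨⟨⟨π, τ⟩, e₁, e₂⟩, hrect⟩
  classical
  have hmemπ : ∀ x : Fin n, π.part x ∈ π.parts := fun x => π.part_mem.2 (mem_univ x)
  have hmemτ : ∀ x : Fin n, τ.part x ∈ τ.parts := fun x => τ.part_mem.2 (mem_univ x)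
  set v : Fin n → Fin π.parts.card × Fin τ.parts.card := fun x =>
    (e₁ ⟨π.part x, hmemπ x⟩, e₂ ⟨τ.part x, hmemτ x⟩) with hv
  have hvinj : Function.Injective v := by
    intro x y hxy
    have h1 : π.part x = π.part y :=
      congrArg Subtype.val (e₁.injective (congrArg Prod.fst hxy))
    have h2 : τ.part x = τ.part y :=
      congrArg Subtype.val (e₂.injective (congrArg Prod.snd hxy))
    obtain ⟨a, ha⟩ := Finset.card_eq_one.1 (hrect _ (hmemπ x) _ (hmemτ x))
    have hx : x ∈ π.part x ∩ τ.part x :=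
      mem_inter.2 ⟨π.mem_part (mem_univ x), τ.mem_part (mem_univ x)⟩
    have hy : y ∈ π.part x ∩ τ.part x := by
      rw [h1, h2]
      exact mem_inter.2 ⟨π.mem_part (mem_univ y), τ.mem_part (mem_univ y)⟩
    rw [ha, mem_singleton] at hx hy
    rw [hx, hy]
  have hvsurj : Function.Surjective v := by
    rintro ⟨i, j⟩
    obtain ⟨a, ha⟩ := Finset.card_eq_one.1 (hrect _ (e₁.symm i).2 _ (e₂.symm j).2)
    have haB : a ∈ (e₁.symm i : {B // B ∈ π.parts}).1 ∧
        a ∈ (e₂.symm j : {C // C ∈ τ.parts}).1 := by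
      have : a ∈ (e₁.symm i).1 ∩ (e₂.symm j).1 := ha ▸ mem_singleton_self a
      exact mem_inter.1 this
    refine ⟨a, ?_⟩
    have h1 : π.part a = (e₁.symm i).1 := π.part_eq_of_mem (e₁.symm i).2 haB.1
    have h2 : τ.part a = (e₂.symm j).1 := τ.part_eq_of_mem (e₂.symm j).2 haB.2
    simp only [hv]
    refine Prod.ext ?_ ?_
    · show e₁ ⟨π.part a, hmemπ a⟩ = i
      rw [show (⟨π.part a, hmemπ a⟩ : {B // B ∈ π.parts}) = e₁.symm i from Subtype.ext h1]
      exact e₁.apply_symm_apply i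
    · show e₂ ⟨τ.part a, hmemτ a⟩ = j
      rw [show (⟨τ.part a, hmemτ a⟩ : {C // C ∈ τ.parts}) = e₂.symm j from Subtype.ext h2]
      exact e₂.apply_symm_apply j
  have hbij : Function.Bijective v := ⟨hvinj, hvsurj⟩
  have hcardn : π.parts.card * τ.parts.card = n := by
    have := Fintype.card_of_bijective hbij
    simpa using this.symm
  have hK0 : 0 < π.parts.card := by
    rcases Nat.eq_zero_or_pos π.parts.card with h | h
    · rw [h, zero_mul] at hcardn; omega
    · exact h
  have hkdvd : π.parts.card ∣ n := ⟨τ.parts.card, hcardn.symm⟩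
  have hkmem : π.parts.card ∈ n.divisors := Nat.mem_divisors.2 ⟨hkdvd, hn.ne'⟩
  have hmk : n / π.parts.card = τ.parts.card :=
    Nat.div_eq_of_eq_mul_left hK0 ((mul_comm _ _ |>.trans hcardn).symm)
  set u : Fin π.parts.card × Fin (n / π.parts.card) ≃ Fin n :=
    ((Equiv.refl (Fin π.parts.card)).prodCongr (finCongr hmk)).trans (Equiv.ofBijective v hbij).symm
    with hu
  have husymm : ∀ x : Fin n, u.symm x = ((v x).1, finCongr hmk.symm (v x).2) := by
    intro x
    simp only [hu, Equiv.symm_trans_apply, Equiv.symm_symm, Equiv.ofBijective_apply,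
      Equiv.prodCongr_symm, Equiv.prodCongr_apply, Equiv.refl_symm, finCongr_symm]
    rfl
  have hu1 : ∀ x : Fin n, ((u.symm x).1 : ℕ) = ((e₁ ⟨π.part x, hmemπ x⟩ : Fin π.parts.card) : ℕ) := by
    intro x; rw [husymm x]
  have hu2 : ∀ x : Fin n, ((u.symm x).2 : ℕ) = ((e₂ ⟨τ.part x, hmemτ x⟩ : Fin τ.parts.card) : ℕ) := by
    intro x; rw [husymm x]; simp; rfl
  have hMpos : 0 < n / π.parts.card := by
    rw [hmk]
    rcases Nat.eq_zero_or_pos τ.parts.card with h | h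
    · rw [h, mul_zero] at hcardn; omega
    · exact h
  -- row finsets are the blocks of π
  have hrowu : ∀ i : Fin π.parts.card, rowFinset u i = (e₁.symm i : {B // B ∈ π.parts}).1 := by
    intro i
    ext x
    rw [mem_rowFinset]
    constructor
    · intro hx
      have : ((e₁ ⟨π.part x, hmemπ x⟩ : Fin π.parts.card) : ℕ) = (i : ℕ) := by
        rw [← hu1 x, hx]
      have h2 : e₁ ⟨π.part x, hmemπ x⟩ = i := Fin.ext this
      have h3 : (⟨π.part x, hmemπ x⟩ : {B // B ∈ π.parts}) = e₁.symm i := by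
        rw [← h2, Equiv.symm_apply_apply]
      have : π.part x = (e₁.symm i).1 := congrArg Subtype.val h3
      rw [← this]
      exact π.mem_part (mem_univ x)
    · intro hx
      have h3 : π.part x = (e₁.symm i).1 := π.part_eq_of_mem (e₁.symm i).2 hx
      apply Fin.ext
      rw [hu1 x]
      have : (⟨π.part x, hmemπ x⟩ : {B // B ∈ π.parts}) = e₁.symm i := Subtype.ext h3
      rw [this, Equiv.apply_symm_apply]
  have hcolu : ∀ j : Fin (n / π.parts.card),
      rowFinset (fswap u) j = (e₂.symm (finCongr hmk j) : {C // C ∈ τ.parts}).1 := by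
    intro j
    ext x
    rw [mem_rowFinset, fswap_symm_fst]
    constructor
    · intro hx
      have : ((e₂ ⟨τ.part x, hmemτ x⟩ : Fin τ.parts.card) : ℕ) = ((finCongr hmk j : Fin τ.parts.card) : ℕ) := by
        rw [← hu2 x, hx]; rfl
      have h2 : e₂ ⟨τ.part x, hmemτ x⟩ = finCongr hmk j := Fin.ext this
      have h3 : (⟨τ.part x, hmemτ x⟩ : {C // C ∈ τ.parts}) = e₂.symm (finCongr hmk j) := by
        rw [← h2, Equiv.symm_apply_apply]
      have : τ.part x = (e₂.symm (finCongr hmk j)).1 := congrArg Subtype.val h3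
      rw [← this]
      exact τ.mem_part (mem_univ x)
    · intro hx
      have h3 : τ.part x = (e₂.symm (finCongr hmk j)).1 :=
        τ.part_eq_of_mem (e₂.symm (finCongr hmk j)).2 hx
      apply Fin.ext
      rw [hu2 x]
      have : (⟨τ.part x, hmemτ x⟩ : {C // C ∈ τ.parts}) = e₂.symm (finCongr hmk j) :=
        Subtype.ext h3
      show ((e₂ ⟨τ.part x, hmemτ x⟩ : Fin τ.parts.card) : ℕ) = (j : ℕ)
      rw [this, Equiv.apply_symm_apply]
      rfl
  have hπ : rowPartition u hMpos = π := by
    apply Finpartition.ext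
    ext S
    rw [mem_rowPartition]
    constructor
    · rintro ⟨i, rfl⟩
      rw [hrowu i]
      exact (e₁.symm i).2
    · intro hS
      refine ⟨e₁ ⟨S, hS⟩, ?_⟩
      rw [hrowu, Equiv.symm_apply_apply]
  have hτ : rowPartition (fswap u) hK0 = τ := by
    apply Finpartition.ext
    ext S
    rw [mem_rowPartition]
    constructor
    · rintro ⟨j, rfl⟩
      rw [hcolu j]
      exact (e₂.symm (finCongr hmk j)).2
    · intro hS
      refine ⟨finCongr hmk.symm (e₂ ⟨S, hS⟩), ?_⟩
      rw [hcolu]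
      congr 1
      rw [finCongr_apply, finCongr_apply, Fin.cast_cast, Fin.cast_eq_self,
        Equiv.symm_apply_apply]
  refine ⟨⟨⟨π.parts.card, hkmem⟩, u⟩, ?_⟩
  apply T_eq (Prod.ext hπ hτ)
  · intro B hB hB'
    obtain ⟨x, hxB⟩ := π.nonempty_of_mem_parts hB'
    have hp1 : (rowPartition u hMpos).part x = B := by
      rw [hπ]; exact π.part_eq_of_mem hB' hxB
    have hp2 : π.part x = B := π.part_eq_of_mem hB' hxB
    have e1 : (⟨B, hB⟩ : {B // B ∈ (rowPartition u hMpos).parts}) =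
        ⟨(rowPartition u hMpos).part x, hp1 ▸ hB⟩ := Subtype.ext hp1.symm
    have e2 : (⟨B, hB'⟩ : {B // B ∈ π.parts}) = ⟨π.part x, hmemπ x⟩ := Subtype.ext hp2.symm
    rw [e1, e2, rowEquiv_part_val, ← hu1 x]
  · intro C hC hC'
    obtain ⟨x, hxC⟩ := τ.nonempty_of_mem_parts hC'
    have hp1 : (rowPartition (fswap u) hK0).part x = C := by
      rw [hτ]; exact τ.part_eq_of_mem hC' hxC
    have hp2 : τ.part x = C := τ.part_eq_of_mem hC' hxC
    have e1 : (⟨C, hC⟩ : {C // C ∈ (rowPartition (fswap u) hK0).parts}) =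
        ⟨(rowPartition (fswap u) hK0).part x, hp1 ▸ hC⟩ := Subtype.ext hp1.symm
    have e2 : (⟨C, hC'⟩ : {C // C ∈ τ.parts}) = ⟨τ.part x, hmemτ x⟩ := Subtype.ext hp2.symm
    rw [e1, e2, rowEquiv_part_val, fswap_symm_fst, ← hu2 x]

lemma card_D (hn : 0 < n) : Nat.card (D n) = n.divisors.card * n.factorial := by
  rw [Nat.card_eq_fintype_card, Fintype.card_sigma]
  have hterm : ∀ d : {d // d ∈ n.divisors},
      Fintype.card (Fin (d : ℕ) × Fin (n / (d : ℕ)) ≃ Fin n) = n.factorial := by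
    rintro ⟨d, hd⟩
    have h : d * (n / d) = n := Nat.mul_div_cancel' (Nat.dvd_of_mem_divisors hd)
    rw [Fintype.card_equiv (finProdFinEquiv.trans (finCongr h))]
    simp [h]
  rw [Finset.sum_congr rfl fun d _ => hterm d, Finset.sum_const, smul_eq_mul,
    Finset.card_univ, Fintype.card_coe]

end CardOrderedRect

/-- The number of triples `((π, τ), ℓ₁, ℓ₂)` with `(π, τ)` a rectangle on an `n`-set
and `ℓ₁`, `ℓ₂` linear orders (enumerations) of the blocks of `π` and of `τ`
respectively, equals `d(n)·n!`. -/
theorem card_ordered_rectangles (n : ℕ) (hn : 0 < n) :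
    Nat.card {x : Σ p : Finpartition (Finset.univ : Finset (Fin n)) ×
          Finpartition (Finset.univ : Finset (Fin n)),
        ({B // B ∈ p.1.parts} ≃ Fin p.1.parts.card) ×
          ({C // C ∈ p.2.parts} ≃ Fin p.2.parts.card) //
        IsRectangle x.1.1 x.1.2} =
      n.divisors.card * n.factorial := by
  have hbij : Function.Bijective (CardOrderedRect.Psi (n := n) hn) :=
    ⟨CardOrderedRect.Psi_injective hn, CardOrderedRect.Psi_surjective hn⟩
  rw [show Nat.card _ = Nat.card (CardOrderedRect.D n) from
    (Nat.card_eq_of_bijective _ hbij).symm, CardOrderedRect.card_D hn]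
end

section
/- Let A and B be finite types, let σ be a permutation of A and τ a permutation of B, and let σ ⊠ τ denote the permutation of A × B given by (a, b) ↦ (σ a, τ b). Then for every positive integer k, the number of orbits of cardinality k of the cyclic group generated by σ ⊠ τ acting on A × B equals the sum, over all pairs of positive integers (i, l) with lcm(i, l) = k, of gcd(i, l) · cᵢ(σ) · c_l(τ), where c_j(ρ) denotes the number of orbits of cardinality j of the cyclic group generated by the permutation ρ (i.e., the number of cycles of ρ of length j, with fixed points counted as cycles of length 1). -/
/-- The number of orbits of cardinality `j` of the cyclic group generated by the
permutation `ρ` acting on `α`, i.e. the number of cycles of `ρ` of length `j`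
(fixed points counting as cycles of length 1). -/
noncomputable def cycleCount {α : Type*} (ρ : Equiv.Perm α) (j : ℕ) : ℕ :=
  Nat.card {o : Set α //
    (∃ a : α, o = MulAction.orbit (Subgroup.zpowers ρ) a) ∧ Nat.card o = j}

noncomputable def orbSize {α : Type*} (ρ : Equiv.Perm α) (a : α) : ℕ :=
  Nat.card (MulAction.orbit (Subgroup.zpowers ρ) a)

lemma orbSize_eq_minimalPeriod {α : Type*} (ρ : Equiv.Perm α) (a : α) :
    orbSize ρ a = Function.minimalPeriod ρ a := by
  rw [orbSize, Nat.card_congr (MulAction.orbitZPowersEquiv ρ a), Nat.card_zmod]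
  rfl

lemma orbSize_pos {α : Type*} [Fintype α] (ρ : Equiv.Perm α) (a : α) :
    0 < orbSize ρ a := by
  have : Nonempty (MulAction.orbit (Subgroup.zpowers ρ) a) :=
    ⟨⟨a, MulAction.mem_orbit_self a⟩⟩
  exact Nat.card_pos

lemma orbSize_prod {A B : Type*} (σ : Equiv.Perm A) (τ : Equiv.Perm B) (x : A × B) :
    orbSize (Equiv.prodCongr σ τ) x = Nat.lcm (orbSize σ x.1) (orbSize τ x.2) := by
  simp only [orbSize_eq_minimalPeriod]
  have : ⇑(Equiv.prodCongr σ τ) = Prod.map σ τ := rfl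
  rw [this, Function.minimalPeriod_prodMap]

lemma nat_card_sigma {ι : Type*} [Fintype ι] (f : ι → Type*) [∀ i, Finite (f i)] :
    Nat.card (Σ i, f i) = ∑ i : ι, Nat.card (f i) := by
  classical
  letI : ∀ i, Fintype (f i) := fun i => Fintype.ofFinite (f i)
  simp [Nat.card_eq_fintype_card, Fintype.card_sigma]

lemma card_orbSize_fiber {α : Type*} [Fintype α] (ρ : Equiv.Perm α) (j : ℕ) :
    Nat.card {a : α // orbSize ρ a = j} = j * cycleCount ρ j := by
  classical
  set T := {o : Set α // (∃ a, o = MulAction.orbit (Subgroup.zpowers ρ) a) ∧ Nat.card o = j}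
    with hT
  have e : {a : α // orbSize ρ a = j} ≃ Σ o : T, o.1 :=
    { toFun := fun a => ⟨⟨MulAction.orbit (Subgroup.zpowers ρ) a.1, ⟨a.1, rfl⟩, a.2⟩,
        ⟨a.1, MulAction.mem_orbit_self a.1⟩⟩
      invFun := fun x => ⟨x.2.1, by
        obtain ⟨⟨o, ⟨a, rfl⟩, hcard⟩, y, hy⟩ := x
        have h : MulAction.orbit (Subgroup.zpowers ρ) y
            = MulAction.orbit (Subgroup.zpowers ρ) a := MulAction.orbit_eq_iff.mpr hy
        simpa [orbSize, h] using hcard⟩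
      left_inv := fun a => rfl
      right_inv := fun x => by
        obtain ⟨⟨o, ⟨a, rfl⟩, hcard⟩, y, hy⟩ := x
        have h : MulAction.orbit (Subgroup.zpowers ρ) y
            = MulAction.orbit (Subgroup.zpowers ρ) a := MulAction.orbit_eq_iff.mpr hy
        refine Sigma.ext (Subtype.ext h) ?_
        exact (Subtype.heq_iff_coe_eq (fun z => by
          show z ∈ MulAction.orbit (Subgroup.zpowers ρ) y ↔ _
          rw [h])).mpr rfl }
  rw [Nat.card_congr e, nat_card_sigma]
  have hcardo : ∀ o : T, Nat.card o.1 = j := fun o => o.2.2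
  calc ∑ o : T, Nat.card o.1 = ∑ _o : T, j := by
        exact Finset.sum_congr rfl fun o _ => hcardo o
    _ = Nat.card T * j := by
        simp [Finset.sum_const, Nat.card_eq_fintype_card, Finset.card_univ]
    _ = j * cycleCount ρ j := by rw [cycleCount, Nat.mul_comm]

/-- Cycle-type lemma for the product permutation `σ ⊠ τ : (a, b) ↦ (σ a, τ b)`:
for `k ≥ 1`, the number of its cycles of length `k` equals
`∑_{lcm(i,l)=k} gcd(i,l)·cᵢ(σ)·c_l(τ)`. -/
theorem cycleCount_prodCongr {A B : Type*} [Fintype A] [Fintype B]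
    (σ : Equiv.Perm A) (τ : Equiv.Perm B) (k : ℕ) (hk : 0 < k) :
    cycleCount (Equiv.prodCongr σ τ) k =
      ∑ p ∈ (k.divisors ×ˢ k.divisors).filter (fun p => Nat.lcm p.1 p.2 = k),
        Nat.gcd p.1 p.2 * cycleCount σ p.1 * cycleCount τ p.2 := by
  classical
  have key : Nat.card {x : A × B // orbSize (Equiv.prodCongr σ τ) x = k} =
      ∑ p ∈ (k.divisors ×ˢ k.divisors).filter (fun p => Nat.lcm p.1 p.2 = k),
        Nat.card {a : A // orbSize σ a = p.1} * Nat.card {b : B // orbSize τ b = p.2} := by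
    simp only [Nat.card_eq_fintype_card, Fintype.card_subtype]
    rw [Finset.card_eq_sum_card_fiberwise
      (f := fun x : A × B => (orbSize σ x.1, orbSize τ x.2))
      (t := (k.divisors ×ˢ k.divisors).filter (fun p => Nat.lcm p.1 p.2 = k))
      (fun x hx => by
        simp only [Finset.coe_filter, Finset.mem_coe, Set.mem_setOf_eq, Finset.mem_filter, Finset.mem_univ, true_and] at hx ⊢
        rw [orbSize_prod] at hx
        exact ⟨Finset.mem_product.mpr
          ⟨Nat.mem_divisors.mpr ⟨hx ▸ Nat.dvd_lcm_left _ _, hk.ne'⟩,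
           Nat.mem_divisors.mpr ⟨hx ▸ Nat.dvd_lcm_right _ _, hk.ne'⟩⟩, hx⟩)]
    refine Finset.sum_congr rfl fun p hp => ?_
    simp only [Finset.mem_filter, Finset.mem_product] at hp
    rw [Finset.filter_filter]
    have hiff : ∀ x : A × B,
        (orbSize (Equiv.prodCongr σ τ) x = k ∧ (orbSize σ x.1, orbSize τ x.2) = p)
        ↔ (orbSize σ x.1 = p.1 ∧ orbSize τ x.2 = p.2) := by
      intro x
      rw [orbSize_prod, Prod.ext_iff]
      constructor
      · rintro ⟨_, h1, h2⟩; exact ⟨h1, h2⟩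
      · rintro ⟨h1, h2⟩; exact ⟨by rw [h1, h2, hp.2], h1, h2⟩
    rw [Finset.filter_congr (fun x _ => hiff x), ← Finset.card_product]
    congr 1
    ext ⟨a, b⟩
    simp [Finset.mem_filter, Finset.mem_product]
  simp only [card_orbSize_fiber] at key
  refine Nat.eq_of_mul_eq_mul_left hk ?_
  rw [key, Finset.mul_sum]
  refine Finset.sum_congr rfl fun p hp => ?_
  simp only [Finset.mem_filter, Finset.mem_product] at hp
  have hgl : Nat.gcd p.1 p.2 * k = p.1 * p.2 := by
    rw [← hp.2]; exact Nat.gcd_mul_lcm p.1 p.2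
  calc p.1 * cycleCount σ p.1 * (p.2 * cycleCount τ p.2)
      = (Nat.gcd p.1 p.2 * k) * (cycleCount σ p.1 * cycleCount τ p.2) := by rw [hgl]; ring
    _ = k * (Nat.gcd p.1 p.2 * cycleCount σ p.1 * cycleCount τ p.2) := by ring
end

section
/- Let A be a finite set and G a subgroup of the symmetric group of A. G acts on functions into A by postcomposition: g · f = g ∘ f. Then for every finite set U, the number of G-orbits on the set of all functions U → A equals the sum, over all set partitions π of U, of the number of G-orbits on the set of injective functions from the set of blocks of π into A. -/
/-- A group acting on a type `α` acts on the injective functions `ι → α`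
by postcomposition (pointwise action). -/
instance injMulAction {G α ι : Type*} [Group G] [MulAction G α] :
    MulAction G {f : ι → α // Function.Injective f} where
  smul g f := ⟨g • (f : ι → α), (MulAction.injective g).comp f.2⟩
  one_smul f := Subtype.ext (one_smul G (f : ι → α))
  mul_smul g h f := Subtype.ext (mul_smul g h (f : ι → α))

section Aux

open Finset Finpartition

variable {A U : Type*} [Fintype U] [DecidableEq U]

/-- The kernel partition of a function. -/
noncomputable def kerPart (f : U → A) : Finpartition (Finset.univ : Finset U) :=
  @Finpartition.ofSetoid U _ _ (Setoid.ker f) (Classical.decRel _)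

lemma mem_kerPart_part_iff (f : U → A) (a b : U) :
    b ∈ (kerPart f).part a ↔ f a = f b := by
  rw [kerPart]
  exact @Finpartition.mem_part_ofSetoid_iff_rel U _ _ _ (Setoid.ker f) (Classical.decRel _) b

lemma parts_eq_of_part_eq {π ρ : Finpartition (Finset.univ : Finset U)}
    (h : ∀ u : U, π.part u = ρ.part u) : π = ρ := by
  ext B
  constructor
  · intro hB
    obtain ⟨x, -, hx⟩ := π.part_surjOn hB
    rw [← hx, h]
    exact ρ.part_mem.2 (mem_univ x)
  · intro hB
    obtain ⟨x, -, hx⟩ := ρ.part_surjOn hB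
    rw [← hx, ← h]
    exact π.part_mem.2 (mem_univ x)

/-- The restriction of `f` to the parts of a partition, choosing a representative
in each part. -/
noncomputable def restr (π : Finpartition (Finset.univ : Finset U)) (f : U → A)
    (B : {B // B ∈ π.parts}) : A :=
  f (π.nonempty_of_mem_parts B.2).choose

/-- `f` extended from parts to the whole set. -/
def extendP (π : Finpartition (Finset.univ : Finset U)) (h : {B // B ∈ π.parts} → A)
    (u : U) : A :=
  h ⟨π.part u, π.part_mem.2 (mem_univ u)⟩

lemma restr_eq_of_mem {π : Finpartition (Finset.univ : Finset U)} {f : U → A}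
    (hf : kerPart f = π) (B : {B // B ∈ π.parts}) {u : U} (hu : u ∈ B.1) :
    restr π f B = f u := by
  have hc := (π.nonempty_of_mem_parts B.2).choose_spec
  have hconst : ∀ v ∈ B.1, f v = f ((π.nonempty_of_mem_parts B.2).choose) := by
    intro v hv
    have hBpart : π.part v = B.1 := π.part_eq_of_mem B.2 hv
    have : (π.nonempty_of_mem_parts B.2).choose ∈ (kerPart f).part v := by
      rw [hf, hBpart]; exact hc
    exact (mem_kerPart_part_iff f v _).1 this
  rw [restr, hconst u hu]

lemma restr_injective {π : Finpartition (Finset.univ : Finset U)} {f : U → A}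
    (hf : kerPart f = π) : Function.Injective (restr π f) := by
  intro B C hBC
  obtain ⟨b, hb⟩ := π.nonempty_of_mem_parts B.2
  obtain ⟨c, hc⟩ := π.nonempty_of_mem_parts C.2
  rw [restr_eq_of_mem hf B hb, restr_eq_of_mem hf C hc] at hBC
  have : c ∈ (kerPart f).part b := (mem_kerPart_part_iff f b c).2 hBC
  rw [hf] at this
  have h1 : π.part b = B.1 := π.part_eq_of_mem B.2 hb
  rw [h1] at this
  exact Subtype.ext (π.eq_of_mem_parts B.2 C.2 this hc)

lemma kerPart_extendP {π : Finpartition (Finset.univ : Finset U)}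
    {h : {B // B ∈ π.parts} → A} (hh : Function.Injective h) :
    kerPart (extendP π h) = π := by
  apply parts_eq_of_part_eq
  intro u
  ext b
  rw [mem_kerPart_part_iff, π.mem_part_iff_part_eq_part (Finset.mem_univ b) (Finset.mem_univ u)]
  constructor
  · intro hb
    exact (Subtype.ext_iff.1 (hh hb)).symm
  · intro hb
    exact congrArg h (Subtype.ext hb.symm)

lemma extendP_restr {π : Finpartition (Finset.univ : Finset U)} {f : U → A}
    (hf : kerPart f = π) : extendP π (restr π f) = f := by
  funext u
  rw [extendP, restr_eq_of_mem hf _ (π.mem_part (mem_univ u))]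

lemma restr_extendP {π : Finpartition (Finset.univ : Finset U)}
    {h : {B // B ∈ π.parts} → A} (hh : Function.Injective h) :
    restr π (extendP π h) = h := by
  funext B
  have hc := (π.nonempty_of_mem_parts B.2).choose_spec
  rw [restr, extendP]
  congr 1
  exact Subtype.ext (π.part_eq_of_mem B.2 hc)

end Aux

section Main

open MulAction

variable {G : Type*} [Group G]

/-- An equivariant equivalence induces an equivalence of orbit quotients. -/
def quotCongr {X Y : Type*} [MulAction G X] [MulAction G Y] (e : X ≃ Y)
    (he : ∀ (g : G) (x : X), e (g • x) = g • e x) :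
    Quotient (MulAction.orbitRel G X) ≃ Quotient (MulAction.orbitRel G Y) :=
  Quotient.congr e (fun a b => by
    rw [MulAction.orbitRel_apply, MulAction.orbitRel_apply,
      MulAction.mem_orbit_iff, MulAction.mem_orbit_iff]
    constructor
    · rintro ⟨g, rfl⟩; exact ⟨g, (he g b).symm⟩
    · rintro ⟨g, hg⟩; exact ⟨g, e.injective (by rw [he, hg])⟩)

/-- Componentwise action on a sigma type. -/
instance sigmaMulAction {ι : Type*} {X : ι → Type*} [∀ i, MulAction G (X i)] :
    MulAction G (Σ i, X i) where
  smul g x := ⟨x.1, g • x.2⟩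
  one_smul x := congrArg (Sigma.mk x.1) (one_smul G x.2)
  mul_smul g h x := congrArg (Sigma.mk x.1) (mul_smul g h x.2)

/-- Orbits on a disjoint union decompose as the disjoint union of orbits. -/
noncomputable def sigmaQuotEquiv {ι : Type*} (X : ι → Type*) [∀ i, MulAction G (X i)] :
    Quotient (MulAction.orbitRel G (Σ i, X i)) ≃ Σ i, Quotient (MulAction.orbitRel G (X i)) where
  toFun := Quotient.lift (fun x => ⟨x.1, ⟦x.2⟧⟩) (by
    rintro ⟨i, x⟩ ⟨j, y⟩ h
    obtain ⟨g, hg⟩ := h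
    have hg' : (⟨j, g • y⟩ : Σ i, X i) = ⟨i, x⟩ := hg
    obtain ⟨rfl, h2⟩ := Sigma.mk.inj_iff.1 hg'
    have h2' : g • y = x := eq_of_heq h2
    exact h2' ▸ congrArg (Sigma.mk j) (Quotient.sound ⟨g, rfl⟩))
  invFun := fun p => Quotient.lift (fun x => (⟦⟨p.1, x⟩⟧ : Quotient (MulAction.orbitRel G (Σ i, X i))))
    (by
      intro x y h
      obtain ⟨g, hg⟩ := h
      exact Quotient.sound ⟨g, congrArg (Sigma.mk p.1) hg⟩) p.2
  left_inv := by
    rintro q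
    induction q using Quotient.inductionOn with
    | h x => rfl
  right_inv := by
    rintro ⟨i, q⟩
    induction q using Quotient.inductionOn with
    | h x => rfl

variable {A U : Type*} [Fintype U] [DecidableEq U] [MulAction G A]

lemma ofSetoid_congr (s t : Setoid U) (h : s = t) :
    (@Finpartition.ofSetoid U _ _ s (Classical.decRel _)) =
      (@Finpartition.ofSetoid U _ _ t (Classical.decRel _)) := by
  subst h; rfl

lemma kerPart_smul (g : G) (f : U → A) : kerPart (g • f) = kerPart f := by
  unfold kerPart
  exact ofSetoid_congr _ _ (Setoid.ext fun a b => by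
    simp only [Setoid.ker_def, Pi.smul_apply, smul_left_cancel_iff])

/-- The action on the fiber of `kerPart` at `π`. -/
instance fibMulAction (π : Finpartition (Finset.univ : Finset U)) :
    MulAction G {f : U → A // kerPart f = π} where
  smul g f := ⟨g • f.1, by rw [kerPart_smul]; exact f.2⟩
  one_smul f := Subtype.ext (one_smul G f.1)
  mul_smul g h f := Subtype.ext (mul_smul g h f.1)

/-- Functions with kernel partition `π` correspond to injective functions on the parts. -/
noncomputable def fibEquivInj (π : Finpartition (Finset.univ : Finset U)) :
    {f : U → A // kerPart f = π} ≃ {h : {B // B ∈ π.parts} → A // Function.Injective h} where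
  toFun f := ⟨restr π f.1, restr_injective f.2⟩
  invFun h := ⟨extendP π h.1, kerPart_extendP h.2⟩
  left_inv f := Subtype.ext (extendP_restr f.2)
  right_inv h := Subtype.ext (restr_extendP h.2)

end Main

/-- For a finite set `A`, a subgroup `G` of the symmetric group of `A` acting on
functions into `A` by postcomposition, and a finite set `U`, the number of `G`-orbits
on all functions `U → A` equals the sum over set partitions `π` of `U` of the number
of `G`-orbits on injective functions from the blocks of `π` to `A`. -/
theorem card_orbits_functions_eq_sum_partitions
    (A : Type*) [Fintype A] (G : Subgroup (Equiv.Perm A))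
    (U : Type*) [Fintype U] [DecidableEq U] :
    Nat.card (Quotient (MulAction.orbitRel G (U → A))) =
      ∑ π : Finpartition (Finset.univ : Finset U),
        Nat.card (Quotient (MulAction.orbitRel G
          {f : {B // B ∈ π.parts} → A // Function.Injective f})) := by
  classical
  have E : Quotient (MulAction.orbitRel G (U → A)) ≃
      Σ π : Finpartition (Finset.univ : Finset U),
        Quotient (MulAction.orbitRel G
          {f : {B // B ∈ π.parts} → A // Function.Injective f}) :=
    ((quotCongr (Equiv.sigmaFiberEquiv (kerPart : (U → A) → _))
        (fun g x => rfl)).symm.trans (sigmaQuotEquiv _)).trans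
      (Equiv.sigmaCongrRight fun π => quotCongr (fibEquivInj π) (fun g f => rfl))
  rw [Nat.card_congr E]
  letI : ∀ π : Finpartition (Finset.univ : Finset U),
      Fintype (Quotient (MulAction.orbitRel G
        {f : {B // B ∈ π.parts} → A // Function.Injective f})) :=
    fun π => Fintype.ofFinite _
  simp [Nat.card_eq_fintype_card, Fintype.card_sigma]
end

section
/- For all integers k ≥ 1 and n ≥ 0, the identity Σ_{m=0}^{n} S(n, m) · p_k(m) = (B_n)^k holds, where S(n, m) is the number of set partitions of an n-element set into exactly m blocks, B_n is the total number of set partitions of an n-element set, and p_k(m) is the number of k-tuples (π₁, …, π_k) of set partitions of an m-element set whose meet π₁ ∧ ⋯ ∧ π_k is the partition into singletons. -/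
open Finset

namespace PRaux

variable {α β γ : Type*}

lemma finset_inf_rel {ι : Type*} (t : Finset ι) (f : ι → Setoid α) (a b : α) :
    (t.inf f) a b ↔ ∀ i ∈ t, f i a b := by
  classical
  induction t using Finset.induction with
  | empty =>
      simp only [Finset.inf_empty, Finset.notMem_empty, false_implies, implies_true, iff_true]
      exact True.intro
  | @insert i t hi ih =>
      rw [Finset.inf_insert, Setoid.inf_iff_and, ih]
      simp [forall_and]

lemma comap_finset_inf {ι : Type*} (g : β → α) (t : Finset ι) (f : ι → Setoid α) :
    t.inf (fun i => Setoid.comap g (f i)) = Setoid.comap g (t.inf f) := by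
  ext a b
  rw [finset_inf_rel, Setoid.comap_rel, finset_inf_rel]
  simp [Setoid.comap_rel]

lemma bot_rel (a b : α) : (⊥ : Setoid α) a b ↔ a = b := by
  rw [Setoid.bot_def]

lemma comap_bot (g : β → α) (hg : Function.Injective g) :
    Setoid.comap g (⊥ : Setoid α) = ⊥ := by
  ext a b
  rw [Setoid.comap_rel, bot_rel, bot_rel, hg.eq_iff]

/-- The core bijection: tuples of setoids with infimum `r` correspond to tuples of setoids on
the quotient by `r` with infimum `⊥`. -/
noncomputable def fiberEquiv (k : ℕ) (r : Setoid α) :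
    {f : Fin k → Setoid α // Finset.univ.inf f = r} ≃
    {s : Fin k → Setoid (Quotient r) // Finset.univ.inf s = ⊥} where
  toFun f := ⟨fun i => Setoid.comap Quotient.out (f.1 i), by
    ext x y
    rw [finset_inf_rel, bot_rel]
    constructor
    · intro h
      have h2 : (Finset.univ.inf f.1) x.out y.out := by
        rw [finset_inf_rel]
        intro i hi
        simpa [Setoid.comap_rel] using h i hi
      rw [f.2] at h2
      calc x = ⟦x.out⟧ := (Quotient.out_eq x).symm
        _ = ⟦y.out⟧ := Quotient.sound h2
        _ = y := Quotient.out_eq y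
    · rintro rfl
      intro i _
      rw [Setoid.comap_rel]⟩
  invFun s := ⟨fun i => Setoid.comap (Quotient.mk r) (s.1 i), by
    rw [comap_finset_inf, s.2]
    ext a b
    rw [Setoid.comap_rel, bot_rel, Quotient.eq]⟩
  left_inv f := by
    apply Subtype.ext
    funext i
    have hle : r ≤ f.1 i := by
      have h := Finset.inf_le (f := f.1) (Finset.mem_univ i)
      rwa [f.2] at h
    ext a b
    rw [Setoid.comap_rel, Setoid.comap_rel]
    have ha : r (⟦a⟧ : Quotient r).out a := Quotient.exact (Quotient.out_eq _)
    have hb : r (⟦b⟧ : Quotient r).out b := Quotient.exact (Quotient.out_eq _)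
    constructor
    · intro h
      exact (f.1 i).trans ((f.1 i).symm (hle ha)) ((f.1 i).trans h (hle hb))
    · intro h
      exact (f.1 i).trans (hle ha) ((f.1 i).trans h ((f.1 i).symm (hle hb)))
  right_inv s := by
    apply Subtype.ext
    funext i
    ext x y
    rw [Setoid.comap_rel, Setoid.comap_rel, Quotient.out_eq, Quotient.out_eq]

/-- Transporting tuples of setoids with infimum `⊥` along an equivalence of the base types. -/
def tuplesEquiv (k : ℕ) (g : β ≃ γ) :
    {s : Fin k → Setoid γ // Finset.univ.inf s = ⊥} ≃
    {s : Fin k → Setoid β // Finset.univ.inf s = ⊥} where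
  toFun s := ⟨fun i => Setoid.comap g (s.1 i), by
    rw [comap_finset_inf, s.2, comap_bot _ g.injective]⟩
  invFun s := ⟨fun i => Setoid.comap g.symm (s.1 i), by
    rw [comap_finset_inf, s.2, comap_bot _ g.symm.injective]⟩
  left_inv s := by
    apply Subtype.ext
    funext i
    ext a b
    simp [Setoid.comap_rel]
  right_inv s := by
    apply Subtype.ext
    funext i
    ext a b
    simp [Setoid.comap_rel]

section Bridge

variable [Fintype α] [DecidableEq α]

/-- The setoid associated to a finpartition of `univ`. -/
def toSetoid (P : Finpartition (Finset.univ : Finset α)) : Setoid α := Setoid.ker P.part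

lemma toSetoid_rel (P : Finpartition (Finset.univ : Finset α)) (a b : α) :
    toSetoid P a b ↔ P.part a = P.part b := Iff.rfl

lemma ofSetoid_toSetoid (P : Finpartition (Finset.univ : Finset α))
    [DecidableRel (toSetoid P).r] :
    Finpartition.ofSetoid (toSetoid P) = P := by
  ext t
  constructor
  · intro ht
    simp only [Finpartition.ofSetoid, Finpartition.ofSetSetoid_parts, Finset.mem_image] at ht
    obtain ⟨a, -, rfl⟩ := ht
    have : ({b | (toSetoid P).r a b} : Finset α) = P.part a := by
      ext c
      simp only [Finset.mem_filter, Finset.mem_univ, true_and, Set.mem_setOf_eq]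
      rw [show (toSetoid P).r a c ↔ P.part a = P.part c from Iff.rfl]
      rw [P.mem_part_iff_part_eq_part (Finset.mem_univ c) (Finset.mem_univ a)]
      exact eq_comm
    rw [this]
    exact P.part_mem.2 (Finset.mem_univ a)
  · intro ht
    obtain ⟨a, -, rfl⟩ := P.part_surjOn ht
    simp only [Finpartition.ofSetoid, Finpartition.ofSetSetoid_parts, Finset.mem_image]
    refine ⟨a, Finset.mem_univ a, ?_⟩
    ext c
    simp only [Finset.mem_filter, Finset.mem_univ, true_and, Set.mem_setOf_eq]
    rw [show (toSetoid P).r a c ↔ P.part a = P.part c from Iff.rfl]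
    rw [P.mem_part_iff_part_eq_part (Finset.mem_univ c) (Finset.mem_univ a)]
    exact eq_comm

lemma toSetoid_ofSetoid (s : Setoid α) [DecidableRel s.r] :
    toSetoid (Finpartition.ofSetoid s) = s := by
  ext a b
  rw [toSetoid_rel]
  constructor
  · intro h
    have hb : b ∈ (Finpartition.ofSetoid s).part a := by
      rw [h]; exact (Finpartition.ofSetoid s).mem_part (Finset.mem_univ b)
    exact (Finpartition.mem_part_ofSetoid_iff_rel).1 hb
  · intro h
    have hb : b ∈ (Finpartition.ofSetoid s).part a :=
      (Finpartition.mem_part_ofSetoid_iff_rel).2 h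
    exact ((Finpartition.ofSetoid s).mem_part_iff_part_eq_part (Finset.mem_univ b)
      (Finset.mem_univ a)).1 hb |>.symm

lemma toSetoid_mono {P Q : Finpartition (Finset.univ : Finset α)} (h : P ≤ Q) :
    toSetoid P ≤ toSetoid Q := by
  intro a b hab
  rw [toSetoid_rel] at hab
  obtain ⟨c, hc, hsub⟩ := h (P.part_mem.2 (Finset.mem_univ a))
  have ha : a ∈ c := hsub (P.mem_part (Finset.mem_univ a))
  have hb : b ∈ c := hsub (hab ▸ P.mem_part (Finset.mem_univ b))
  show Q.part a = Q.part b
  rw [Q.part_eq_of_mem hc ha, Q.part_eq_of_mem hc hb]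

lemma le_of_toSetoid_le {P Q : Finpartition (Finset.univ : Finset α)}
    (h : toSetoid P ≤ toSetoid Q) : P ≤ Q := by
  intro t ht
  obtain ⟨a, ha⟩ := P.nonempty_of_mem_parts ht
  refine ⟨Q.part a, Q.part_mem.2 (Finset.mem_univ a), fun c hc => ?_⟩
  have hrel : toSetoid P c a := by
    rw [toSetoid_rel, P.part_eq_of_mem ht hc, P.part_eq_of_mem ht ha]
  have : Q.part c = Q.part a := h hrel
  exact this ▸ Q.mem_part (Finset.mem_univ c)

/-- The order isomorphism between finpartitions of `univ` and setoids. -/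
noncomputable def partOrderIso : Finpartition (Finset.univ : Finset α) ≃o Setoid α where
  toFun := toSetoid
  invFun s := letI := Classical.decRel s.r; Finpartition.ofSetoid s
  left_inv P := by
    letI := Classical.decRel (toSetoid P).r
    exact ofSetoid_toSetoid P
  right_inv s := by
    letI := Classical.decRel s.r
    exact toSetoid_ofSetoid s
  map_rel_iff' := by
    intro P Q
    exact ⟨fun h => le_of_toSetoid_le h, fun h => toSetoid_mono h⟩

lemma partOrderIso_map_inf (P Q : Finpartition (Finset.univ : Finset α)) :
    partOrderIso (P ⊓ Q) = partOrderIso P ⊓ partOrderIso Q := by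
  apply le_antisymm
  · exact le_inf (partOrderIso.monotone inf_le_left) (partOrderIso.monotone inf_le_right)
  · have h1 : partOrderIso.symm (partOrderIso P ⊓ partOrderIso Q) ≤ P := by
      rw [← partOrderIso.le_iff_le, OrderIso.apply_symm_apply]
      exact inf_le_left
    have h2 : partOrderIso.symm (partOrderIso P ⊓ partOrderIso Q) ≤ Q := by
      rw [← partOrderIso.le_iff_le, OrderIso.apply_symm_apply]
      exact inf_le_right
    calc partOrderIso P ⊓ partOrderIso Q
        = partOrderIso (partOrderIso.symm (partOrderIso P ⊓ partOrderIso Q)) :=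
          (partOrderIso.apply_symm_apply _).symm
      _ ≤ partOrderIso (P ⊓ Q) := partOrderIso.monotone (le_inf h1 h2)

lemma partOrderIso_map_top :
    partOrderIso (⊤ : Finpartition (Finset.univ : Finset α)) = ⊤ := by
  apply le_antisymm le_top
  calc (⊤ : Setoid α) = partOrderIso (partOrderIso.symm ⊤) :=
        (partOrderIso.apply_symm_apply _).symm
    _ ≤ partOrderIso ⊤ := partOrderIso.monotone le_top

lemma partOrderIso_map_bot :
    partOrderIso (⊥ : Finpartition (Finset.univ : Finset α)) = ⊥ := by
  apply le_antisymm _ bot_le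
  calc partOrderIso ⊥ ≤ partOrderIso (partOrderIso.symm ⊥) :=
        partOrderIso.monotone bot_le
    _ = ⊥ := partOrderIso.apply_symm_apply _

lemma partOrderIso_map_finset_inf {ι : Type*} (t : Finset ι)
    (f : ι → Finpartition (Finset.univ : Finset α)) :
    partOrderIso (t.inf f) = t.inf (fun i => partOrderIso (f i)) := by
  classical
  induction t using Finset.induction with
  | empty => simpa using partOrderIso_map_top
  | @insert i t hi ih =>
      rw [Finset.inf_insert, Finset.inf_insert, partOrderIso_map_inf, ih]

lemma card_quotient_toSetoid (P : Finpartition (Finset.univ : Finset α)) :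
    Nat.card (Quotient (toSetoid P)) = P.parts.card := by
  have e := Setoid.quotientKerEquivRange P.part
  have hrange : Set.range P.part = ↑P.parts := by
    ext t
    constructor
    · rintro ⟨a, rfl⟩
      exact P.part_mem.2 (Finset.mem_univ a)
    · intro ht
      obtain ⟨a, -, rfl⟩ := P.part_surjOn ht
      exact ⟨a, rfl⟩
  have h1 : Nat.card (Quotient (toSetoid P)) = Nat.card (Set.range P.part) :=
    Nat.card_congr e
  rw [h1, Nat.card_coe_set_eq, hrange, Set.ncard_coe_finset]

end Bridge

/-- The full chain of equivalences for a fixed partition `σ`. -/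
noncomputable def fiberChain (k n : ℕ) (σ : Finpartition (Finset.univ : Finset (Fin n))) :
    {f : Fin k → Finpartition (Finset.univ : Finset (Fin n)) // Finset.univ.inf f = σ} ≃
    {π : Fin k → Finpartition (Finset.univ : Finset (Fin σ.parts.card)) //
      Finset.univ.inf π = ⊥} :=
  have hA : ∀ f : Fin k → Finpartition (Finset.univ : Finset (Fin n)),
      Finset.univ.inf f = σ ↔
        Finset.univ.inf (fun i => partOrderIso (f i)) = partOrderIso σ := by
    intro f
    rw [← partOrderIso_map_finset_inf]
    exact ⟨fun h => by rw [h], fun h => partOrderIso.injective h⟩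
  have hD : ∀ π : Fin k → Finpartition (Finset.univ : Finset (Fin σ.parts.card)),
      Finset.univ.inf π = ⊥ ↔
        Finset.univ.inf (fun i => partOrderIso (π i)) = ⊥ := by
    intro π
    rw [← partOrderIso_map_finset_inf, ← partOrderIso_map_bot]
    exact ⟨fun h => by rw [h], fun h => partOrderIso.injective h⟩
  ((Equiv.piCongrRight fun _ => partOrderIso.toEquiv).subtypeEquiv hA).trans <|
    (fiberEquiv k (partOrderIso σ)).trans <|
      (tuplesEquiv k ((Finite.equivFinOfCardEq
        (card_quotient_toSetoid σ)).symm)).trans <|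
        ((Equiv.piCongrRight fun _ => partOrderIso.toEquiv).subtypeEquiv hD).symm

end PRaux

open PRaux in
/-- For `k ≥ 1` and `n ≥ 0`: `∑_{m=0}^{n} S(n,m) · p_k(m) = (B_n)^k`, where `S(n,m)`
is the number of partitions of an `n`-set into `m` blocks, `B_n` the number of all
partitions of an `n`-set, and `p_k(m)` the number of `k`-tuples of partitions of an
`m`-set whose meet is the partition `⊥` into singletons. -/
theorem sum_stirling_mul_partialRectangles_eq_bell_pow (k n : ℕ) (hk : 1 ≤ k) :
    ∑ m ∈ Finset.range (n + 1),
        Nat.card {π : Finpartition (Finset.univ : Finset (Fin n)) // π.parts.card = m} *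
          Nat.card {π : Fin k → Finpartition (Finset.univ : Finset (Fin m)) //
            Finset.univ.inf π = ⊥} =
      Nat.card (Finpartition (Finset.univ : Finset (Fin n))) ^ k := by
  classical
  set p : ℕ → ℕ := fun m => Nat.card {π : Fin k → Finpartition (Finset.univ : Finset (Fin m)) //
    Finset.univ.inf π = ⊥} with hp
  have hrhs : Nat.card (Finpartition (Finset.univ : Finset (Fin n))) ^ k =
      ∑ σ : Finpartition (Finset.univ : Finset (Fin n)), p σ.parts.card := by
    rw [Nat.card_eq_fintype_card, ← Fintype.card_fin k, ← Fintype.card_fun,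
      ← Fintype.card_congr (Equiv.sigmaFiberEquiv
        (fun f : Fin k → Finpartition (Finset.univ : Finset (Fin n)) => Finset.univ.inf f)),
      Fintype.card_sigma]
    refine Finset.sum_congr rfl fun σ _ => ?_
    rw [← Nat.card_eq_fintype_card, Nat.card_congr (fiberChain k n σ)]
  rw [hrhs]
  rw [← Finset.sum_fiberwise_of_maps_to (g := fun σ : Finpartition (Finset.univ : Finset (Fin n))
    => σ.parts.card) (t := Finset.range (n + 1))
    (fun σ _ => Finset.mem_range.2 (Nat.lt_succ_of_le
      (le_trans σ.card_parts_le_card (by simp)))) (fun σ => p σ.parts.card)]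
  refine Finset.sum_congr rfl fun m hm => ?_
  have : ∀ σ ∈ Finset.filter
      (fun σ : Finpartition (Finset.univ : Finset (Fin n)) => σ.parts.card = m) Finset.univ,
      p σ.parts.card = p m := by
    intro σ hσ
    rw [(Finset.mem_filter.1 hσ).2]
  rw [Finset.sum_congr rfl this, Finset.sum_const, smul_eq_mul, Nat.card_eq_fintype_card,
    Fintype.card_subtype]
end

section
/- For all positive integers m, n, r, the number of m×n matrices with entries in {0,1} having exactly r entries equal to 1, no zero row, and no zero column equals Σ_{l=r}^{m·n} Σ_{d ∣ l} (−1)^{n+m−(d+l/d)} · C(m, d) · C(n, l/d) · C(l, r), an identity of integers, where C(a, b) denotes the binomial coefficient (terms with d > m or l/d > n vanish, so the sum over l ≥ r has finite support and may be truncated at l = m·n). -/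
/-!
Inclusion–exclusion over the rows and columns allowed to carry ones: exactly `C(|A| |B|, r)` sets
of `r` cells lie in `A × B`, and for a set `s` of cells the signed count of pairs `A ⊇ rows(s)`,
`B ⊇ cols(s)` is `1` if `s` meets every row and every column and `0` otherwise. Grouping the sum
over `(|A|, |B|) = (d, e)` by `l = d e` gives the divisor sum; since `r > 0`, the pairs with
`d e = 0` contribute nothing.
-/

open Finset

section

variable {α β : Type*} [Fintype α] [Fintype β]

theorem sum_finset_sum_finset_eq_sum_range_sum_range {M : Type*} [AddCommMonoid M]
    (f : ℕ → ℕ → M) :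
    ∑ A : Finset α, ∑ B : Finset β, f #A #B =
      ∑ i ∈ range (Fintype.card α + 1), ∑ j ∈ range (Fintype.card β + 1),
        (Fintype.card α).choose i • (Fintype.card β).choose j • f i j := by
  rw [← powerset_univ, sum_powerset_apply_card (fun i => ∑ B : Finset β, f i #B), card_univ]
  refine sum_congr rfl fun i _ => ?_
  rw [← powerset_univ, sum_powerset_apply_card (f i), card_univ, smul_sum]

variable [DecidableEq α] [DecidableEq β]

theorem sum_superset_neg_one_pow_card_compl (R : Finset α) :
    ∑ A with R ⊆ A, (-1 : ℤ) ^ #Aᶜ = if R = univ then 1 else 0 := by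
  have hcompl : ∑ A with R ⊆ A, (-1 : ℤ) ^ #Aᶜ = ∑ C ∈ Rᶜ.powerset, (-1 : ℤ) ^ #C :=
    sum_nbij' compl compl (by simp) (by simp [subset_compl_comm]) (by simp) (by simp) (by simp)
  simp [hcompl, sum_powerset_neg_one_pow_card]

theorem card_filter_card_eq_and_subset (r : ℕ) (t : Finset α) :
    #{s : Finset α | #s = r ∧ s ⊆ t} = (#t).choose r := by
  rw [← card_powersetCard]
  congr 1
  ext s
  simp [mem_powersetCard, and_comm]

theorem sum_filter_card_eq_ite_subset (r : ℕ) (t : Finset α) (c : ℤ) :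
    ∑ s with #s = r, (if s ⊆ t then c else 0) = c * (#t).choose r := by
  rw [← sum_filter, filter_filter, sum_const, card_filter_card_eq_and_subset, nsmul_eq_mul,
    mul_comm]

theorem card_full_projections_eq_alternating_sum (r : ℕ) :
    (#{s : Finset (α × β) | #s = r ∧ s.image Prod.fst = univ ∧ s.image Prod.snd = univ} : ℤ) =
      ∑ A : Finset α, ∑ B : Finset β, (-1 : ℤ) ^ (#Aᶜ + #Bᶜ) * (#A * #B).choose r := by
  have hsign (s : Finset (α × β)) (A : Finset α) (B : Finset β) :
      (if s ⊆ A ×ˢ B then (-1 : ℤ) ^ (#Aᶜ + #Bᶜ) else 0) =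
        (if s.image Prod.fst ⊆ A then (-1 : ℤ) ^ #Aᶜ else 0) *
          (if s.image Prod.snd ⊆ B then (-1 : ℤ) ^ #Bᶜ else 0) := by
    simp only [subset_iff, mem_product, pow_add]
    split_ifs <;> grind
  symm
  calc ∑ A : Finset α, ∑ B : Finset β, (-1 : ℤ) ^ (#Aᶜ + #Bᶜ) * (#A * #B).choose r
      = ∑ s with #s = r, ∑ A : Finset α, ∑ B : Finset β,
          if s ⊆ A ×ˢ B then (-1 : ℤ) ^ (#Aᶜ + #Bᶜ) else 0 := by
        simp_rw [← card_product, ← sum_filter_card_eq_ite_subset r]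
        exact (sum_congr rfl fun A _ => sum_comm).trans sum_comm
    _ = ∑ s with #s = r, (∑ A with s.image Prod.fst ⊆ A, (-1 : ℤ) ^ #Aᶜ) *
          ∑ B with s.image Prod.snd ⊆ B, (-1 : ℤ) ^ #Bᶜ := by
        refine sum_congr rfl fun s _ => ?_
        rw [sum_filter, sum_filter, sum_mul_sum]
        simp_rw [hsign]
    _ = ∑ s with #s = r, if s.image Prod.fst = univ ∧ s.image Prod.snd = univ then 1 else 0 := by
        refine sum_congr rfl fun s _ => ?_
        rw [sum_superset_neg_one_pow_card_compl, sum_superset_neg_one_pow_card_compl,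
          ite_zero_mul_ite_zero, mul_one]
    _ = _ := by rw [sum_boole, filter_filter]

variable (α β) in
def boolMatrixEquivFinset : (α → β → Bool) ≃ Finset (α × β) where
  toFun M := {p | M p.1 p.2}
  invFun s i j := decide ((i, j) ∈ s)
  left_inv M := by ext; simp
  right_inv s := by ext; simp

theorem natCard_boolMatrix_eq_card_full_projections (r : ℕ) :
    Nat.card {M : α → β → Bool //
        #{p : α × β | M p.1 p.2} = r ∧ (∀ i, ∃ j, M i j) ∧ (∀ j, ∃ i, M i j)} =
      #{s : Finset (α × β) | #s = r ∧ s.image Prod.fst = univ ∧ s.image Prod.snd = univ} := by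
  rw [← Fintype.card_subtype, ← Nat.card_eq_fintype_card]
  refine Nat.card_congr ((boolMatrixEquivFinset α β).subtypeEquiv fun M => ?_)
  simp [boolMatrixEquivFinset, eq_univ_iff_forall]

end

theorem sum_range_sum_range_eq_sum_Icc_sum_divisors {M : Type*} [AddCommMonoid M] {m n r : ℕ}
    (hr : 0 < r) (g : ℕ → ℕ → ℕ → M) (hg : ∀ d e l, g d e l ≠ 0 → d ≤ m ∧ e ≤ n ∧ r ≤ l) :
    ∑ i ∈ range (m + 1), ∑ j ∈ range (n + 1), g i j (i * j) =
      ∑ l ∈ Icc r (m * n), ∑ d ∈ l.divisors, g d (l / d) l := by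
  rw [← sum_product', sum_sigma']
  symm
  refine sum_bij_ne_zero (fun x _ _ => (x.2, x.1 / x.2)) ?_ ?_ ?_ ?_
  · rintro ⟨l, d⟩ - hne
    obtain ⟨hd, he, -⟩ := hg _ _ _ hne
    simp only [mem_product, mem_range]
    exact ⟨Nat.lt_succ_of_le hd, Nat.lt_succ_of_le he⟩
  · rintro ⟨l₁, d₁⟩ h₁ - ⟨l₂, d₂⟩ h₂ - heq
    simp only [mem_sigma, Nat.mem_divisors] at h₁ h₂
    simp only [Prod.mk.injEq] at heq
    obtain ⟨rfl, hq⟩ := heq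
    rw [← Nat.mul_div_cancel' h₁.2.1, ← Nat.mul_div_cancel' h₂.2.1, hq]
  · rintro ⟨i, j⟩ hij hne
    obtain ⟨-, -, hrl⟩ := hg _ _ _ hne
    simp only [mem_product, mem_range] at hij
    have hi : 0 < i := Nat.pos_of_mul_pos_right (hr.trans_le hrl)
    refine ⟨⟨i * j, i⟩, ?_, ?_, ?_⟩
    · simp only [mem_sigma, mem_Icc, Nat.mem_divisors]
      exact ⟨⟨hrl, Nat.mul_le_mul (by omega) (by omega)⟩, dvd_mul_right i j,
        (hr.trans_le hrl).ne'⟩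
    · simpa [Nat.mul_div_cancel_left j hi] using hne
    · simp [Nat.mul_div_cancel_left j hi]
  · rintro ⟨l, d⟩ h -
    simp only [mem_sigma, Nat.mem_divisors] at h
    simp [Nat.mul_div_cancel' h.2.1]

theorem card_zeroOne_matrices_general (m n r : ℕ) (hr : 0 < r) :
    (Nat.card {M : Fin m → Fin n → Bool //
        (Finset.univ.filter fun p : Fin m × Fin n => M p.1 p.2 = true).card = r ∧
        (∀ i, ∃ j, M i j = true) ∧ (∀ j, ∃ i, M i j = true)} : ℤ) =
      ∑ l ∈ Finset.Icc r (m * n), ∑ d ∈ l.divisors,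
        (-1 : ℤ) ^ (n + m - (d + l / d)) * (m.choose d : ℤ) * (n.choose (l / d) : ℤ) *
          (l.choose r : ℤ) := by
  set g : ℕ → ℕ → ℕ → ℤ := fun d e l =>
    (-1 : ℤ) ^ (n + m - (d + e)) * (m.choose d : ℤ) * (n.choose e : ℤ) * (l.choose r : ℤ)
  have hg : ∀ d e l, g d e l ≠ 0 → d ≤ m ∧ e ≤ n ∧ r ≤ l := by
    intro d e l h
    simp only [g, ne_eq, mul_eq_zero, pow_eq_zero_iff', Nat.cast_eq_zero, Nat.choose_eq_zero_iff,
      not_or, not_lt] at h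
    exact ⟨h.1.1.2, h.1.2, h.2⟩
  rw [natCard_boolMatrix_eq_card_full_projections, card_full_projections_eq_alternating_sum]
  simp_rw [card_compl, Fintype.card_fin]
  rw [sum_finset_sum_finset_eq_sum_range_sum_range
      (fun i j => (-1 : ℤ) ^ (m - i + (n - j)) * ((i * j).choose r : ℤ)),
    ← sum_range_sum_range_eq_sum_Icc_sum_divisors hr g hg, Fintype.card_fin, Fintype.card_fin]
  refine sum_congr rfl fun i hi => sum_congr rfl fun j hj => ?_
  simp only [mem_range] at hi hj
  simp only [g, nsmul_eq_mul]
  rw [show n + m - (i + j) = m - i + (n - j) by omega]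
  ring

/-- The number of `m×n` `(0,1)`-matrices with exactly `r` ones, no zero row and no
zero column, equals
`∑_{l=r}^{mn} ∑_{d ∣ l} (−1)^{n+m−(d+l/d)} C(m,d) C(n,l/d) C(l,r)`
(terms with `d > m` or `l/d > n` vanish, so the sum over `l ≥ r` is truncated at
`l = m·n`). -/
theorem card_zeroOne_matrices (m n r : ℕ) (hm : 0 < m) (hn : 0 < n) (hr : 0 < r) :
    (Nat.card {M : Fin m → Fin n → Bool //
        (Finset.univ.filter fun p : Fin m × Fin n => M p.1 p.2 = true).card = r ∧
        (∀ i, ∃ j, M i j = true) ∧ (∀ j, ∃ i, M i j = true)} : ℤ) =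
      ∑ l ∈ Finset.Icc r (m * n), ∑ d ∈ l.divisors,
        (-1 : ℤ) ^ (n + m - (d + l / d)) * (m.choose d : ℤ) * (n.choose (l / d) : ℤ) *
          (l.choose r : ℤ) :=
  card_zeroOne_matrices_general m n r hr
end

section
/- For all integers k ≥ 1 and n ≥ 1, the number of k-tuples (π₁, …, π_k) of set partitions of an n-element set satisfying π₁ ∧ π₂ ∧ ⋯ ∧ π_k = 0̂ (the partition into singletons) equals, as a real number, e^{−k} · Σ_{i₁, …, i_k ≥ 1} (i₁·i₂⋯i_k)_n / (i₁!·i₂!⋯i_k!), where the sum ranges over all k-tuples of positive integers, (m)_n = m(m−1)⋯(m−n+1) denotes the falling factorial, and the series converges. -/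
open Finset
open scoped ENNReal NNReal

namespace PittelAux
variable {n m k : ℕ}

instance kerDec {α β : Type*} [DecidableEq β] (f : α → β) : DecidableRel ⇑(Setoid.ker f) :=
  fun a b => decidable_of_iff (f a = f b) Iff.rfl

def kpart (f : Fin n → Fin m) : Finpartition (univ : Finset (Fin n)) :=
  Finpartition.ofSetoid (Setoid.ker f)

lemma mem_kpart_part {f : Fin n → Fin m} {a b : Fin n} :
    b ∈ (kpart f).part a ↔ f a = f b :=
  Finpartition.mem_part_ofSetoid_iff_rel

section General
variable {α : Type*} [DecidableEq α] {s : Finset α}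

lemma part_inf (P Q : Finpartition s) {a : α} (ha : a ∈ s) :
    (P ⊓ Q).part a = P.part a ∩ Q.part a := by
  have hmem : P.part a ∩ Q.part a ∈ (P ⊓ Q).parts := by
    rw [Finpartition.parts_inf]
    refine Finset.mem_erase.2 ⟨?_, ?_⟩
    · rw [bot_eq_empty, ← Finset.nonempty_iff_ne_empty]
      exact ⟨a, Finset.mem_inter.2 ⟨P.mem_part ha, Q.mem_part ha⟩⟩
    · exact Finset.mem_image.2 ⟨(P.part a, Q.part a),
        Finset.mem_product.2 ⟨P.part_mem.2 ha, Q.part_mem.2 ha⟩, rfl⟩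
  exact (P ⊓ Q).part_eq_of_mem hmem (Finset.mem_inter.2 ⟨P.mem_part ha, Q.mem_part ha⟩)

lemma part_top [Fintype α] (a : α) :
    (⊤ : Finpartition (univ : Finset α)).part a = univ := by
  have h1 := Finpartition.parts_top_subset (univ : Finset α)
  have h2 := (⊤ : Finpartition (univ : Finset α)).part_mem.2 (mem_univ a)
  have := h1 h2
  simpa using this

lemma part_finset_inf [Fintype α] {ι : Type*}
    (t : Finset ι) (π : ι → Finpartition (univ : Finset α)) (a : α) :
    (t.inf π).part a = t.inf fun j => (π j).part a := by
  induction t using Finset.cons_induction with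
  | empty => simpa [Finset.inf_empty] using part_top a
  | cons j t hj ih =>
      rw [Finset.inf_cons, Finset.inf_cons, part_inf _ _ (mem_univ a), ih, Finset.inf_eq_inter]

lemma eq_bot_iff_part (P : Finpartition s) :
    P = ⊥ ↔ ∀ a ∈ s, ∀ b, b ∈ P.part a → a = b := by
  constructor
  · rintro rfl a ha b hb
    have : (⊥ : Finpartition s).part a = {a} :=
      (⊥ : Finpartition s).part_eq_of_mem (Finpartition.mem_bot_iff.2 ⟨a, ha, rfl⟩)
        (Finset.mem_singleton_self a)
    rw [this, Finset.mem_singleton] at hb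
    exact hb.symm
  · intro h
    rw [eq_bot_iff]
    intro t ht
    obtain ⟨x, hx⟩ := P.nonempty_of_mem_parts ht
    have hxs : x ∈ s := (P.le ht) hx
    refine ⟨{x}, ?_, ?_⟩
    · rw [Finpartition.mem_bot_iff]; exact ⟨x, hxs, rfl⟩
    · intro y hy
      have : P.part x = t := P.part_eq_of_mem ht hx
      have := h x hxs y (by rw [this]; exact hy)
      simp [← this]


lemma eq_of_part_eq {P Q : Finpartition s} (h : ∀ a ∈ s, P.part a = Q.part a) : P = Q := by
  ext t
  constructor
  · intro ht
    obtain ⟨x, hx⟩ := P.nonempty_of_mem_parts ht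
    have hxs : x ∈ s := (P.le ht) hx
    have hP : P.part x = t := P.part_eq_of_mem ht hx
    rw [← hP, h x hxs]
    exact Q.part_mem.2 hxs
  · intro ht
    obtain ⟨x, hx⟩ := Q.nonempty_of_mem_parts ht
    have hxs : x ∈ s := (Q.le ht) hx
    have hQ : Q.part x = t := Q.part_eq_of_mem ht hx
    rw [← hQ, ← h x hxs]
    exact P.part_mem.2 hxs


lemma mem_finset_inf {β ι : Type*} [Fintype β] [DecidableEq β] {t : Finset ι}
    {f : ι → Finset β} {a : β} : a ∈ t.inf f ↔ ∀ i ∈ t, a ∈ f i := by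
  induction t using Finset.cons_induction with
  | empty => simp [Finset.inf_empty]
  | cons j t hj ih => simp [Finset.inf_cons, ih]

end General

lemma kpart_eq_iff {f : Fin n → Fin m} {π : Finpartition (univ : Finset (Fin n))} :
    kpart f = π ↔ ∀ a b, (f a = f b ↔ b ∈ π.part a) := by
  constructor
  · rintro rfl a b; exact mem_kpart_part.symm
  · intro h
    refine eq_of_part_eq fun a _ => Finset.ext fun y => ?_
    rw [mem_kpart_part, h a y]
variable (π : Finpartition (univ : Finset (Fin n)))

/-- a representative of each part -/
noncomputable def rep (p : {t // t ∈ π.parts}) : Fin n :=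
  (π.nonempty_of_mem_parts p.2).choose

lemma rep_mem (p : {t // t ∈ π.parts}) : rep π p ∈ p.1 :=
  (π.nonempty_of_mem_parts p.2).choose_spec

lemma part_rep (p : {t // t ∈ π.parts}) : π.part (rep π p) = p.1 :=
  π.part_eq_of_mem p.2 (rep_mem π p)

noncomputable def Phi (f : {f : Fin n → Fin m // kpart f = π}) :
    {t // t ∈ π.parts} ↪ Fin m where
  toFun p := f.1 (rep π p)
  inj' p q h := by
    have h1 := (kpart_eq_iff.1 f.2 (rep π p) (rep π q)).1 h
    rw [part_rep] at h1
    exact Subtype.ext (π.eq_of_mem_parts p.2 q.2 h1 (rep_mem π q))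

lemma Phi_bij : Function.Bijective (Phi (m := m) π) := by
  constructor
  · rintro ⟨f, hf⟩ ⟨g, hg⟩ h
    have hfg : ∀ p, f (rep π p) = g (rep π p) := fun p => DFunLike.congr_fun h p
    refine Subtype.ext (funext fun a => ?_)
    have hpa : π.part a ∈ π.parts := π.part_mem.2 (mem_univ a)
    have h1 : f a = f (rep π ⟨π.part a, hpa⟩) :=
      (kpart_eq_iff.1 hf a _).2 (rep_mem π ⟨π.part a, hpa⟩)
    have h2 : g a = g (rep π ⟨π.part a, hpa⟩) :=
      (kpart_eq_iff.1 hg a _).2 (rep_mem π ⟨π.part a, hpa⟩)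
    show f a = g a
    rw [h1, h2, hfg]
  · intro g
    refine ⟨⟨fun a => g ⟨π.part a, π.part_mem.2 (mem_univ a)⟩, ?_⟩, ?_⟩
    · rw [kpart_eq_iff]
      intro a b
      constructor
      · intro h
        have h2 : π.part a = π.part b := congrArg Subtype.val (g.injective h)
        exact (π.mem_part_iff_part_eq_part (mem_univ b) (mem_univ a)).2 h2.symm
      · intro h
        exact congrArg g (Subtype.ext
          ((π.mem_part_iff_part_eq_part (mem_univ b) (mem_univ a)).1 h).symm)
    · ext p
      exact congrArg (fun q => ((g q : Fin m) : ℕ)) (Subtype.ext (part_rep π p))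

lemma card_kpart_fiber : Fintype.card {f : Fin n → Fin m // kpart f = π}
    = m.descFactorial π.parts.card := by
  rw [Fintype.card_of_bijective (Phi_bij π), Fintype.card_embedding_eq, Fintype.card_coe,
    Fintype.card_fin]
lemma inf_kpart_eq_bot_iff {i : Fin k → ℕ} (F : ∀ j, Fin n → Fin (i j)) :
    univ.inf (fun j => kpart (F j)) = ⊥ ↔ Function.Injective (fun x (j : Fin k) => F j x) := by
  rw [eq_bot_iff_part]
  constructor
  · intro h x y hxy
    refine h x (mem_univ x) y ?_
    rw [part_finset_inf, mem_finset_inf]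
    intro j _
    exact mem_kpart_part.2 (congrFun hxy j)
  · intro h a _ b hb
    rw [part_finset_inf, mem_finset_inf] at hb
    exact h (funext fun j => mem_kpart_part.1 (hb j (mem_univ j)))

/-- fiber decomposition equiv -/
def fiberSigma {γ : Type*} {δ : Type*} (κ : γ → δ) (P : δ → Prop) :
    {F : γ // P (κ F)} ≃ Σ c : Subtype P, {F : γ // κ F = c.1} where
  toFun F := ⟨⟨κ F.1, F.2⟩, ⟨F.1, rfl⟩⟩
  invFun x := ⟨x.2.1, by rw [x.2.2]; exact x.1.2⟩
  left_inv := by rintro ⟨F, hF⟩; rfl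
  right_inv := by rintro ⟨⟨c, hc⟩, ⟨F, hF⟩⟩; change κ F = c at hF; subst hF; rfl

/-- The key counting identity. -/
lemma key_count (i : Fin k → ℕ) :
    (∏ j, i j).descFactorial n =
      ∑ π : {π : Fin k → Finpartition (univ : Finset (Fin n)) // univ.inf π = ⊥},
        ∏ j, (i j).descFactorial ((π.1 j).parts.card) := by
  classical
  have e1 : (Fin n ↪ (∀ j, Fin (i j))) ≃
      {F : ∀ j, Fin n → Fin (i j) // univ.inf (fun j => kpart (F j)) = ⊥} :=
    (Equiv.subtypeInjectiveEquivEmbedding _ _).symm.trans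
      ((Equiv.subtypeEquiv (p := fun g : Fin n → ∀ j, Fin (i j) => Function.Injective g)
          (q := fun F : ∀ j, Fin n → Fin (i j) => Function.Injective fun x j => F j x)
          (Equiv.piComm fun _ j => Fin (i j)) (fun g => Iff.rfl)).trans
        (Equiv.subtypeEquivRight fun F => (inf_kpart_eq_bot_iff F).symm))
  have e2 : {F : ∀ j, Fin n → Fin (i j) // univ.inf (fun j => kpart (F j)) = ⊥} ≃
      Σ π : {π : Fin k → Finpartition (univ : Finset (Fin n)) // univ.inf π = ⊥},
        ∀ j, {f : Fin n → Fin (i j) // kpart f = π.1 j} := by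
    refine (fiberSigma (fun (F : ∀ j, Fin n → Fin (i j)) (j : Fin k) => kpart (F j)) (fun π => univ.inf π = ⊥)).trans ?_
    refine Equiv.sigmaCongrRight fun π => ?_
    refine (Equiv.subtypeEquivRight fun F => funext_iff).trans (Equiv.subtypePiEquivPi (p := fun j (f : Fin n → Fin (i j)) => kpart f = π.1 j))
  have := Fintype.card_congr (e1.trans e2)
  rw [Fintype.card_embedding_eq, Fintype.card_sigma] at this
  simp only [Fintype.card_pi, Fintype.card_fin, card_kpart_fiber] at this
  simpa using this

noncomputable def E : ℝ≥0∞ := ∑' m : ℕ, ((m.factorial : ℝ≥0∞))⁻¹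

lemma E_eq : E = ENNReal.ofReal (Real.exp 1) := by
  have hsum : Summable fun j : ℕ => (j.factorial : ℝ)⁻¹ := by
    simpa [one_div] using Real.summable_pow_div_factorial 1
  have hexp : Real.exp 1 = ∑' j : ℕ, (j.factorial : ℝ)⁻¹ := by
    rw [Real.exp_eq_exp_ℝ, NormedSpace.exp_eq_tsum ℝ]
    simp
  rw [hexp, ENNReal.ofReal_tsum_of_nonneg (fun j => by positivity) hsum]
  refine tsum_congr fun j => ?_
  rw [ENNReal.ofReal_inv_of_pos (by positivity), ENNReal.ofReal_natCast]

lemma E_ne_top : E ≠ ⊤ := by rw [E_eq]; exact ENNReal.ofReal_ne_top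

lemma E_toReal : E.toReal = Real.exp 1 := by
  rw [E_eq, ENNReal.toReal_ofReal (Real.exp_pos 1).le]

lemma tsum_pnat_descFactorial (b : ℕ) (hb : 1 ≤ b) :
    ∑' i : ℕ+, (((i : ℕ).descFactorial b : ℝ≥0∞) * (((i : ℕ).factorial : ℝ≥0∞))⁻¹) = E := by
  set f : ℕ → ℝ≥0∞ := fun i => ((i.descFactorial b : ℝ≥0∞) * ((i.factorial : ℝ≥0∞))⁻¹) with hf
  have h1 : ∑' i : ℕ+, f (i : ℕ) = ∑' i : ℕ, f i := by
    refine Function.Injective.tsum_eq (fun a b h => PNat.coe_injective h) ?_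
    intro x hx
    rcases Nat.eq_zero_or_pos x with rfl | hpos
    · exact absurd (by simp [hf, Nat.descFactorial_eq_zero_iff_lt.2 hb]) hx
    · exact ⟨⟨x, hpos⟩, rfl⟩
  rw [h1, E]
  refine (Function.Injective.tsum_eq (g := fun j : ℕ => j + b) (add_left_injective b) ?_).symm.trans ?_
  · intro x hx
    rcases le_or_gt b x with hbx | hxb
    · exact ⟨x - b, Nat.sub_add_cancel hbx⟩
    · exact absurd (by simp [hf, Nat.descFactorial_eq_zero_iff_lt.2 hxb]) hx
  · refine tsum_congr fun j => ?_
    have hkey : j.factorial * (j + b).descFactorial b = (j + b).factorial := by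
      simpa [Nat.add_sub_cancel] using Nat.factorial_mul_descFactorial (Nat.le_add_left b j)
    have hd0 : ((j + b).descFactorial b : ℝ≥0∞) ≠ 0 := by
      have : (j + b).descFactorial b ≠ 0 := by
        rw [Ne, Nat.descFactorial_eq_zero_iff_lt]
        exact not_lt.2 (Nat.le_add_left b j)
      exact_mod_cast this
    have hdt : ((j + b).descFactorial b : ℝ≥0∞) ≠ ⊤ := ENNReal.natCast_ne_top _
    rw [hf]
    simp only
    rw [← hkey]
    push_cast
    rw [ENNReal.mul_inv (Or.inl (by exact_mod_cast (Nat.factorial_pos j).ne')) (Or.inl (ENNReal.natCast_ne_top _))]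
    rw [← mul_assoc, mul_comm (((j + b).descFactorial b : ℝ≥0∞)) _, mul_assoc,
      ENNReal.mul_inv_cancel hd0 hdt, mul_one]

lemma tsum_pi_prod {k : ℕ} (g : Fin k → ℕ+ → ℝ≥0∞) :
    ∑' i : Fin k → ℕ+, ∏ j, g j (i j) = ∏ j, ∑' x : ℕ+, g j x := by
  induction k with
  | zero => simp [tsum_eq_single (fun (j : Fin 0) => (1 : ℕ+)) (fun b hb => absurd (funext fun j => j.elim0) hb)]
  | succ k ih =>
      rw [← (Fin.consEquiv fun _ : Fin (k+1) => ℕ+).tsum_eq]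
      have : ∀ p : ℕ+ × (Fin k → ℕ+),
          (∏ j, g j ((Fin.consEquiv fun _ : Fin (k+1) => ℕ+) p j)) = g 0 p.1 * ∏ j, g j.succ (p.2 j) := by
        intro p
        rw [Fin.prod_univ_succ]
        simp [Fin.consEquiv]
      rw [tsum_congr this, ENNReal.tsum_prod']
      simp only
      calc ∑' (a : ℕ+), ∑' (b : Fin k → ℕ+), g 0 a * ∏ j, g j.succ (b j)
          = ∑' (a : ℕ+), g 0 a * ∑' (b : Fin k → ℕ+), ∏ j, g j.succ (b j) := by
            refine tsum_congr fun a => ?_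
            rw [ENNReal.tsum_mul_left]
        _ = (∑' (a : ℕ+), g 0 a) * ∑' (b : Fin k → ℕ+), ∏ j, g j.succ (b j) := by
            rw [ENNReal.tsum_mul_right]
        _ = ∏ j, ∑' x : ℕ+, g j x := by
            rw [ih, Fin.prod_univ_succ]


lemma parts_card_pos {n : ℕ} (hn : 1 ≤ n) (π : Finpartition (univ : Finset (Fin n))) :
    1 ≤ π.parts.card := by
  refine Finset.card_pos.2 (π.parts_nonempty ?_)
  rw [bot_eq_empty, ← Finset.nonempty_iff_ne_empty]
  exact ⟨⟨0, hn⟩, mem_univ _⟩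

lemma main_ennreal (k n : ℕ) (hn : 1 ≤ n) :
    ∑' i : Fin k → ℕ+, (((∏ j, (i j : ℕ)).descFactorial n : ℝ≥0∞) *
        (∏ j, ((i j : ℕ).factorial : ℝ≥0∞))⁻¹) =
      (Nat.card {π : Fin k → Finpartition (Finset.univ : Finset (Fin n)) //
        Finset.univ.inf π = ⊥} : ℝ≥0∞) * E ^ k := by
  have hper : ∀ i : Fin k → ℕ+,
      (((∏ j, (i j : ℕ)).descFactorial n : ℝ≥0∞) * (∏ j, ((i j : ℕ).factorial : ℝ≥0∞))⁻¹) =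
      ∑ π : {π : Fin k → Finpartition (Finset.univ : Finset (Fin n)) //
          Finset.univ.inf π = ⊥}, ∏ j, (((i j : ℕ).descFactorial ((π.1 j).parts.card) : ℝ≥0∞)
        * (((i j : ℕ).factorial : ℝ≥0∞))⁻¹) := by
    intro i
    have hk := key_count (n := n) (fun j => (i j : ℕ))
    have hcast : ((∏ j, (i j : ℕ)).descFactorial n : ℝ≥0∞) =
        ∑ π : {π : Fin k → Finpartition (Finset.univ : Finset (Fin n)) //
          Finset.univ.inf π = ⊥}, ∏ j, ((i j : ℕ).descFactorial ((π.1 j).parts.card) : ℝ≥0∞) := by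
      exact_mod_cast congrArg (Nat.cast : ℕ → ℝ≥0∞) hk
    rw [hcast, Finset.sum_mul]
    refine Finset.sum_congr rfl fun π _ => ?_
    rw [Finset.prod_mul_distrib,
      ENNReal.prod_inv_distrib (fun a _ b _ _ => Or.inl (Nat.cast_ne_zero.2 (Nat.factorial_pos _).ne'))]
  rw [tsum_congr hper, Summable.tsum_finsetSum (fun π _ => ENNReal.summable)]
  have hE : ∀ π : {π : Fin k → Finpartition (Finset.univ : Finset (Fin n)) //
      Finset.univ.inf π = ⊥},
      ∑' i : Fin k → ℕ+, ∏ j, (((i j : ℕ).descFactorial ((π.1 j).parts.card) : ℝ≥0∞)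
        * (((i j : ℕ).factorial : ℝ≥0∞))⁻¹) = E ^ k := by
    intro π
    rw [tsum_pi_prod (fun j (x : ℕ+) => (((x : ℕ).descFactorial ((π.1 j).parts.card) : ℝ≥0∞)
        * (((x : ℕ).factorial : ℝ≥0∞))⁻¹))]
    rw [Finset.prod_congr rfl fun j _ =>
      tsum_pnat_descFactorial ((π.1 j).parts.card) (parts_card_pos hn (π.1 j))]
    rw [Finset.prod_const, Finset.card_univ, Fintype.card_fin]
  rw [Finset.sum_congr rfl (fun π _ => hE π), Finset.sum_const, Finset.card_univ,
    nsmul_eq_mul, Nat.card_eq_fintype_card]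

end PittelAux


/-- Pittel's formula: for `k ≥ 1` and `n ≥ 1`, the number of `k`-tuples of set
partitions of an `n`-set whose meet is `⊥` (the partition into singletons) equals
`e^{−k} · ∑_{i₁,…,i_k ≥ 1} (i₁⋯i_k)_n / (i₁!⋯i_k!)`, where `(m)_n` is the falling
factorial, and the series converges. -/
theorem card_kTuples_meet_bot (k n : ℕ) (hk : 1 ≤ k) (hn : 1 ≤ n) :
    (Nat.card {π : Fin k → Finpartition (Finset.univ : Finset (Fin n)) //
        Finset.univ.inf π = ⊥} : ℝ) =
      Real.exp (-(k : ℝ)) *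
        ∑' i : Fin k → ℕ+,
          (((∏ j, (i j : ℕ)).descFactorial n : ℝ) / ∏ j, ((i j : ℕ).factorial : ℝ)) ∧
    Summable (fun i : Fin k → ℕ+ =>
      ((∏ j, (i j : ℕ)).descFactorial n : ℝ) / ∏ j, ((i j : ℕ).factorial : ℝ)) := by
  classical
  set F : (Fin k → ℕ+) → ℝ≥0∞ := fun i => (((∏ j, (i j : ℕ)).descFactorial n : ℝ≥0∞) *
    (∏ j, ((i j : ℕ).factorial : ℝ≥0∞))⁻¹) with hF
  have hFtop : ∀ i, F i ≠ ⊤ := by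
    intro i
    refine ENNReal.mul_ne_top (ENNReal.natCast_ne_top _) ?_
    rw [ENNReal.inv_ne_top]
    exact Finset.prod_ne_zero_iff.2 fun j _ => Nat.cast_ne_zero.2 (Nat.factorial_pos _).ne'
  have hreal : ∀ i : Fin k → ℕ+,
      ((∏ j, (i j : ℕ)).descFactorial n : ℝ) / ∏ j, ((i j : ℕ).factorial : ℝ) = (F i).toReal := by
    intro i
    rw [hF]
    simp only
    rw [ENNReal.toReal_mul, ENNReal.toReal_inv, ENNReal.toReal_natCast, ENNReal.toReal_prod]
    simp [div_eq_mul_inv]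
  have hsum := PittelAux.main_ennreal k n hn
  have htsumtop : ∑' i, F i ≠ ⊤ := by
    rw [hF, hsum]
    exact ENNReal.mul_ne_top (ENNReal.natCast_ne_top _) (ENNReal.pow_ne_top PittelAux.E_ne_top)
  have hsummable : Summable fun i : Fin k → ℕ+ => (F i).toReal :=
    ENNReal.summable_toReal htsumtop
  have htsum : ∑' i : Fin k → ℕ+, (F i).toReal = (∑' i, F i).toReal :=
    (ENNReal.tsum_toReal_eq hFtop).symm
  constructor
  · have hmain : (∑' i : Fin k → ℕ+,
        (((∏ j, (i j : ℕ)).descFactorial n : ℝ) / ∏ j, ((i j : ℕ).factorial : ℝ))) =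
        (Nat.card {π : Fin k → Finpartition (Finset.univ : Finset (Fin n)) //
          Finset.univ.inf π = ⊥} : ℝ) * Real.exp 1 ^ k := by
      rw [tsum_congr hreal, htsum, hF, hsum, ENNReal.toReal_mul, ENNReal.toReal_pow,
        ENNReal.toReal_natCast, PittelAux.E_toReal]
    rw [hmain, Real.exp_one_pow, Real.exp_neg]
    field_simp
  · exact (summable_congr fun i => by rw [hreal i]).2 hsummable
end

section
/- For all integers k ≥ 1 and n ≥ 1, the number p_k(n) of k-tuples (π₁, …, π_k) of set partitions of an n-element set whose meet is the partition into singletons satisfies, as a real number, p_k(n) = e^{−k} · Σ_{l ≥ n} r_k(l) / (l − n)!, where r_k(l) = Σ_{d₁·d₂⋯d_k = l} l! / (d₁!·d₂!⋯d_k!) is the number of k-rectangles on an l-element set, and the series converges. -/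
/-- The number of `k`-rectangles on an `l`-element set,
`r_k(l) = ∑_{d₁⋯d_k = l} l!/(d₁!⋯d_k!)` (sum over `k`-tuples of positive integers
with product `l`). -/
def kRectCount (k l : ℕ) : ℕ :=
  ∑ d ∈ (Fintype.piFinset fun _ : Fin k => Finset.range (l + 1)).filter
      (fun d => ∏ i, d i = l),
    l.factorial / ∏ i, (d i).factorial

open Finset Function

namespace KRectAux

variable {n : ℕ}

/-- The kernel setoid of a function. -/
def kerSetoid {β : Type*} (f : Fin n → β) : Setoid (Fin n) :=
  ⟨fun a b => f a = f b, ⟨fun _ => rfl, fun h => h.symm, fun h1 h2 => h1.trans h2⟩⟩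

instance {β : Type*} [DecidableEq β] (f : Fin n → β) : DecidableRel (kerSetoid f).r :=
  fun a b => inferInstanceAs (Decidable (f a = f b))

/-- The kernel finpartition of a function. -/
def ker {β : Type*} [DecidableEq β] (f : Fin n → β) : Finpartition (univ : Finset (Fin n)) :=
  Finpartition.ofSetoid (kerSetoid f)

lemma mem_ker_part {β : Type*} [DecidableEq β] (f : Fin n → β) (x y : Fin n) :
    y ∈ (ker f).part x ↔ f x = f y :=
  Finpartition.mem_part_ofSetoid_iff_rel

lemma part_mem_iff (P : Finpartition (univ : Finset (Fin n))) (x y : Fin n) :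
    y ∈ P.part x ↔ P.part y = P.part x :=
  P.mem_part_iff_part_eq_part (mem_univ y) (mem_univ x)

lemma ext_part {P Q : Finpartition (univ : Finset (Fin n))}
    (h : ∀ x, P.part x = Q.part x) : P = Q := by
  ext B
  constructor
  · intro hB
    obtain ⟨x, hx⟩ := P.nonempty_of_mem_parts hB
    have h2 := P.part_eq_of_mem hB hx
    rw [h] at h2
    exact h2 ▸ Q.part_mem.2 (mem_univ x)
  · intro hB
    obtain ⟨x, hx⟩ := Q.nonempty_of_mem_parts hB
    have h2 := Q.part_eq_of_mem hB hx
    rw [← h] at h2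
    exact h2 ▸ P.part_mem.2 (mem_univ x)

lemma ker_eq_iff {β : Type*} [DecidableEq β] (f : Fin n → β)
    (P : Finpartition (univ : Finset (Fin n))) :
    ker f = P ↔ ∀ x y, (f x = f y ↔ P.part y = P.part x) := by
  constructor
  · rintro rfl x y
    exact (mem_ker_part f x y).symm.trans (part_mem_iff _ x y)
  · intro h
    apply ext_part
    intro x
    ext y
    rw [mem_ker_part, h x y, part_mem_iff]

lemma part_inf (P Q : Finpartition (univ : Finset (Fin n))) (x : Fin n) :
    (P ⊓ Q).part x = P.part x ∩ Q.part x := by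
  have hx : x ∈ P.part x ∩ Q.part x :=
    mem_inter.mpr ⟨P.mem_part (mem_univ x), Q.mem_part (mem_univ x)⟩
  apply Finpartition.part_eq_of_mem _ _ hx
  rw [Finpartition.parts_inf]
  refine mem_erase.mpr ⟨?_, ?_⟩
  · rw [bot_eq_empty]
    exact nonempty_iff_ne_empty.mp ⟨x, hx⟩
  · refine mem_image.mpr ⟨(P.part x, Q.part x), mem_product.mpr
      ⟨P.part_mem.2 (mem_univ x), Q.part_mem.2 (mem_univ x)⟩, rfl⟩

lemma part_top (x : Fin n) : (⊤ : Finpartition (univ : Finset (Fin n))).part x = univ := by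
  have hx := (⊤ : Finpartition (univ : Finset (Fin n))).part_mem.2 (mem_univ x)
  have h := Finpartition.parts_top_subset (univ : Finset (Fin n)) hx
  rwa [mem_singleton] at h

lemma part_finset_inf {ι : Type*} (s : Finset ι) (π : ι → Finpartition (univ : Finset (Fin n)))
    (x : Fin n) :
    (s.inf π).part x = univ.filter fun y => ∀ i ∈ s, y ∈ (π i).part x := by
  classical
  induction s using Finset.cons_induction with
  | empty =>
    rw [Finset.inf_empty, part_top]
    ext y
    simp
  | cons a s ha ih =>
    rw [Finset.inf_cons, part_inf, ih]
    ext y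
    simp [Finset.forall_mem_cons, and_assoc]

lemma eq_bot_iff_part (P : Finpartition (univ : Finset (Fin n))) :
    P = ⊥ ↔ ∀ x y : Fin n, P.part x = P.part y → x = y := by
  constructor
  · rintro rfl x y h
    have hb : ∀ z : Fin n, (⊥ : Finpartition (univ : Finset (Fin n))).part z = {z} := by
      intro z
      refine Finpartition.part_eq_of_mem _ ?_ (mem_singleton_self z)
      rw [Finpartition.mem_bot_iff]
      exact ⟨z, mem_univ z, rfl⟩
    rw [hb, hb] at h
    exact singleton_injective h
  · intro h
    refine le_antisymm ?_ bot_le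
    intro B hB
    obtain ⟨x, hx⟩ := P.nonempty_of_mem_parts hB
    refine ⟨{x}, ?_, ?_⟩
    · rw [Finpartition.mem_bot_iff]
      exact ⟨x, mem_univ x, rfl⟩
    · intro y hy
      have hxy : P.part y = P.part x := by
        rw [P.part_eq_of_mem hB hy, P.part_eq_of_mem hB hx]
      simp [h y x hxy]

lemma inf_ker_eq_bot_iff {k : ℕ} {d : Fin k → ℕ} (F : ∀ i, Fin n → Fin (d i)) :
    univ.inf (fun i => ker (F i)) = ⊥ ↔ Function.Injective (fun x i => F i x) := by
  classical
  have key : ∀ x y : Fin n,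
      ((univ.inf fun i => ker (F i)).part y = (univ.inf fun i => ker (F i)).part x ↔
        ∀ i, F i x = F i y) := by
    intro x y
    rw [← part_mem_iff, part_finset_inf]
    simp [mem_ker_part]
  rw [eq_bot_iff_part]
  constructor
  · intro h x y hxy
    exact (h y x ((key x y).mpr fun i => congrFun hxy i)).symm
  · intro hinj x y hxy
    exact hinj (funext fun i => ((key y x).mp hxy i).symm)

lemma card_ker_eq (m : ℕ) (P : Finpartition (univ : Finset (Fin n))) :
    (univ.filter fun f : Fin n → Fin m => ker f = P).card = m.descFactorial P.parts.card := by
  classical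
  rw [← Fintype.card_subtype]
  have hemb : Fintype.card (↥P.parts ↪ Fin m) = m.descFactorial P.parts.card := by
    rw [Fintype.card_embedding_eq, Fintype.card_fin, Fintype.card_coe]
  rw [← hemb]
  apply Fintype.card_congr
  let pt : Fin n → ↥P.parts := fun x => ⟨P.part x, P.part_mem.2 (mem_univ x)⟩
  let Ψ : (↥P.parts ↪ Fin m) → {f : Fin n → Fin m // ker f = P} := fun g =>
    ⟨fun x => g (pt x), by
      rw [ker_eq_iff]
      intro x y
      constructor
      · intro h
        exact (congrArg Subtype.val (g.injective h)).symm
      · intro h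
        exact congrArg g (Subtype.ext h.symm)⟩
  have hinj : Function.Injective Ψ := by
    intro g g' h
    apply DFunLike.ext
    rintro ⟨B, hB⟩
    obtain ⟨x, hx⟩ := P.nonempty_of_mem_parts hB
    have hpx : pt x = ⟨B, hB⟩ := Subtype.ext (P.part_eq_of_mem hB hx)
    have h2 : g (pt x) = g' (pt x) := congrFun (congrArg Subtype.val h) x
    rwa [hpx] at h2
  have hsurj : Function.Surjective Ψ := by
    rintro ⟨f, hf⟩
    rw [ker_eq_iff] at hf
    have rep : ∀ B : ↥P.parts, ∃ x, x ∈ B.1 := fun B => P.nonempty_of_mem_parts B.2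
    choose r hr using rep
    have hpr : ∀ B : ↥P.parts, P.part (r B) = B.1 := fun B => P.part_eq_of_mem B.2 (hr B)
    refine ⟨⟨fun B => f (r B), ?_⟩, ?_⟩
    · intro B B' h
      have h2 : P.part (r B') = P.part (r B) := (hf _ _).mp h
      rw [hpr, hpr] at h2
      exact (Subtype.ext h2).symm
    · apply Subtype.ext
      funext x
      show f (r (pt x)) = f x
      rw [hf]
      exact (hpr (pt x)).symm
  exact (Equiv.ofBijective Ψ ⟨hinj, hsurj⟩).symm

lemma core (k : ℕ) (d : Fin k → ℕ) :
    (∏ i, d i).descFactorial n =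
      ∑ π ∈ univ.filter
          (fun π : Fin k → Finpartition (univ : Finset (Fin n)) => univ.inf π = ⊥),
        ∏ i, (d i).descFactorial (π i).parts.card := by
  classical
  have e1 : (Fin n ↪ ∀ i, Fin (d i)) ≃
      {F : ∀ i, Fin n → Fin (d i) // univ.inf (fun i => ker (F i)) = ⊥} :=
    { toFun := fun g => ⟨fun i x => g x i, (inf_ker_eq_bot_iff _).mpr
        (fun x y hxy => g.injective (funext fun i => congrFun hxy i))⟩
      invFun := fun F => ⟨fun x i => F.1 i x, (inf_ker_eq_bot_iff F.1).mp F.2⟩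
      left_inv := fun g => rfl
      right_inv := fun F => rfl }
  have h1 : (∏ i, d i).descFactorial n =
      Fintype.card {F : ∀ i, Fin n → Fin (d i) // univ.inf (fun i => ker (F i)) = ⊥} := by
    rw [← Fintype.card_congr e1, Fintype.card_embedding_eq, Fintype.card_fin, Fintype.card_pi]
    simp
  rw [h1, Fintype.card_subtype]
  rw [Finset.card_eq_sum_card_fiberwise
    (f := fun F (i : Fin k) => ker (F i))
    (t := univ.filter fun π : Fin k → Finpartition (univ : Finset (Fin n)) => univ.inf π = ⊥)
    (fun F hF => by simpa using (mem_filter.mp hF).2)]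
  apply Finset.sum_congr rfl
  intro π hπ
  rw [mem_filter] at hπ
  have hfil : ((univ.filter fun F : ∀ i, Fin n → Fin (d i) =>
        univ.inf (fun i => ker (F i)) = ⊥).filter
        (fun F => (fun i => ker (F i)) = π)) =
      univ.filter (fun F : ∀ i, Fin n → Fin (d i) => ∀ i, ker (F i) = π i) := by
    ext F
    simp only [mem_filter, mem_univ, true_and, funext_iff]
    constructor
    · rintro ⟨-, h⟩; exact h
    · intro h
      refine ⟨?_, h⟩
      have : (fun i => ker (F i)) = π := funext h
      rw [this]
      exact hπ.2
  rw [hfil, ← Fintype.card_subtype]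
  rw [Fintype.card_congr (Equiv.subtypePiEquivPi
    (p := fun i (f : Fin n → Fin (d i)) => ker f = π i)), Fintype.card_pi]
  exact Finset.prod_congr rfl fun i _ => by rw [Fintype.card_subtype, card_ker_eq]

lemma fac_mul_fac_dvd {a b : ℕ} (ha : 1 ≤ a) (hb : 1 ≤ b) :
    a.factorial * b.factorial ∣ (a * b).factorial := by
  rcases eq_or_lt_of_le ha with h | h2a
  · simp [← h]
  rcases eq_or_lt_of_le hb with h | h2b
  · simp [← h]
  calc a.factorial * b.factorial ∣ (a + b).factorial :=
        Nat.factorial_mul_factorial_dvd_factorial_add a b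
    _ ∣ (a * b).factorial := Nat.factorial_dvd_factorial (Nat.add_le_mul h2a h2b)

lemma prod_factorial_dvd {ι : Type*} (s : Finset ι) (d : ι → ℕ) (hd : ∀ i ∈ s, 1 ≤ d i) :
    (∏ i ∈ s, (d i).factorial) ∣ (∏ i ∈ s, d i).factorial := by
  classical
  induction s using Finset.cons_induction with
  | empty => simp
  | cons a s ha ih =>
    rw [prod_cons, prod_cons]
    have h1 : 1 ≤ d a := hd a (mem_cons_self a s)
    have h2 : 1 ≤ ∏ i ∈ s, d i := Finset.one_le_prod' fun i hi => hd i (mem_cons_of_mem hi)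
    calc (d a).factorial * ∏ i ∈ s, (d i).factorial ∣
          (d a).factorial * (∏ i ∈ s, d i).factorial :=
        mul_dvd_mul_left _ (ih fun i hi => hd i (mem_cons_of_mem hi))
      _ ∣ ((d a) * ∏ i ∈ s, d i).factorial := fac_mul_fac_dvd h1 h2

end KRectAux


namespace KRectAux

open scoped ENNReal

lemma natCast_div_ennreal {a b : ℕ} (h : b ∣ a) (hb : b ≠ 0) :
    ((a / b : ℕ) : ℝ≥0∞) = (a : ℝ≥0∞) / (b : ℝ≥0∞) := by
  obtain ⟨c, rfl⟩ := h
  rw [Nat.mul_div_cancel_left c (Nat.pos_of_ne_zero hb), Nat.cast_mul, mul_comm,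
    mul_div_assoc, ENNReal.div_self (by exact_mod_cast hb) (ENNReal.natCast_ne_top b), mul_one]

lemma tsum_descFactorial_div (m : ℕ) (hm : 1 ≤ m) :
    ∑' d : ℕ, ((d.descFactorial m : ℝ≥0∞) * ((d.factorial : ℝ≥0∞))⁻¹) =
      ∑' j : ℕ, ((j.factorial : ℝ≥0∞))⁻¹ := by
  rw [← Function.Injective.tsum_eq (g := fun j => j + m) (add_left_injective m) ?hsupp]
  case hsupp =>
    intro d hd
    rcases lt_or_ge d m with h | h
    · exfalso
      apply hd
      simp [Nat.descFactorial_eq_zero_iff_lt.mpr h]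
    · exact ⟨d - m, by show d - m + m = d; omega⟩
  apply tsum_congr
  intro j
  have hfac : ((j + m).factorial : ℝ≥0∞) =
      ((j + m).descFactorial m : ℝ≥0∞) * (j.factorial : ℝ≥0∞) := by
    have h := Nat.factorial_mul_descFactorial (n := j + m) (k := m) (Nat.le_add_left m j)
    rw [Nat.add_sub_cancel] at h
    rw [← h]
    push_cast
    ring
  have hD0 : ((j + m).descFactorial m : ℝ≥0∞) ≠ 0 := by
    rw [Ne, Nat.cast_eq_zero, Nat.descFactorial_eq_zero_iff_lt]
    omega
  have hDt : ((j + m).descFactorial m : ℝ≥0∞) ≠ ∞ := ENNReal.natCast_ne_top _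
  rw [hfac, ENNReal.mul_inv (Or.inl hD0) (Or.inl hDt), ← mul_assoc,
    ENNReal.mul_inv_cancel hD0 hDt, one_mul]

lemma tsum_pi_prod : ∀ (k : ℕ) (g : Fin k → ℕ → ℝ≥0∞),
    ∑' d : Fin k → ℕ, ∏ i, g i (d i) = ∏ i, ∑' x : ℕ, g i x := by
  intro k
  induction k with
  | zero =>
    intro g
    rw [tsum_eq_single (default : Fin 0 → ℕ) (fun b hb => absurd (Subsingleton.elim b default) hb)]
    simp
  | succ k ih =>
    intro g
    rw [← (Fin.consEquiv (fun _ : Fin (k + 1) => ℕ)).tsum_eq, ENNReal.tsum_prod']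
    have hterm : ∀ (a : ℕ) (b : Fin k → ℕ),
        (∏ i, g i ((Fin.consEquiv (fun _ : Fin (k + 1) => ℕ)) (a, b) i)) =
          g 0 a * ∏ i : Fin k, g i.succ (b i) := by
      intro a b
      rw [Fin.prod_univ_succ]
      simp [Fin.consEquiv]
    calc ∑' (a : ℕ) (b : Fin k → ℕ),
          ∏ i, g i ((Fin.consEquiv (fun _ : Fin (k + 1) => ℕ)) (a, b) i)
        = ∑' (a : ℕ), g 0 a * ∑' b : Fin k → ℕ, ∏ i : Fin k, g i.succ (b i) := by
          apply tsum_congr; intro a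
          rw [← ENNReal.tsum_mul_left]
          exact tsum_congr fun b => hterm a b
      _ = (∑' a : ℕ, g 0 a) * ∑' b : Fin k → ℕ, ∏ i : Fin k, g i.succ (b i) :=
          ENNReal.tsum_mul_right
      _ = ∏ i : Fin (k + 1), ∑' x : ℕ, g i x := by
          rw [ih (fun i => g i.succ), Fin.prod_univ_succ]

end KRectAux

open scoped ENNReal

/-- For `k ≥ 1` and `n ≥ 1`, the number `p_k(n)` of `k`-tuples of set partitions of an
`n`-set whose meet is `⊥` (the partition into singletons) satisfies
`p_k(n) = e^{−k} · ∑_{l ≥ n} r_k(l)/(l−n)!`, and the series converges. -/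
theorem card_kTuples_meet_bot_eq_sum_kRect (k n : ℕ) (hk : 1 ≤ k) (hn : 1 ≤ n) :
    (Nat.card {π : Fin k → Finpartition (Finset.univ : Finset (Fin n)) //
        Finset.univ.inf π = ⊥} : ℝ) =
      Real.exp (-(k : ℝ)) *
        ∑' l : ℕ, (if n ≤ l then (kRectCount k l : ℝ) / ((l - n).factorial : ℝ) else 0) ∧
    Summable (fun l : ℕ =>
      if n ≤ l then (kRectCount k l : ℝ) / ((l - n).factorial : ℝ) else 0) := by
  classical
  -- notation
  set Pi0 : Finset (Fin k → Finpartition (univ : Finset (Fin n))) :=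
    univ.filter (fun π : Fin k → Finpartition (univ : Finset (Fin n)) => univ.inf π = ⊥) with hPi0
  set p : ℕ := Pi0.card with hp
  set E : ℝ≥0∞ := ∑' j : ℕ, ((j.factorial : ℝ≥0∞))⁻¹ with hEdef
  set H : (Fin k → ℕ) → ℝ≥0∞ := fun d =>
    ((∏ i, d i).descFactorial n : ℝ≥0∞) * ((∏ i, (d i).factorial : ℕ) : ℝ≥0∞)⁻¹ with hHdef
  set t : ℕ → ℝ≥0∞ := fun l =>
    if n ≤ l then (kRectCount k l : ℝ≥0∞) / ((l - n).factorial : ℝ≥0∞) else 0 with htdef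
  -- Step A
  have hA : ∀ l : ℕ, t l = ∑' d : Fin k → ℕ, (if (∏ i, d i) = l then H d else 0) := by
    intro l
    by_cases hl : n ≤ l
    · have hl1 : 1 ≤ l := le_trans hn hl
      have hsupp : ∀ d ∉ (Fintype.piFinset fun _ : Fin k => Finset.range (l + 1)).filter
          (fun d => ∏ i, d i = l),
          (if (∏ i, d i) = l then H d else 0) = 0 := by
        intro d hd
        by_cases hpd : (∏ i, d i) = l
        · exfalso
          apply hd
          rw [mem_filter, Fintype.mem_piFinset]
          refine ⟨fun i => ?_, hpd⟩
          rw [Finset.mem_range, Nat.lt_succ_iff]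
          exact Nat.le_of_dvd hl1 (hpd ▸ Finset.dvd_prod_of_mem d (mem_univ i))
        · exact if_neg hpd
      have hsum := tsum_eq_sum (L := SummationFilter.unconditional _)
        (f := fun d : Fin k → ℕ => if (∏ i, d i) = l then H d else 0) hsupp
      rw [hsum, htdef]
      simp only [if_pos hl]
      rw [kRectCount, Nat.cast_sum, div_eq_mul_inv, Finset.sum_mul]
      apply Finset.sum_congr rfl
      intro d hd
      rw [mem_filter, Fintype.mem_piFinset] at hd
      obtain ⟨hdr, hdp⟩ := hd
      have hd1 : ∀ i, 1 ≤ d i := fun i =>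
        Nat.pos_of_dvd_of_pos (hdp ▸ Finset.dvd_prod_of_mem d (mem_univ i)) hl1
      rw [if_pos hdp]
      have hdvd : (∏ i, (d i).factorial) ∣ l.factorial := by
        rw [← hdp]
        exact KRectAux.prod_factorial_dvd univ d (fun i _ => hd1 i)
      have hP0 : ((∏ i, (d i).factorial : ℕ) : ℝ≥0∞) ≠ 0 := by
        rw [Ne, Nat.cast_eq_zero, Finset.prod_eq_zero_iff]
        rintro ⟨i, -, hfz⟩
        exact (d i).factorial_ne_zero hfz
      have hq0 : (((l - n).factorial : ℕ) : ℝ≥0∞) ≠ 0 := by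
        rw [Ne, Nat.cast_eq_zero]; exact (l - n).factorial_ne_zero
      have hqt : (((l - n).factorial : ℕ) : ℝ≥0∞) ≠ ∞ := ENNReal.natCast_ne_top _
      have hfaceq : (l.factorial : ℝ≥0∞) =
          ((l - n).factorial : ℝ≥0∞) * (l.descFactorial n : ℝ≥0∞) := by
        have h := Nat.factorial_mul_descFactorial (n := l) (k := n) hl
        rw [← h]; push_cast; ring
      rw [KRectAux.natCast_div_ennreal hdvd (by exact_mod_cast hP0)]
      rw [hHdef]
      simp only [hdp]
      rw [div_eq_mul_inv, hfaceq]
      calc ((l - n).factorial : ℝ≥0∞) * (l.descFactorial n : ℝ≥0∞) *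
            ((∏ i, (d i).factorial : ℕ) : ℝ≥0∞)⁻¹ * (((l - n).factorial : ℕ) : ℝ≥0∞)⁻¹
          = (((l - n).factorial : ℕ) : ℝ≥0∞) * (((l - n).factorial : ℕ) : ℝ≥0∞)⁻¹ *
            ((l.descFactorial n : ℝ≥0∞) * ((∏ i, (d i).factorial : ℕ) : ℝ≥0∞)⁻¹) := by
            ring
        _ = (l.descFactorial n : ℝ≥0∞) * ((∏ i, (d i).factorial : ℕ) : ℝ≥0∞)⁻¹ := by
            rw [ENNReal.mul_inv_cancel hq0 hqt, one_mul]
    · rw [htdef]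
      simp only [if_neg hl]
      symm
      have : ∀ d : Fin k → ℕ, (if (∏ i, d i) = l then H d else 0) = 0 := by
        intro d
        by_cases hpd : (∏ i, d i) = l
        · rw [if_pos hpd, hHdef]
          simp only [hpd]
          rw [Nat.descFactorial_eq_zero_iff_lt.mpr (by omega), Nat.cast_zero, zero_mul]
        · exact if_neg hpd
      simp only [this, tsum_zero]
  -- Step A': swap sums
  have hT : ∑' l : ℕ, t l = ∑' d : Fin k → ℕ, H d := by
    rw [tsum_congr hA, ENNReal.tsum_comm]
    apply tsum_congr
    intro d
    rw [tsum_eq_single (∏ i, d i) (fun l hl => if_neg (fun h => hl h.symm))]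
    exact if_pos rfl
  -- Step B: expand H via the combinatorial core identity
  have hB : ∀ d : Fin k → ℕ, H d = ∑ π ∈ Pi0, ∏ i,
      (((d i).descFactorial (π i).parts.card : ℝ≥0∞) * (((d i).factorial : ℕ) : ℝ≥0∞)⁻¹) := by
    intro d
    rw [hHdef]
    simp only
    rw [KRectAux.core k d, Nat.cast_sum, Finset.sum_mul]
    apply Finset.sum_congr rfl
    intro π _
    rw [Nat.cast_prod, Finset.prod_mul_distrib]
    congr 1
    rw [Nat.cast_prod, ENNReal.prod_inv_distrib]
    intro i _ j _ _
    exact Or.inl (by exact_mod_cast (d i).factorial_ne_zero)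
  -- Step C
  have hparts1 : ∀ (π : Fin k → Finpartition (univ : Finset (Fin n))) (i : Fin k),
      1 ≤ (π i).parts.card := by
    intro π i
    apply Finset.card_pos.mpr
    apply (π i).parts_nonempty
    rw [bot_eq_empty]
    exact Finset.nonempty_iff_ne_empty.mp ⟨⟨0, hn⟩, mem_univ _⟩
  have hC : ∑' d : Fin k → ℕ, H d = (p : ℝ≥0∞) * E ^ k := by
    rw [tsum_congr hB, Summable.tsum_finsetSum (fun π _ => ENNReal.summable)]
    have : ∀ π ∈ Pi0, (∑' d : Fin k → ℕ, ∏ i,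
        (((d i).descFactorial (π i).parts.card : ℝ≥0∞) * (((d i).factorial : ℕ) : ℝ≥0∞)⁻¹))
        = E ^ k := by
      intro π _
      rw [KRectAux.tsum_pi_prod k (fun i x =>
        ((x.descFactorial (π i).parts.card : ℝ≥0∞) * ((x.factorial : ℕ) : ℝ≥0∞)⁻¹))]
      have : ∀ i : Fin k, (∑' x : ℕ,
          ((x.descFactorial (π i).parts.card : ℝ≥0∞) * ((x.factorial : ℕ) : ℝ≥0∞)⁻¹)) = E :=
        fun i => KRectAux.tsum_descFactorial_div _ (hparts1 π i)
      rw [Finset.prod_congr rfl (fun i _ => this i), Finset.prod_const, card_univ,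
        Fintype.card_fin]
    rw [Finset.sum_congr rfl this, Finset.sum_const, nsmul_eq_mul]
  -- E = e
  have hE : E = ENNReal.ofReal (Real.exp 1) := by
    have hsum : Summable (fun j : ℕ => (1 : ℝ) / j.factorial) := by
      simpa using Real.summable_pow_div_factorial 1
    have hexp : Real.exp 1 = ∑' j : ℕ, (1 : ℝ) / j.factorial := by
      rw [Real.exp_eq_exp_ℝ, NormedSpace.exp_eq_tsum_div]
      simp
    rw [hexp, ENNReal.ofReal_tsum_of_nonneg (fun j => by positivity) hsum]
    apply tsum_congr
    intro j
    rw [one_div, ENNReal.ofReal_inv_of_pos (by positivity), ENNReal.ofReal_natCast]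
  have hEtop : E ≠ ∞ := by rw [hE]; exact ENNReal.ofReal_ne_top
  have htlt : ∀ l, t l ≠ ∞ := by
    intro l
    rw [htdef]
    by_cases hl : n ≤ l
    · simp only [if_pos hl]
      exact (ENNReal.div_lt_top (ENNReal.natCast_ne_top _)
        (by exact_mod_cast (l - n).factorial_ne_zero)).ne
    · simp [hl]
  have hsumT : ∑' l : ℕ, t l = (p : ℝ≥0∞) * E ^ k := hT.trans hC
  have htop : ∑' l : ℕ, t l ≠ ∞ := by
    rw [hsumT]
    exact ENNReal.mul_ne_top (ENNReal.natCast_ne_top _) (ENNReal.pow_ne_top hEtop)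
  have hreal : ∀ l : ℕ, (if n ≤ l then (kRectCount k l : ℝ) / ((l - n).factorial : ℝ) else 0)
      = (t l).toReal := by
    intro l
    rw [htdef]
    by_cases hl : n ≤ l
    · simp only [if_pos hl]
      rw [ENNReal.toReal_div, ENNReal.toReal_natCast, ENNReal.toReal_natCast]
    · simp [hl]
  have hsummable : Summable (fun l : ℕ =>
      if n ≤ l then (kRectCount k l : ℝ) / ((l - n).factorial : ℝ) else 0) :=
    (summable_congr hreal).mpr (ENNReal.summable_toReal htop)
  have hcard : (Nat.card {π : Fin k → Finpartition (Finset.univ : Finset (Fin n)) //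
      Finset.univ.inf π = ⊥} : ℕ) = p := by
    rw [Nat.card_eq_fintype_card, Fintype.card_subtype]
  have htsum : (∑' l : ℕ, (if n ≤ l then (kRectCount k l : ℝ) / ((l - n).factorial : ℝ) else 0))
      = (p : ℝ) * Real.exp 1 ^ k := by
    rw [tsum_congr hreal, ← ENNReal.tsum_toReal_eq htlt, hsumT, ENNReal.toReal_mul,
      ENNReal.toReal_pow, ENNReal.toReal_natCast, hE,
      ENNReal.toReal_ofReal (Real.exp_nonneg 1)]
  refine ⟨?_, hsummable⟩
  rw [htsum, hcard]
  rw [show Real.exp 1 ^ k = Real.exp k from by rw [← Real.exp_nat_mul, mul_one],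
    Real.exp_neg]
  field_simp
end
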